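/- arXiv:2209.09817 — 8 statements merged into one kernel-verified Lean document; each statement's English description precedes it below -/
import Mathlib

section
/- For a nonzero vector ψ ∈ ℂ^d with d prime, the product of the support size of ψ (number of nonzero coordinates) and the support size of its discrete Fourier transform F†ψ is at least d, where F is the unitary matrix with entries F_{vv'} = d^{-1/2} e^{-2πi v v'/d}. -/
open Complex Real Matrix

/-- Support size: number of nonzero coordinates. -/
noncomputable def supp {d : ℕ} (ψ : Fin d → ℂ) : ℕ :=
  (Finset.univ.filter (fun v => ψ v ≠ 0)).card

/-- The discrete Fourier matrix `F_{v v'} = d^{-1/2} e^{-2πi v v' / d}`. -/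
noncomputable def Fourier (d : ℕ) : Matrix (Fin d) (Fin d) ℂ :=
  fun v v' => (1 / Real.sqrt d : ℂ) *
    Complex.exp (-(2 * Real.pi * Complex.I * (v : ℕ) * (v' : ℕ)) / d)

/-!
The adjoint Fourier matrix is unitary (orthogonality of the additive characters of `ZMod d`) and
all its entries have modulus `μ = d^{-1/2}`. For any unitary `U` with entries bounded by `μ`,
`‖Uψ‖_∞ ≤ μ ‖ψ‖₁ ≤ μ √(supp ψ) ‖ψ‖₂`, while `‖ψ‖₂² = ‖Uψ‖₂² ≤ supp (Uψ) ‖Uψ‖_∞²`. Together these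
give the Donoho–Stark bound `1 ≤ μ² supp ψ supp (Uψ)`.
-/

section Unitary

variable {ι : Type*} [Fintype ι]

lemma dotProduct_star_self_eq_sum_norm_sq (x : ι → ℂ) :
    star x ⬝ᵥ x = ((∑ i, ‖x i‖ ^ 2 : ℝ) : ℂ) := by
  simp [dotProduct, Complex.conj_mul']

lemma sum_norm_sq_mulVec_of_mem_unitaryGroup [DecidableEq ι] {U : Matrix ι ι ℂ}
    (hU : U ∈ unitaryGroup ι ℂ) (x : ι → ℂ) : ∑ i, ‖(U *ᵥ x) i‖ ^ 2 = ∑ i, ‖x i‖ ^ 2 := by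
  have h : star (U *ᵥ x) ⬝ᵥ (U *ᵥ x) = star x ⬝ᵥ x := by
    rw [star_mulVec, dotProduct_mulVec, vecMul_vecMul, ← star_eq_conjTranspose,
      mem_unitaryGroup_iff'.mp hU, vecMul_one]
  exact_mod_cast (dotProduct_star_self_eq_sum_norm_sq _).symm.trans
    (h.trans (dotProduct_star_self_eq_sum_norm_sq x))

lemma norm_mulVec_apply_le {U : Matrix ι ι ℂ} {μ : ℝ} (hμ : ∀ i j, ‖U i j‖ ≤ μ) (x : ι → ℂ)
    (i : ι) : ‖(U *ᵥ x) i‖ ≤ μ * ∑ j, ‖x j‖ := by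
  rw [Finset.mul_sum]
  refine (norm_sum_le _ _).trans (Finset.sum_le_sum fun j _ => ?_)
  rw [norm_mul]
  exact mul_le_mul_of_nonneg_right (hμ i j) (norm_nonneg _)

end Unitary

section Support

variable {n : ℕ}

lemma sum_norm_sq_le_supp_mul (φ : Fin n → ℂ) {B : ℝ} (hB : ∀ i, ‖φ i‖ ≤ B) :
    ∑ i, ‖φ i‖ ^ 2 ≤ supp φ * B ^ 2 := by
  rw [supp, ← Finset.sum_filter_of_ne (p := fun i => φ i ≠ 0) (by simp)]
  simpa using Finset.sum_le_card_nsmul _ _ _ fun i _ =>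
    pow_le_pow_left₀ (norm_nonneg (φ i)) (hB i) 2

lemma sq_sum_norm_le_supp_mul (ψ : Fin n → ℂ) :
    (∑ i, ‖ψ i‖) ^ 2 ≤ supp ψ * ∑ i, ‖ψ i‖ ^ 2 := by
  rw [supp, ← Finset.sum_filter_of_ne (p := fun i => ψ i ≠ 0) (f := fun i => ‖ψ i‖) (by simp),
    ← Finset.sum_filter_of_ne (p := fun i => ψ i ≠ 0) (f := fun i => ‖ψ i‖ ^ 2) (by simp)]
  exact sq_sum_le_card_mul_sum_sq (f := fun i => ‖ψ i‖)

theorem one_le_sq_mul_supp_mul_supp_mulVec {U : Matrix (Fin n) (Fin n) ℂ}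
    (hU : U ∈ unitaryGroup (Fin n) ℂ) {μ : ℝ} (hμ : ∀ i j, ‖U i j‖ ≤ μ) {ψ : Fin n → ℂ}
    (hψ : ψ ≠ 0) : 1 ≤ μ ^ 2 * (supp ψ * supp (U *ᵥ ψ)) := by
  set S := ∑ i, ‖ψ i‖ ^ 2
  have hS : 0 < S := by
    obtain ⟨i, hi⟩ := Function.ne_iff.mp hψ
    exact Finset.sum_pos' (fun _ _ => by positivity) ⟨i, Finset.mem_univ _, by positivity⟩
  have key : S ≤ μ ^ 2 * (supp ψ * supp (U *ᵥ ψ)) * S := calc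
    S = ∑ i, ‖(U *ᵥ ψ) i‖ ^ 2 := (sum_norm_sq_mulVec_of_mem_unitaryGroup hU ψ).symm
    _ ≤ supp (U *ᵥ ψ) * (μ * ∑ j, ‖ψ j‖) ^ 2 :=
      sum_norm_sq_le_supp_mul _ (norm_mulVec_apply_le hμ ψ)
    _ = supp (U *ᵥ ψ) * μ ^ 2 * (∑ j, ‖ψ j‖) ^ 2 := by ring
    _ ≤ supp (U *ᵥ ψ) * μ ^ 2 * (supp ψ * S) := by gcongr; exact sq_sum_norm_le_supp_mul ψ
    _ = μ ^ 2 * (supp ψ * supp (U *ᵥ ψ)) * S := by ring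
  exact le_of_mul_le_mul_right (by simpa using key) hS

end Support

section Fourier

variable (d : ℕ) [NeZero d]

lemma natCast_val_bijective : Function.Bijective (fun u : Fin d => ((u : ℕ) : ZMod d)) := by
  refine (Fintype.bijective_iff_injective_and_card _).mpr ⟨fun a b h => Fin.ext ?_, by simp⟩
  simpa [ZMod.natCast_eq_natCast_iff', Nat.mod_eq_of_lt] using h

lemma conjTranspose_Fourier_apply (u v : Fin d) :
    (Fourier d)ᴴ u v = (√d : ℂ)⁻¹ * ZMod.stdAddChar (((u : ℕ) : ZMod d) * ((v : ℕ) : ZMod d)) := by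
  rw [conjTranspose_apply, Fourier, ← Nat.cast_mul, ← Int.cast_natCast (R := ZMod d),
    ZMod.stdAddChar_coe]
  simp only [one_div, star_mul', Complex.star_def, map_inv₀, Complex.conj_ofReal,
    ← Complex.exp_conj, map_div₀, map_neg, map_mul, map_ofNat, Complex.conj_I, map_natCast]
  push_cast
  ring_nf

lemma norm_conjTranspose_Fourier_apply (u v : Fin d) : ‖(Fourier d)ᴴ u v‖ = (√d)⁻¹ := by
  rw [conjTranspose_Fourier_apply, norm_mul, AddChar.norm_apply, mul_one, norm_inv,
    Complex.norm_real, Real.norm_of_nonneg (Real.sqrt_nonneg _)]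

lemma Fourier_mul_conjTranspose_Fourier_apply (u v w : Fin d) :
    Fourier d v u * (Fourier d)ᴴ u w =
      (d : ℂ)⁻¹ *
        ZMod.stdAddChar (((u : ℕ) : ZMod d) * (((w : ℕ) : ZMod d) - ((v : ℕ) : ZMod d))) := by
  have hsqrt : (√d : ℂ)⁻¹ * (√d : ℂ)⁻¹ = (d : ℂ)⁻¹ := by
    rw [← mul_inv, ← Complex.ofReal_mul, Real.mul_self_sqrt (Nat.cast_nonneg _)]
    push_cast
    rfl
  rw [← star_star (Fourier d v u), ← conjTranspose_apply, conjTranspose_Fourier_apply,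
    conjTranspose_Fourier_apply, star_mul', Complex.star_def, map_inv₀,
    Complex.conj_ofReal, ← AddChar.map_neg_eq_conj, mul_sub, sub_eq_neg_add,
    AddChar.map_add_eq_mul, ← hsqrt]
  ring

lemma conjTranspose_Fourier_mem_unitaryGroup : (Fourier d)ᴴ ∈ unitaryGroup (Fin d) ℂ := by
  rw [mem_unitaryGroup_iff', star_eq_conjTranspose, conjTranspose_conjTranspose]
  ext v w
  rw [mul_apply, one_apply]
  simp_rw [Fourier_mul_conjTranspose_Fourier_apply, ← Finset.mul_sum]
  rw [Fintype.sum_bijective _ (natCast_val_bijective d) _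
    (fun x => ZMod.stdAddChar (x * (((w : ℕ) : ZMod d) - ((v : ℕ) : ZMod d)))) fun _ => rfl,
    AddChar.sum_mulShift _ (ZMod.isPrimitive_stdAddChar d)]
  simp only [sub_eq_zero, (natCast_val_bijective d).injective.eq_iff, eq_comm (a := w)]
  split_ifs <;> simp

end Fourier

theorem support_product_inequality_general (d : ℕ)
    (ψ : Fin d → ℂ) (hψ : ψ ≠ 0) :
    d ≤ supp ψ * supp ((Fourier d)ᴴ.mulVec ψ) := by
  have : NeZero d := ⟨by rintro rfl; exact hψ (Subsingleton.elim _ _)⟩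
  have h := one_le_sq_mul_supp_mul_supp_mulVec (conjTranspose_Fourier_mem_unitaryGroup d)
    (fun u v => (norm_conjTranspose_Fourier_apply d u v).le) hψ
  rw [inv_pow, Real.sq_sqrt (Nat.cast_nonneg _), ← div_eq_inv_mul,
    one_le_div (Nat.cast_pos.mpr (NeZero.pos d))] at h
  exact_mod_cast h

theorem support_product_inequality (d : ℕ) (hd : d.Prime)
    (ψ : Fin d → ℂ) (hψ : ψ ≠ 0) :
    d ≤ supp ψ * supp ((Fourier d)ᴴ.mulVec ψ) :=
  support_product_inequality_general d ψ hψ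
end

section
/- (Tao's uncertainty principle) For a nonzero vector ψ ∈ ℂ^d with d prime, supp(ψ) + supp(F†ψ) ≥ d + 1, where F is the discrete Fourier transform matrix. -/
open Complex Real Matrix

/-- The standard Hadamard matrices `[H_j]_{xk} = d^{-1/2} ω^{-kx + (j-1)x²}`,
    with `ω = e^{2πi/d}`, for `j ∈ {1,…,d}`. -/
noncomputable def stdH (d j : ℕ) : Matrix (Fin d) (Fin d) ℂ :=
  fun x k => (1 / Real.sqrt d : ℂ) *
    Complex.exp (2 * Real.pi * Complex.I *
      (((((j : ℤ) - 1) * (x : ℤ) ^ 2 - (k : ℤ) * (x : ℤ) : ℤ) : ℂ) / (d : ℂ)))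

/-- The complete standard set of MU bases: `H_0 = I` (the computational basis)
    together with `H_1, …, H_d`. -/
noncomputable def stdB (d j : ℕ) : Matrix (Fin d) (Fin d) ℂ :=
  if j = 0 then 1 else stdH d j

section TaoAux

open Polynomial Finset Matrix

open Polynomial Finset

-- sum of a finset of naturals is at least 0+1+...+(card-1)
lemma sum_range_card_le (S : Finset ℕ) : ∑ i ∈ Finset.range S.card, i ≤ ∑ i ∈ S, i := by
  induction' hn : S.card with n ih generalizing S
  · simp
  · have hne : S.Nonempty := Finset.card_pos.mp (by omega)
    set m := S.max' hne with hm
    have hmem : m ∈ S := S.max'_mem hne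
    have hsub : S ⊆ Finset.range (m + 1) := by
      intro a ha
      simp only [Finset.mem_range]
      exact Nat.lt_succ_of_le (S.le_max' a ha)
    have hcard : S.card ≤ m + 1 := by
      calc S.card ≤ (Finset.range (m+1)).card := Finset.card_le_card hsub
        _ = m + 1 := by simp
    have herase : (S.erase m).card = n := by rw [Finset.card_erase_of_mem hmem, hn]; omega
    have ih' := ih (S.erase m) herase
    have hsum : ∑ i ∈ S, i = m + ∑ i ∈ S.erase m, i := (Finset.add_sum_erase S id hmem).symm
    rw [Finset.sum_range_succ]
    omega

lemma sum_range_card_lt (S : Finset ℕ) (a : ℕ) (ha : a ∈ S) (hc : S.card ≤ a) :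
    (∑ i ∈ Finset.range S.card, i) + 1 ≤ ∑ i ∈ S, i := by
  have hne : S.Nonempty := ⟨a, ha⟩
  set m := S.max' hne with hm
  have hmem : m ∈ S := S.max'_mem hne
  have ham : a ≤ m := S.le_max' a ha
  have hcpos : 1 ≤ S.card := Finset.card_pos.mpr hne
  have herase : (S.erase m).card = S.card - 1 := Finset.card_erase_of_mem hmem
  have ih := sum_range_card_le (S.erase m)
  rw [herase] at ih
  have hsum : ∑ i ∈ S, i = m + ∑ i ∈ S.erase m, i := (Finset.add_sum_erase S id hmem).symm
  have : Finset.range S.card = insert (S.card - 1) (Finset.range (S.card - 1)) := by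
    rw [← Finset.range_add_one]; congr 1; omega
  rw [this, Finset.sum_insert (by simp)]
  omega

lemma inj_sum_ge {n p : ℕ} (f : Fin n → Fin p) (hf : Function.Injective f) :
    ∑ i : Fin n, (i : ℕ) ≤ ∑ i : Fin n, (f i : ℕ) := by
  classical
  have hval : Function.Injective (fun i => (f i : ℕ)) := fun i j h => hf (Fin.val_injective h)
  have himg : (Finset.image (fun i => (f i : ℕ)) Finset.univ).card = n := by
    rw [Finset.card_image_of_injective _ hval, Finset.card_univ, Fintype.card_fin]
  have h1 : ∑ i ∈ Finset.image (fun i => (f i : ℕ)) Finset.univ, i = ∑ i : Fin n, (f i : ℕ) :=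
    Finset.sum_image (fun a _ b _ h => hval h)
  have := sum_range_card_le (Finset.image (fun i => (f i : ℕ)) Finset.univ)
  rw [himg, h1] at this
  rwa [Fin.sum_univ_eq_sum_range (fun i => i) n]

lemma inj_sum_gt {n p : ℕ} (f : Fin n → Fin p) (hf : Function.Injective f)
    (hbig : ¬ ∀ i, (f i : ℕ) < n) :
    (∑ i : Fin n, (i : ℕ)) + 1 ≤ ∑ i : Fin n, (f i : ℕ) := by
  classical
  push_neg at hbig
  obtain ⟨i0, hi0⟩ := hbig
  have hval : Function.Injective (fun i => (f i : ℕ)) := fun i j h => hf (Fin.val_injective h)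
  have himg : (Finset.image (fun i => (f i : ℕ)) Finset.univ).card = n := by
    rw [Finset.card_image_of_injective _ hval, Finset.card_univ, Fintype.card_fin]
  have h1 : ∑ i ∈ Finset.image (fun i => (f i : ℕ)) Finset.univ, i = ∑ i : Fin n, (f i : ℕ) :=
    Finset.sum_image (fun a _ b _ h => hval h)
  have := sum_range_card_lt (Finset.image (fun i => (f i : ℕ)) Finset.univ) (f i0)
    (Finset.mem_image_of_mem _ (Finset.mem_univ i0)) (by rw [himg]; exact hi0)
  rw [himg, h1] at this
  rwa [Fin.sum_univ_eq_sum_range (fun i => i) n]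

-- p does not divide the vandermonde product of distinct Fin p values
lemma pnotdvd {p n : ℕ} (hp : p.Prime) (v : Fin n → Fin p) (hv : Function.Injective v) :
    ¬ (p : ℤ) ∣ ∏ i : Fin n, ∏ j ∈ Finset.Ioi i, ((v j : ℤ) - (v i : ℤ)) := by
  intro h
  have hpz : Prime (p : ℤ) := Nat.prime_iff_prime_int.mp hp
  rw [Prime.dvd_finset_prod_iff hpz] at h
  obtain ⟨i, -, h⟩ := h
  rw [Prime.dvd_finset_prod_iff hpz] at h
  obtain ⟨j, hj, h⟩ := h
  have hij : i ≠ j := by rintro rfl; exact absurd hj (by simp)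
  have hne : (v j : ℤ) - (v i : ℤ) ≠ 0 := by
    intro he
    have : (v j : ℤ) = (v i : ℤ) := sub_eq_zero.mp he
    exact hij (hv (Fin.val_injective (by exact_mod_cast this.symm)))
  have h1 : (p : ℤ) ≤ |(v j : ℤ) - (v i : ℤ)| :=
    Int.le_of_dvd (abs_pos.mpr hne) ((dvd_abs _ _).mpr h)
  have h2 : |(v j : ℤ) - (v i : ℤ)| < p := by
    have := (v j).isLt; have := (v i).isLt
    rw [abs_lt]
    constructor <;> [skip; skip] <;>
    · push_cast; omega
  omega


theorem cheb {p : ℕ} (hp : p.Prime) {ζ : ℂ} (hζ : IsPrimitiveRoot ζ p) {n : ℕ}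
    {x y : Fin n → Fin p} (hx : Function.Injective x) (hy : Function.Injective y) :
    Matrix.det (Matrix.of fun i j => ζ ^ ((x i : ℕ) * (y j : ℕ))) ≠ 0 := by
  classical
  intro h0
  have hnp : n ≤ p := by
    have := Fintype.card_le_of_injective x hx
    simpa using this
  set T : ℤ[X] := Polynomial.X - 1 with hT
  set γ : ℕ → ℤ[X] := fun m => ∑ l ∈ Finset.range m, Polynomial.X ^ l with hγ
  set M : Matrix (Fin n) (Fin n) ℤ[X] :=
    Matrix.of fun i j => Polynomial.X ^ ((x i : ℕ) * (y j : ℕ)) with hM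
  set N : ℕ := ∑ i : Fin n, (i : ℕ) with hN
  set A : Matrix (Fin n) (Fin n) ℤ := Matrix.of fun i k => ((x i : ℕ).choose (k : ℕ) : ℤ) with hA
  set V : ℤ[X] := Matrix.det (Matrix.of fun (k : Fin n) j => γ (y j : ℕ) ^ (k : ℕ)) with hV
  set term : (Fin n → Fin p) → ℤ[X] := fun f =>
      (∏ i, Polynomial.C ((x i : ℕ).choose (f i : ℕ) : ℤ)) *
        (T ^ (∑ i, (f i : ℕ)) * Matrix.det (Matrix.of fun i j => γ (y j : ℕ) ^ (f i : ℕ)))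
    with hterm
  -- row decomposition
  have hrow : ∀ i, M i = ∑ k : Fin p,
      (Polynomial.C ((x i : ℕ).choose (k : ℕ) : ℤ)) •
        fun j => (T * γ (y j : ℕ)) ^ (k : ℕ) := by
    intro i
    funext j
    have h1 : T * γ (y j : ℕ) = Polynomial.X ^ (y j : ℕ) - 1 := mul_geom_sum _ _
    have h2 : M i j = ((T * γ (y j : ℕ)) + 1) ^ (x i : ℕ) := by
      rw [h1, sub_add_cancel, ← pow_mul, mul_comm ((y j : ℕ)) ((x i : ℕ))]
      rfl
    rw [h2, add_pow]
    have h3 : ∀ k : ℕ, (T * γ (y j : ℕ)) ^ k * 1 ^ ((x i : ℕ) - k) * ((x i : ℕ).choose k : ℤ[X])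
        = Polynomial.C ((x i : ℕ).choose k : ℤ) * (T * γ (y j : ℕ)) ^ k := by
      intro k
      rw [one_pow, mul_one, mul_comm]
      norm_cast
    simp_rw [h3]
    rw [Finset.sum_subset (Finset.range_subset_range.mpr (by have := (x i).isLt; omega :
        (x i : ℕ) + 1 ≤ p))]
    · rw [← Fin.sum_univ_eq_sum_range
        (fun k => Polynomial.C ((x i : ℕ).choose k : ℤ) * (T * γ (y j : ℕ)) ^ k) p]
      simp only [Finset.sum_apply, Pi.smul_apply, smul_eq_mul]
    · intro k _ hk
      rw [Finset.mem_range, Nat.lt_succ_iff, not_le] at hk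
      rw [Nat.choose_eq_zero_of_lt hk]
      simp
  -- determinant expansion
  have hdet : M.det = ∑ f : Fin n → Fin p, term f := by
    have h1 : M.det = (Matrix.detRowAlternating :
        (Fin n → ℤ[X]) [⋀^Fin n]→ₗ[ℤ[X]] ℤ[X]).toMultilinearMap M := rfl
    rw [h1, show (M : Fin n → Fin n → ℤ[X]) = (fun i => ∑ k : Fin p,
        (Polynomial.C ((x i : ℕ).choose (k : ℕ) : ℤ)) •
          fun j => (T * γ (y j : ℕ)) ^ (k : ℕ)) from funext hrow]
    rw [MultilinearMap.map_sum]
    refine Finset.sum_congr rfl fun f _ => ?_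
    rw [MultilinearMap.map_smul_univ]
    rw [smul_eq_mul]
    congr 1
    have h2 : (Matrix.detRowAlternating :
        (Fin n → ℤ[X]) [⋀^Fin n]→ₗ[ℤ[X]] ℤ[X]).toMultilinearMap
          (fun i => fun j => (T * γ (y j : ℕ)) ^ (f i : ℕ))
        = Matrix.det (Matrix.of fun i j => (T * γ (y j : ℕ)) ^ (f i : ℕ)) := rfl
    rw [h2]
    have h3 : (Matrix.of fun i j => (T * γ (y j : ℕ)) ^ (f i : ℕ))
        = Matrix.of fun i j => (T ^ (f i : ℕ)) * (Matrix.of fun i j => γ (y j : ℕ) ^ (f i : ℕ)) i j := by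
      ext i j
      simp [mul_pow]
    rw [h3, Matrix.det_mul_column, Finset.prod_pow_eq_pow_sum]
  -- the sum over "good" f's
  have hgood : ∑ f ∈ Finset.univ.filter
        (fun f : Fin n → Fin p => Function.Injective f ∧ ∀ i, (f i : ℕ) < n), term f
      = T ^ N * (Polynomial.C Aᵀ.det * V) := by
    have hbij : ∑ f ∈ Finset.univ.filter
          (fun f : Fin n → Fin p => Function.Injective f ∧ ∀ i, (f i : ℕ) < n), term f
        = ∑ σ : Equiv.Perm (Fin n), term (fun i => (σ i).castLE hnp) := by
      refine (Finset.sum_bij (fun (σ : Equiv.Perm (Fin n)) _ => fun i => (σ i).castLE hnp)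
        ?_ ?_ ?_ ?_).symm
      · intro σ _
        simp only [Finset.mem_filter, Finset.mem_univ, true_and]
        refine ⟨fun a b hab => σ.injective ?_, fun i => by simpa using (σ i).isLt⟩
        have := congrArg Fin.val hab
        simp only [Fin.coe_castLE] at this
        exact Fin.val_injective this
      · intro σ1 _ σ2 _ h
        ext i
        have := congrFun h i
        have := congrArg Fin.val this
        simpa using this
      · intro f hf
        simp only [Finset.mem_filter, Finset.mem_univ, true_and] at hf
        obtain ⟨hinj, hb⟩ := hf
        have hginj : Function.Injective (fun i => (⟨(f i : ℕ), hb i⟩ : Fin n)) := by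
          intro a b hab
          apply hinj
          have := congrArg Fin.val hab
          simp only at this
          exact Fin.val_injective this
        refine ⟨Equiv.ofBijective _ (Finite.injective_iff_bijective.mp hginj),
          Finset.mem_univ _, ?_⟩
        funext i
        apply Fin.val_injective
        simp [Equiv.ofBijective_apply]
      · intro σ _
        rfl
    rw [hbij]
    have hperm : ∀ σ : Equiv.Perm (Fin n), term (fun i => (σ i).castLE hnp)
        = T ^ N * (Polynomial.C ((Equiv.Perm.sign σ : ℤ) * ∏ i, A i (σ i)) * V) := by
      intro σ
      have hsum : ∑ i, (((σ i).castLE hnp : Fin p) : ℕ) = N := by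
        simp only [Fin.coe_castLE]
        exact Equiv.sum_comp σ (fun i => (i : ℕ))
      have hmat : (Matrix.of fun i j => γ (y j : ℕ) ^ ((((σ i).castLE hnp) : Fin p) : ℕ))
          = (Matrix.of fun (k : Fin n) j => γ (y j : ℕ) ^ (k : ℕ)).submatrix σ id := by
        ext i j
        simp [Matrix.submatrix_apply]
      have hdetp := Matrix.det_permute σ
        (Matrix.of fun (k : Fin n) j => γ (y j : ℕ) ^ (k : ℕ))
      rw [hterm]
      simp only
      rw [hsum, hmat, hdetp, ← hV]
      have hsign : Polynomial.C ((Equiv.Perm.sign σ : ℤ)) = ((Equiv.Perm.sign σ : ℤ) : ℤ[X]) := by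
        simp
      rw [_root_.map_mul, map_prod, hsign]
      simp only [hA, Matrix.of_apply, Fin.coe_castLE]
      ring
    rw [Finset.sum_congr rfl (fun σ _ => hperm σ), ← Finset.mul_sum]
    congr 1
    rw [← Finset.sum_mul, ← map_sum]
    congr 2
    rw [Matrix.det_apply']
    refine Finset.sum_congr rfl fun σ _ => ?_
    congr 1
  -- key divisibility
  have hkey : T ^ (N + 1) ∣ M.det - T ^ N * (Polynomial.C Aᵀ.det * V) := by
    rw [hdet, ← Finset.sum_filter_add_sum_filter_not Finset.univ
      (fun f : Fin n → Fin p => Function.Injective f ∧ ∀ i, (f i : ℕ) < n) term,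
      hgood, add_sub_cancel_left]
    refine Finset.dvd_sum ?_
    intro f hf
    simp only [Finset.mem_filter, Finset.mem_univ, true_and] at hf
    by_cases hinj : Function.Injective f
    · have hbound : ¬ ∀ i, (f i : ℕ) < n := fun h => hf ⟨hinj, h⟩
      have hsum := inj_sum_gt f hinj hbound
      rw [hterm]
      exact Dvd.dvd.mul_left (Dvd.dvd.mul_right (pow_dvd_pow T (by omega)) _) _
    · obtain ⟨a, b, hab, hne⟩ := Function.not_injective_iff.mp hinj
      have hz : Matrix.det (Matrix.of fun i j => γ (y j : ℕ) ^ (f i : ℕ)) = 0 :=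
        Matrix.det_zero_of_row_eq hne (funext fun j => by rw [Matrix.of_apply, Matrix.of_apply, hab])
      rw [hterm]
      simp only [hz, mul_zero]
      exact dvd_zero _
  -- evaluate at ζ
  have hPζ : Polynomial.aeval ζ M.det = 0 := by
    have h1 := RingHom.map_det ((Polynomial.aeval ζ : ℤ[X] →ₐ[ℤ] ℂ) : ℤ[X] →+* ℂ) M
    have h2 : M.map ((Polynomial.aeval ζ : ℤ[X] →ₐ[ℤ] ℂ) : ℤ[X] →+* ℂ)
        = Matrix.of fun i j => ζ ^ ((x i : ℕ) * (y j : ℕ)) := by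
      ext i j
      simp [hM, Matrix.map_apply]
    rw [RingHom.mapMatrix_apply] at h1
    rw [h2, h0] at h1
    exact h1
  have hppos : 0 < p := hp.pos
  have hmin : Polynomial.cyclotomic p ℤ = minpoly ℤ ζ := Polynomial.cyclotomic_eq_minpoly hζ hppos
  have hdvdP : Polynomial.cyclotomic p ℤ ∣ M.det := by
    rw [hmin]
    exact minpoly.isIntegrallyClosed_dvd (hζ.isIntegral hppos) hPζ
  have hprime : Prime (Polynomial.cyclotomic p ℤ) :=
    (Polynomial.cyclotomic.irreducible hppos).prime
  have hnotT : ¬ (Polynomial.cyclotomic p ℤ ∣ T) := by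
    intro hdvd
    obtain ⟨c, hc⟩ := hdvd
    have hTz : Polynomial.aeval ζ T = 0 := by
      rw [hc, _root_.map_mul, hmin, minpoly.aeval, zero_mul]
    rw [hT] at hTz
    rw [map_sub, Polynomial.aeval_X, _root_.map_one, sub_eq_zero] at hTz
    exact hζ.ne_one hp.one_lt hTz
  obtain ⟨c, hc⟩ := hkey
  have hfac : M.det = T ^ N * (Polynomial.C Aᵀ.det * V + T * c) := by
    linear_combination hc
  have hdvdQ : Polynomial.cyclotomic p ℤ ∣ Polynomial.C Aᵀ.det * V + T * c := by
    rcases hprime.dvd_mul.mp (hfac ▸ hdvdP) with h | h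
    · exact absurd (hprime.dvd_of_dvd_pow h) hnotT
    · exact h
  haveI : Fact p.Prime := ⟨hp⟩
  obtain ⟨u, hu⟩ := hdvdQ
  have heval := congrArg (Polynomial.eval (1 : ℤ)) hu
  rw [Polynomial.eval_mul, Polynomial.eval_add, Polynomial.eval_mul, Polynomial.eval_mul,
    Polynomial.eval_C, Polynomial.eval_one_cyclotomic_prime] at heval
  have hT1 : T.eval 1 = 0 := by rw [hT]; simp
  rw [hT1, zero_mul, add_zero] at heval
  have hpdvd : (p : ℤ) ∣ Aᵀ.det * V.eval 1 := ⟨u.eval 1, heval⟩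
  -- compute V.eval 1
  have hV1 : V.eval 1 = (Matrix.vandermonde (fun j => ((y j : ℕ) : ℤ))).det := by
    have h1 := RingHom.map_det (Polynomial.evalRingHom (1 : ℤ))
      (Matrix.of fun (k : Fin n) j => γ (y j : ℕ) ^ (k : ℕ))
    rw [RingHom.mapMatrix_apply] at h1
    have h2 : (Matrix.of fun (k : Fin n) j => γ (y j : ℕ) ^ (k : ℕ)).map
        (Polynomial.evalRingHom (1 : ℤ)) = (Matrix.vandermonde (fun j => ((y j : ℕ) : ℤ)))ᵀ := by
      ext k j
      simp [Matrix.map_apply, hγ, Polynomial.eval_finset_sum, Matrix.vandermonde]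
    rw [h2, Matrix.det_transpose] at h1
    exact h1
  -- the binomial determinant
  have hAdet : (Matrix.vandermonde fun i => ((x i : ℕ) : ℤ)).det
      = (∏ i : Fin n, (Nat.factorial (i : ℕ) : ℤ)) * A.det := by
    rw [Matrix.det_eval_matrixOfPolynomials_eq_det_vandermonde (fun i => ((x i : ℕ) : ℤ))
      (fun i => descPochhammer ℤ (i : ℕ)) (fun i => descPochhammer_natDegree ℤ (i : ℕ))
      (fun i => monic_descPochhammer ℤ (i : ℕ))]
    have h2 : (Matrix.of fun (i k : Fin n) => (descPochhammer ℤ (k : ℕ)).eval ((x i : ℕ) : ℤ))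
        = Matrix.of fun (i k : Fin n) => ((Nat.factorial (k : ℕ) : ℤ)) * A i k := by
      ext i k
      rw [Matrix.of_apply, descPochhammer_eval_eq_descFactorial ℤ _ _]
      rw [Matrix.of_apply, hA, Matrix.of_apply]
      rw [Nat.descFactorial_eq_factorial_mul_choose]
      push_cast
      ring
    rw [h2, Matrix.det_mul_row]
  -- final contradiction
  have hpz : Prime ((p : ℕ) : ℤ) := Nat.prime_iff_prime_int.mp hp
  rcases hpz.dvd_mul.mp hpdvd with h | h
  · rw [Matrix.det_transpose] at h
    have hdv : (p : ℤ) ∣ (Matrix.vandermonde fun i => ((x i : ℕ) : ℤ)).det := by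
      rw [hAdet]
      exact Dvd.dvd.mul_left h _
    rw [Matrix.det_vandermonde] at hdv
    exact pnotdvd hp x hx (by exact_mod_cast hdv)
  · rw [hV1, Matrix.det_vandermonde] at h
    exact pnotdvd hp y hy (by exact_mod_cast h)

end TaoAux

/-- Tao's uncertainty principle: for prime `d` and nonzero `ψ ∈ ℂ^d`,
    `supp ψ + supp (F†ψ) ≥ d + 1`. -/
theorem tao_uncertainty (d : ℕ) (hd : d.Prime) (ψ : Fin d → ℂ) (hψ : ψ ≠ 0) :
    d + 1 ≤ supp ψ + supp ((Fourier d)ᴴ.mulVec ψ) := by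
  classical
  by_contra hcon
  push_neg at hcon
  set φ := (Fourier d)ᴴ.mulVec ψ with hφdef
  set ζ : ℂ := Complex.exp (2 * Real.pi * Complex.I / d) with hζdef
  have hd0 : (d : ℂ) ≠ 0 := Nat.cast_ne_zero.mpr hd.pos.ne'
  have hζ : IsPrimitiveRoot ζ d := Complex.isPrimitiveRoot_exp d hd.pos.ne'
  have hsqrt : Real.sqrt d ≠ 0 :=
    ne_of_gt (Real.sqrt_pos.mpr (by exact_mod_cast hd.pos))
  have hφ : ∀ t, φ t = (1 / (Real.sqrt d : ℝ) : ℂ) *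
      ∑ v : Fin d, ζ ^ ((t : ℕ) * (v : ℕ)) * ψ v := by
    intro t
    rw [hφdef]
    simp only [Matrix.mulVec, dotProduct, Matrix.conjTranspose_apply, Fourier]
    rw [Finset.mul_sum]
    refine Finset.sum_congr rfl fun v _ => ?_
    have h1 : star ((1 / (Real.sqrt d : ℝ) : ℂ) *
        Complex.exp (-(2 * (Real.pi : ℂ) * Complex.I * ((v : ℕ) : ℂ) * ((t : ℕ) : ℂ)) / d))
        = (1 / (Real.sqrt d : ℝ) : ℂ) * ζ ^ ((t : ℕ) * (v : ℕ)) := by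
      rw [Complex.star_def, _root_.map_mul]
      congr 1
      · rw [map_div₀, _root_.map_one, Complex.conj_ofReal]
      · rw [← Complex.exp_conj]
        have h2 : (starRingEnd ℂ) (-(2 * (Real.pi : ℂ) * Complex.I * ((v : ℕ) : ℂ) *
            ((t : ℕ) : ℂ)) / d) = (((t : ℕ) * (v : ℕ) : ℕ) : ℂ) *
              (2 * (Real.pi : ℂ) * Complex.I / d) := by
          rw [map_div₀, map_neg]
          simp only [_root_.map_mul, Complex.conj_I, Complex.conj_ofReal, Complex.conj_natCast,
            map_ofNat]
          push_cast
          ring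
        rw [h2, Complex.exp_nat_mul, hζdef]
    rw [h1, mul_assoc]
  set S : Finset (Fin d) := Finset.univ.filter (fun v => ψ v ≠ 0) with hS
  set n : ℕ := S.card with hn
  have hn1 : 1 ≤ n := by
    rcases Function.ne_iff.mp hψ with ⟨v, hv⟩
    refine Finset.card_pos.mpr ⟨v, ?_⟩
    simp only [hS, Finset.mem_filter, Finset.mem_univ, true_and]
    simpa using hv
  have hZcard : n ≤ (Finset.univ.filter (fun t => φ t = 0)).card := by
    have h1 := Finset.card_filter_add_card_filter_not
      (s := (Finset.univ : Finset (Fin d))) (p := fun t => φ t = 0)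
    have h2 : supp φ = (Finset.univ.filter (fun t => ¬ (φ t = 0))).card := rfl
    have h3 : supp ψ = n := rfl
    have h4 : (Finset.univ : Finset (Fin d)).card = d := by simp
    omega
  obtain ⟨Tf, hTsub, hTcard⟩ := Finset.exists_subset_card_eq hZcard
  have hScard : S.card = n := hn.symm
  set xe := S.orderIsoOfFin hScard with hxe
  set te := Tf.orderIsoOfFin hTcard with hte
  set xm : Fin n → Fin d := fun i => (xe i : Fin d) with hxm
  set tm : Fin n → Fin d := fun i => (te i : Fin d) with htm
  have hxinj : Function.Injective xm := fun a b hab => xe.injective (Subtype.coe_injective hab)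
  have htinj : Function.Injective tm := fun a b hab => te.injective (Subtype.coe_injective hab)
  have hdet := cheb hd hζ htinj hxinj
  have hsolve : ∀ i, ∑ j, ζ ^ ((tm i : ℕ) * (xm j : ℕ)) * ψ (xm j) = 0 := by
    intro i
    have hmem : tm i ∈ Tf := (te i).2
    have hz : φ (tm i) = 0 := by
      have := hTsub hmem
      simpa using (Finset.mem_filter.mp this).2
    have heq := hφ (tm i)
    rw [hz] at heq
    have hne : (1 / (Real.sqrt d : ℝ) : ℂ) ≠ 0 := by
      simp [hsqrt]
    have h0 : ∑ v : Fin d, ζ ^ ((tm i : ℕ) * (v : ℕ)) * ψ v = 0 :=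
      (mul_eq_zero.mp heq.symm).resolve_left hne
    have h1 : ∑ v ∈ S, ζ ^ ((tm i : ℕ) * ((v : Fin d) : ℕ)) * ψ v
        = ∑ v : Fin d, ζ ^ ((tm i : ℕ) * (v : ℕ)) * ψ v := by
      apply Finset.sum_subset (Finset.subset_univ S)
      intro v _ hv
      have hv0 : ψ v = 0 := by
        by_contra h
        exact hv (by simp [hS, h])
      rw [hv0, mul_zero]
    have h2 : ∑ j : Fin n, ζ ^ ((tm i : ℕ) * (xm j : ℕ)) * ψ (xm j)
        = ∑ v ∈ S, ζ ^ ((tm i : ℕ) * ((v : Fin d) : ℕ)) * ψ v := by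
      refine Finset.sum_bij (fun j _ => xm j) ?_ ?_ ?_ ?_
      · intro j _
        exact (xe j).2
      · intro a _ b _ hab
        exact hxinj hab
      · intro s hs
        exact ⟨xe.symm ⟨s, hs⟩, Finset.mem_univ _, by simp [hxm]⟩
      · intro j _
        rfl
    rw [h2, h1, h0]
  have hvec : (Matrix.of fun i j => ζ ^ ((tm i : ℕ) * (xm j : ℕ))).mulVec
      (fun j => ψ (xm j)) = 0 := by
    funext i
    simpa [Matrix.mulVec, dotProduct] using hsolve i
  have hzero := Matrix.eq_zero_of_mulVec_eq_zero hdet hvec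
  have hne0 : ψ (xm ⟨0, hn1⟩) ≠ 0 := by
    have hmem : xm ⟨0, hn1⟩ ∈ S := (xe ⟨0, hn1⟩).2
    rw [hS] at hmem
    exact (Finset.mem_filter.mp hmem).2
  exact hne0 (congrFun hzero ⟨0, hn1⟩)
end

section
/- (Chebotarëv) If d is prime, then every square submatrix of the d×d Fourier matrix F with entries F_{vv'} = d^{-1/2} ω^{-vv'}, ω = e^{2πi/d}, has nonzero determinant. -/
open Complex Real Matrix

/-!
Let `ζ` be a primitive `p`-th root of unity and `a`, `b` the (distinct, `< p`) row and column
indices. Expanding `X ^ (a i * b j) = ((X ^ a i - 1) + 1) ^ b j` binomially and using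
multilinearity of the determinant gives, in `ℤ[X]`,
`det (X ^ (a i * b j)) = ∑ f, ∏ i, (X ^ a i - 1) ^ f i * det (choose (b j) (f i))`.
Since `X - 1 ∣ X ^ a - 1`, the term of `f` is divisible by `(X - 1) ^ ∑ f`; the binomial
determinant vanishes unless `f` is injective, and then `∑ f ≥ m = 0 + 1 + ⋯ + (n - 1)` with
equality only for permutations of `{0, …, n - 1}`. Hence the determinant is `(X - 1) ^ m * Q` with
`Q(1) = V(a) * det (choose (b j) i)` and `(∏ k!) * det (choose (b j) i) = V(b)`, where `V` is the
Vandermonde determinant. If the determinant vanished at `ζ`, the cyclotomic polynomial `Φ_p`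
would divide `Q`, so `p = Φ_p(1)` would divide `Q(1)` and hence `V(a) * V(b)`, a product of
differences of distinct residues modulo `p`.
-/

open Finset Polynomial Equiv

theorem Finset.sum_range_id_lt_sum {s : Finset ℕ} {n : ℕ} (hs : #s = n)
    (hsub : ¬ s ⊆ range n) : ∑ i ∈ range n, i < ∑ x ∈ s, x := by
  have hcard : #(range n \ s) = #(s \ range n) := card_sdiff_comm (by simp [hs])
  have hne : (range n \ s).Nonempty := by
    rw [← card_pos, hcard, card_pos, sdiff_nonempty]
    exact hsub
  rw [← sum_inter_add_sum_sdiff (range n) s, ← sum_inter_add_sum_sdiff s (range n), inter_comm]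
  refine Nat.add_lt_add_left ?_ _
  calc ∑ x ∈ range n \ s, x < ∑ _x ∈ range n \ s, n :=
        sum_lt_sum_of_nonempty hne fun x hx => by simpa using (mem_sdiff.mp hx).1
    _ = ∑ _x ∈ s \ range n, n := by simp [hcard]
    _ ≤ ∑ x ∈ s \ range n, x := sum_le_sum fun x hx => by simpa using (mem_sdiff.mp hx).2

theorem sum_range_lt_sum_of_injective {n : ℕ} {f : Fin n → ℕ} (hf : Function.Injective f)
    (hfn : ∃ i, n ≤ f i) : ∑ i ∈ range n, i < ∑ i, f i := by
  obtain ⟨i, hi⟩ := hfn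
  rw [← sum_image (f := fun x => x) fun x _ y _ h => hf h]
  refine sum_range_id_lt_sum (by simp [card_image_of_injective _ hf]) fun hsub => ?_
  have := mem_range.mp (hsub (mem_image_of_mem f (mem_univ i)))
  omega

theorem exists_perm_castLE_eq {n N : ℕ} (hn : n ≤ N) {f : Fin n → Fin N}
    (hf : Function.Injective f) (hfn : ∀ i, (f i : ℕ) < n) :
    ∃ σ : Perm (Fin n), (fun i => Fin.castLE hn (σ i)) = f := by
  have hinj : Function.Injective fun i => (⟨f i, hfn i⟩ : Fin n) :=
    fun i j h => hf (Fin.ext (Fin.mk.inj h))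
  exact ⟨Equiv.ofBijective _ hinj.bijective_of_finite, funext fun i => Fin.ext rfl⟩

theorem sub_one_pow_sum_dvd_prod {R ι : Type*} [CommRing R] [Fintype ι] (x : R) (a e : ι → ℕ) :
    (x - 1) ^ (∑ i, e i) ∣ ∏ i, (x ^ a i - 1) ^ e i := by
  rw [← prod_pow_eq_pow_sum]
  exact prod_dvd_prod_of_dvd _ _ fun i _ => pow_dvd_pow_of_dvd (sub_one_dvd_pow_sub_one x _) _

theorem sum_sub_one_pow_mul_choose {R : Type*} [CommRing R] (x : R) {b N : ℕ} (hb : b < N) :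
    ∑ k ∈ range N, (x - 1) ^ k * (b.choose k : R) = x ^ b := by
  rw [← sum_range_add_sum_Ico _ (show b + 1 ≤ N by omega),
    sum_eq_zero (s := Ico _ _) fun k hk => by
      rw [Nat.choose_eq_zero_of_lt (by simp at hk; omega)]; simp]
  simpa using (add_pow (x - 1) 1 b).symm

theorem Matrix.det_mul_eq_sum_prod_mul_det_submatrix {R ι κ : Type*} [CommRing R]
    [Fintype ι] [DecidableEq ι] [Fintype κ] (A : Matrix ι κ R) (B : Matrix κ ι R) :
    (A * B).det = ∑ f : ι → κ, (∏ i, A i (f i)) * (B.submatrix f id).det := by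
  have hrows : A * B = fun i => ∑ k, A i k • B k := by
    ext i j
    simp [mul_apply, Finset.sum_apply]
  rw [hrows]
  exact (detRowAlternating.toMultilinearMap.map_sum fun i k => A i k • B k).trans
    (sum_congr rfl fun f _ => detRowAlternating.toMultilinearMap.map_smul_univ _ _)

theorem Matrix.det_vandermonde_eq_sum_sign_mul_prod {R : Type*} [CommRing R] {n : ℕ}
    (v : Fin n → R) :
    (vandermonde v).det = ∑ σ : Perm (Fin n), (Perm.sign σ : R) * ∏ i, v i ^ (σ i : ℕ) := by
  rw [← det_transpose, det_apply]
  simp [Units.smul_def, vandermonde_apply]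

theorem Matrix.det_vandermonde_const_mul {R : Type*} [CommRing R] {n : ℕ} (c : R)
    (v : Fin n → R) :
    (vandermonde fun i => c * v i).det = c ^ (∑ i ∈ range n, i) * (vandermonde v).det := by
  rw [← Fin.sum_univ_eq_sum_range, ← prod_pow_eq_pow_sum, ← det_mul_row]
  congr 1
  ext i j
  simp [vandermonde_apply, mul_pow]

theorem Polynomial.eval_one_det_vandermonde_geom_sum {n : ℕ} (a : Fin n → ℕ) :
    ((vandermonde fun i => ∑ t ∈ range (a i), (X : ℤ[X]) ^ t).det).eval 1
      = (vandermonde fun i => (a i : ℤ)).det := by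
  simp [det_vandermonde, eval_prod]

def binomialMatrix {ι κ : Type*} (s : ι → ℕ) (b : κ → ℕ) : Matrix ι κ ℤ :=
  of fun i j => ((b j).choose (s i) : ℤ)

theorem det_binomialMatrix_eq_zero {ι : Type*} [Fintype ι] [DecidableEq ι] {s : ι → ℕ}
    (b : ι → ℕ) (hs : ¬ Function.Injective s) : (binomialMatrix s b).det = 0 := by
  obtain ⟨i, j, hij, hne⟩ : ∃ i j, s i = s j ∧ i ≠ j := by
    simpa [Function.Injective] using hs
  exact det_zero_of_row_eq hne (funext fun k => by simp [binomialMatrix, hij])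

theorem det_binomialMatrix_perm {ι : Type*} [Fintype ι] [DecidableEq ι] (σ : Perm ι)
    (s b : ι → ℕ) :
    (binomialMatrix (fun i => s (σ i)) b).det = Perm.sign σ * (binomialMatrix s b).det := by
  have := det_permute σ (binomialMatrix s b)
  rwa [Int.cast_id] at this

theorem prod_factorial_mul_det_binomialMatrix {n : ℕ} (b : Fin n → ℕ) :
    (∏ k : Fin n, ((k : ℕ).factorial : ℤ)) * (binomialMatrix (fun k : Fin n => (k : ℕ)) b).det
      = (vandermonde fun j => (b j : ℤ)).det := by
  rw [det_eval_matrixOfPolynomials_eq_det_vandermonde _ (fun k => descPochhammer ℤ k)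
    (fun k => descPochhammer_natDegree ℤ k) (fun k => monic_descPochhammer ℤ k),
    ← det_transpose, ← det_mul_row]
  congr 1
  ext k j
  simp [binomialMatrix, descPochhammer_eval_eq_descFactorial,
    Nat.descFactorial_eq_factorial_mul_choose]

section Expansion

variable {n N : ℕ} (a b : Fin n → ℕ)

theorem det_X_pow_mul_eq_sum (hb : ∀ j, b j < N) :
    (of fun i j => (X : ℤ[X]) ^ (a i * b j)).det
      = ∑ f : Fin n → Fin N, (∏ i, ((X : ℤ[X]) ^ a i - 1) ^ (f i : ℕ))
          * C (binomialMatrix (fun i => (f i : ℕ)) b).det := by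
  have hfactor : (of fun i j => (X : ℤ[X]) ^ (a i * b j))
      = (of fun i (k : Fin N) => ((X : ℤ[X]) ^ a i - 1) ^ (k : ℕ))
        * (binomialMatrix (fun k : Fin N => (k : ℕ)) b).map C := by
    ext i j
    simp only [of_apply, mul_apply, map_apply, binomialMatrix, map_natCast, pow_mul]
    rw [Fin.sum_univ_eq_sum_range (fun k => (_ - 1) ^ k * ((b j).choose k : ℤ[X])),
      sum_sub_one_pow_mul_choose _ (hb j)]
  rw [hfactor, det_mul_eq_sum_prod_mul_det_submatrix]
  simp only [RingHom.map_det]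
  rfl

theorem sum_perm_prod_mul_det_binomialMatrix :
    ∑ σ : Perm (Fin n), (∏ i, ((X : ℤ[X]) ^ a i - 1) ^ (σ i : ℕ))
        * C (binomialMatrix (fun i => (σ i : ℕ)) b).det
      = (X - 1) ^ (∑ i ∈ range n, i) * (C (binomialMatrix (fun k : Fin n => (k : ℕ)) b).det
          * (vandermonde fun i => ∑ t ∈ range (a i), (X : ℤ[X]) ^ t).det) := by
  rw [mul_left_comm, ← det_vandermonde_const_mul, det_vandermonde_eq_sum_sign_mul_prod, mul_sum]
  refine sum_congr rfl fun σ _ => ?_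
  rw [det_binomialMatrix_perm]
  simp only [mul_geom_sum, map_mul, eq_intCast]
  ring

theorem exists_det_X_pow_mul_eq (hb : ∀ j, b j < N) (hn : n ≤ N) :
    ∃ H : ℤ[X], (of fun i j => (X : ℤ[X]) ^ (a i * b j)).det
      = (X - 1) ^ (∑ i ∈ range n, i) * (C (binomialMatrix (fun k : Fin n => (k : ℕ)) b).det
          * (vandermonde fun i => ∑ t ∈ range (a i), (X : ℤ[X]) ^ t).det + (X - 1) * H) := by
  classical
  set perms : Finset (Fin n → Fin N) := univ.image fun σ : Perm (Fin n) => (Fin.castLE hn ∘ σ)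
  have hcastLE : Function.Injective fun σ : Perm (Fin n) => (Fin.castLE hn ∘ σ) :=
    fun σ τ h => Equiv.ext fun i => Fin.castLE_injective hn (congrFun h i)
  obtain ⟨H, hH⟩ : (X - 1) ^ (∑ i ∈ range n, i + 1) ∣ ∑ f ∈ permsᶜ,
      (∏ i, ((X : ℤ[X]) ^ a i - 1) ^ (f i : ℕ)) * C (binomialMatrix (fun i => (f i : ℕ)) b).det := by
    refine dvd_sum fun f hf => ?_
    by_cases hf_inj : Function.Injective f
    · have hlarge : ∃ i, n ≤ (f i : ℕ) := by
        by_contra! hsmall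
        obtain ⟨σ, rfl⟩ := exists_perm_castLE_eq hn hf_inj hsmall
        exact mem_compl.mp hf (mem_image_of_mem _ (mem_univ σ))
      refine Dvd.dvd.mul_right ((pow_dvd_pow _ ?_).trans (sub_one_pow_sum_dvd_prod _ _ _)) _
      exact sum_range_lt_sum_of_injective (Fin.val_injective.comp hf_inj) hlarge
    · rw [det_binomialMatrix_eq_zero b fun h => hf_inj fun i j hij => h (congrArg Fin.val hij)]
      simp
  refine ⟨H, ?_⟩
  rw [det_X_pow_mul_eq_sum a b hb, ← sum_add_sum_compl perms, hH,
    sum_image fun σ _ τ _ h => hcastLE h]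
  simp only [Function.comp_apply, Fin.val_castLE]
  rw [sum_perm_prod_mul_det_binomialMatrix]
  ring

end Expansion

theorem Polynomial.prime_dvd_eval_one_of_aeval_eq_zero {K : Type*} [Field K] [CharZero K]
    {p : ℕ} (hp : p.Prime) {ζ : K} (hζ : IsPrimitiveRoot ζ p) {Q : ℤ[X]} (hQ : aeval ζ Q = 0) :
    (p : ℤ) ∣ Q.eval 1 := by
  have : Fact p.Prime := ⟨hp⟩
  obtain ⟨H, rfl⟩ : cyclotomic p ℤ ∣ Q := by
    rw [cyclotomic_eq_minpoly hζ hp.pos]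
    exact minpoly.isIntegrallyClosed_dvd (hζ.isIntegral hp.pos) hQ
  simp [eval_one_cyclotomic_prime]

theorem prime_not_dvd_det_vandermonde {p n : ℕ} (hp : p.Prime) {v : Fin n → Fin p}
    (hv : Function.Injective v) : ¬ (p : ℤ) ∣ (vandermonde fun i => ((v i : ℕ) : ℤ)).det := by
  have hp' : Prime (p : ℤ) := Nat.prime_iff_prime_int.mp hp
  rw [det_vandermonde, hp'.dvd_finsetProd_iff]
  rintro ⟨i, -, hi⟩
  obtain ⟨j, hj, hij⟩ := (hp'.dvd_finsetProd_iff _).mp hi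
  have hne : v j ≠ v i := hv.ne (ne_of_gt (mem_Ioi.mp hj))
  have hlt : |((v j : ℕ) : ℤ) - (v i : ℕ)| < p := by
    have := (v j).isLt
    have := (v i).isLt
    rw [abs_lt]
    constructor <;> omega
  exact hne (Fin.ext (by have := Int.eq_zero_of_abs_lt_dvd hij hlt; omega))

theorem det_primitiveRoot_pow_mul_ne_zero {K : Type*} [Field K] [CharZero K] {p : ℕ}
    (hp : p.Prime) {ζ : K} (hζ : IsPrimitiveRoot ζ p) {n : ℕ} {r c : Fin n → Fin p}
    (hr : Function.Injective r) (hc : Function.Injective c) :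
    (of fun i j => ζ ^ ((r i : ℕ) * c j)).det ≠ 0 := by
  have hn : n ≤ p := by simpa using Fintype.card_le_of_injective r hr
  obtain ⟨H, hH⟩ := exists_det_X_pow_mul_eq (fun i => (r i : ℕ)) (fun j => (c j : ℕ))
    (fun j => (c j).isLt) hn
  set c₀ := (binomialMatrix (fun k : Fin n => (k : ℕ)) fun j => (c j : ℕ)).det
  set Q : ℤ[X] := C c₀ * (vandermonde fun i => ∑ t ∈ range (r i : ℕ), (X : ℤ[X]) ^ t).det
    + (X - 1) * H
  intro hdet
  have hQζ : aeval ζ Q = 0 := by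
    have hζ1 : (ζ - 1) ^ (∑ i ∈ range n, i) ≠ 0 :=
      pow_ne_zero _ (sub_ne_zero.mpr (hζ.ne_one hp.one_lt))
    have hmap : (aeval ζ).mapMatrix (of fun i j => (X : ℤ[X]) ^ ((r i : ℕ) * c j))
        = of fun i j => ζ ^ ((r i : ℕ) * c j) := by
      ext i j
      simp
    have h := congrArg (aeval ζ) hH
    rw [AlgHom.map_det, hmap, hdet, map_mul, map_pow, map_sub, aeval_X, map_one] at h
    exact (mul_eq_zero.mp h.symm).resolve_left hζ1
  have hQ1 : Q.eval 1 = c₀ * (vandermonde fun i => ((r i : ℕ) : ℤ)).det := by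
    simp [Q, eval_one_det_vandermonde_geom_sum]
  have hdvd : (p : ℤ) ∣ (vandermonde fun j => ((c j : ℕ) : ℤ)).det
      * (vandermonde fun i => ((r i : ℕ) : ℤ)).det := by
    rw [← prod_factorial_mul_det_binomialMatrix, mul_assoc, ← hQ1]
    exact (prime_dvd_eval_one_of_aeval_eq_zero hp hζ hQζ).mul_left _
  rcases (Nat.prime_iff_prime_int.mp hp).dvd_or_dvd hdvd with h | h
  exacts [prime_not_dvd_det_vandermonde hp hc h, prime_not_dvd_det_vandermonde hp hr h]

theorem isPrimitiveRoot_exp_neg_two_pi_I_div {d : ℕ} (hd : d ≠ 0) :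
    IsPrimitiveRoot (Complex.exp (-(2 * π * I) / d)) d := by
  rw [neg_div, Complex.exp_neg]
  exact (Complex.isPrimitiveRoot_exp d hd).inv

theorem Fourier_submatrix_eq {d n : ℕ} (r c : Fin n → Fin d) :
    (Fourier d).submatrix r c
      = (1 / Real.sqrt d : ℂ) • of fun i j => Complex.exp (-(2 * π * I) / d) ^ ((r i : ℕ) * c j) := by
  ext i j
  simp only [submatrix_apply, Fourier, Matrix.smul_apply, of_apply, smul_eq_mul, ← Complex.exp_nat_mul]
  congr 2
  push_cast
  ring

/-- Chebotarëv's theorem: if `d` is prime, every square submatrix of the Fourier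
matrix (selected by injective row/column index maps) has nonzero determinant. -/
theorem chebotarev (d : ℕ) (hd : d.Prime) (n : ℕ)
    (r c : Fin n → Fin d) (hr : Function.Injective r) (hc : Function.Injective c) :
    ((Fourier d).submatrix r c).det ≠ 0 := by
  rw [Fourier_submatrix_eq, det_smul]
  refine mul_ne_zero (pow_ne_zero _ ?_) (det_primitiveRoot_pow_mul_ne_zero hd
    (isPrimitiveRoot_exp_neg_two_pi_I_div hd.ne_zero) hr hc)
  simp [hd.ne_zero]
end

section
/- If d is prime and D is a diagonal unitary matrix with nonzero diagonal entries, then every square submatrix of DF has nonzero determinant, where F is the d×d Fourier matrix. -/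
open Complex Real Matrix

section ChebAux
namespace ChebAux
open MvPolynomial

variable {n : ℕ}


variable {n : ℕ}

/-- evaluation at all-ones, as an `ℤ`-algebra hom. -/
noncomputable def ee (n : ℕ) : MvPolynomial (Fin n) ℤ →ₐ[ℤ] ℤ := aeval fun _ => 1

/-- the augmentation ideal. -/
noncomputable def II (n : ℕ) : Ideal (MvPolynomial (Fin n) ℤ) :=
  RingHom.ker (ee n).toRingHom

lemma mem_II {f : MvPolynomial (Fin n) ℤ} : f ∈ II n ↔ ee n f = 0 := Iff.rfl

/-- the derivation `X i * ∂ᵢ`. -/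
noncomputable def th (i : Fin n) (f : MvPolynomial (Fin n) ℤ) : MvPolynomial (Fin n) ℤ :=
  X i * pderiv i f

lemma th_add (i : Fin n) (f g : MvPolynomial (Fin n) ℤ) :
    th i (f + g) = th i f + th i g := by
  simp [th, mul_add]

lemma th_smul (i : Fin n) (c : ℤ) (f : MvPolynomial (Fin n) ℤ) :
    th i (c • f) = c • th i f := by
  simp [th]; ring

lemma th_mul (i : Fin n) (f g : MvPolynomial (Fin n) ℤ) :
    th i (f * g) = th i f * g + f * th i g := by
  simp [th, pderiv_mul]; ring

lemma th_mem (i : Fin n) : ∀ (k : ℕ) (f : MvPolynomial (Fin n) ℤ),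
    f ∈ II n ^ (k + 1) → th i f ∈ II n ^ k
  | 0, f, _ => by simp [pow_zero, Ideal.one_eq_top]
  | (k+1), f, hf => by
    rw [pow_succ] at hf
    refine Submodule.mul_induction_on hf (fun a ha b hb => ?_) (fun x y hx hy => ?_)
    · rw [th_mul]
      refine Ideal.add_mem _ ?_ ?_
      · rw [pow_succ]
        exact Ideal.mul_mem_mul (th_mem i k a ha) hb
      · exact Ideal.mul_mem_right _ _ ha
    · rw [th_add]; exact Ideal.add_mem _ hx hy

noncomputable def ap : List (Fin n) → MvPolynomial (Fin n) ℤ → MvPolynomial (Fin n) ℤ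
  | [], f => f
  | i :: t, f => ap t (th i f)

@[simp] lemma ap_nil (f : MvPolynomial (Fin n) ℤ) : ap [] f = f := rfl
@[simp] lemma ap_cons (i : Fin n) (t : List (Fin n)) (f : MvPolynomial (Fin n) ℤ) :
    ap (i :: t) f = ap t (th i f) := rfl

lemma ap_add (L : List (Fin n)) (f g : MvPolynomial (Fin n) ℤ) :
    ap L (f + g) = ap L f + ap L g := by
  induction L generalizing f g with
  | nil => rfl
  | cons i t ih => simp [th_add, ih]

lemma ap_smul (L : List (Fin n)) (c : ℤ) (f : MvPolynomial (Fin n) ℤ) :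
    ap L (c • f) = c • ap L f := by
  induction L generalizing f with
  | nil => rfl
  | cons i t ih => rw [ap_cons, th_smul, ih, ap_cons]

lemma ap_mem (L : List (Fin n)) (k : ℕ) (f : MvPolynomial (Fin n) ℤ)
    (hf : f ∈ II n ^ (L.length + k)) : ap L f ∈ II n ^ k := by
  induction L generalizing f with
  | nil => simpa using hf
  | cons i t ih =>
    simp only [ap_cons]
    refine ih _ (th_mem i _ _ ?_)
    rwa [show t.length + k + 1 = (i :: t).length + k by simp only [List.length_cons]; omega]

set_option maxHeartbeats 1000000 in
lemma ap_mul_sub (L : List (Fin n)) (f g : MvPolynomial (Fin n) ℤ)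
    (hf : f ∈ II n ^ L.length) : ap L (f * g) - ap L f * g ∈ II n := by
  induction L generalizing f g with
  | nil => simp
  | cons i t ih =>
    have h1 : th i f ∈ II n ^ t.length := th_mem i _ _ (by simpa using hf)
    have h2 : f ∈ II n ^ t.length :=
      Ideal.pow_le_pow_right (Nat.le_succ _) (by simpa using hf)
    have h3 : ap t f ∈ II n ^ 1 := ap_mem t 1 f (by simpa [Nat.add_comm] using hf)
    rw [pow_one] at h3
    have key : ap (i :: t) (f * g) - ap (i :: t) f * g =
        (ap t (th i f * g) - ap t (th i f) * g)
        + (ap t (f * th i g) - ap t f * th i g) + ap t f * th i g := by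
      simp only [ap_cons, th_mul i f g, ap_add]; abel
    rw [key]
    exact Ideal.add_mem _ (Ideal.add_mem _ (ih _ _ h1) (ih _ _ h2)) (Ideal.mul_mem_right _ _ h3)

lemma th_monomial (i : Fin n) (s : Fin n →₀ ℕ) (a : ℤ) :
    th i (monomial s a) = monomial s ((s i : ℤ) * a) := by
  rw [th, pderiv_monomial]
  rcases Nat.eq_zero_or_pos (s i) with h | h
  · simp [h]
  · rw [X, monomial_mul, one_mul]
    have hs : (Finsupp.single i 1) + (s - Finsupp.single i 1) = s := by
      ext j
      rcases eq_or_ne j i with rfl | hji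
      · simp [Finsupp.single_apply, Finsupp.tsub_apply]; omega
      · simp [Finsupp.single_apply, hji, (Ne.symm hji), Finsupp.tsub_apply]
    rw [hs]
    congr 1
    push_cast; ring

lemma ap_monomial (L : List (Fin n)) (s : Fin n →₀ ℕ) (a : ℤ) :
    ap L (monomial s a) = monomial s ((L.map fun i => (s i : ℤ)).prod * a) := by
  induction L generalizing a with
  | nil => simp
  | cons i t ih => simp [th_monomial, ih]; ring_nf

@[simp] lemma ee_monomial (s : Fin n →₀ ℕ) (a : ℤ) : ee n (monomial s a) = a := by
  simp [ee, aeval_monomial, Finsupp.prod]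

/-- The list containing each `i : Fin n` with multiplicity `i`. -/
def L₀ (n : ℕ) : List (Fin n) := (List.finRange n).flatMap fun (i : Fin n) => List.replicate (i : ℕ) i

lemma length_L₀ : (L₀ n).length = ∑ i : Fin n, (i : ℕ) := by
  rw [L₀, List.length_flatMap, Fin.sum_univ_def]
  simp [Function.comp_def]

lemma map_prod_L₀ (g : Fin n → ℤ) :
    ((L₀ n).map g).prod = ∏ i : Fin n, g i ^ (i : ℕ) := by
  rw [L₀, Fin.prod_univ_def]
  induction (List.finRange n) with
  | nil => simp
  | cons a t ih => simp [List.flatMap_cons, ih, List.prod_replicate]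

/-- `Ψ = ee ∘ ap (L₀ n)` as a linear map. -/
noncomputable def Psi (n : ℕ) : MvPolynomial (Fin n) ℤ →ₗ[ℤ] ℤ where
  toFun f := ee n (ap (L₀ n) f)
  map_add' f g := by rw [ap_add, _root_.map_add]
  map_smul' c f := by rw [ap_smul, _root_.map_smul]; rfl

lemma Psi_apply (f : MvPolynomial (Fin n) ℤ) : Psi n f = ee n (ap (L₀ n) f) := rfl

lemma Psi_monomial (s : Fin n →₀ ℕ) (a : ℤ) :
    Psi n (monomial s a) = (∏ i : Fin n, (s i : ℤ) ^ (i : ℕ)) * a := by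
  rw [Psi_apply, ap_monomial, ee_monomial, map_prod_L₀]

/-- the key determinant computation. -/
lemma Psi_det (a : Fin n → ℕ) :
    Psi n (Matrix.det (Matrix.of fun i j : Fin n => (X j : MvPolynomial (Fin n) ℤ) ^ (a i))) =
      Matrix.det (Matrix.vandermonde fun i => (a i : ℤ)) := by
  rw [Matrix.det_apply, Matrix.det_apply, _root_.map_sum]
  refine Finset.sum_congr rfl fun σ _ => ?_
  rw [Units.smul_def, Units.smul_def, LinearMap.map_smul]
  congr 1
  have hm : (∏ i, (Matrix.of fun i j : Fin n => (X j : MvPolynomial (Fin n) ℤ) ^ (a i)) (σ i) i)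
      = monomial (Finsupp.equivFunOnFinite.symm fun i => a (σ i)) 1 := by
    rw [monomial_eq, _root_.map_one, one_mul, Finsupp.prod_fintype]
    · exact Finset.prod_congr rfl fun i _ => by simp
    · intro i; rfl
  rw [hm, Psi_monomial, mul_one]
  refine Finset.prod_congr rfl fun i _ => ?_
  simp [Matrix.vandermonde_apply]
/-- substitution `X i ↦ X j`, fixing other variables. -/
noncomputable def sub (i j : Fin n) : MvPolynomial (Fin n) ℤ →ₐ[ℤ] MvPolynomial (Fin n) ℤ :=
  aeval fun k => if k = i then X j else X k

lemma dvd_sub_sub (i j : Fin n) (f : MvPolynomial (Fin n) ℤ) :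
    (X i - X j : MvPolynomial (Fin n) ℤ) ∣ f - sub i j f := by
  induction f using MvPolynomial.induction_on with
  | C a => simp [sub]
  | add p q hp hq =>
    have : p + q - sub i j (p + q) = (p - sub i j p) + (q - sub i j q) := by
      rw [_root_.map_add]; ring
    rw [this]; exact dvd_add hp hq
  | mul_X p k hp =>
    have : p * X k - sub i j (p * X k)
        = (p - sub i j p) * sub i j (X k) + p * (X k - sub i j (X k)) := by
      rw [_root_.map_mul]; ring
    rw [this]
    refine dvd_add (Dvd.dvd.mul_right hp _) (Dvd.dvd.mul_left ?_ _)
    rcases eq_or_ne k i with rfl | hk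
    · simp [sub]
    · simp [sub, hk]

lemma sub_eq_zero_iff_dvd (i j : Fin n) (hij : i ≠ j) (f : MvPolynomial (Fin n) ℤ) :
    sub i j f = 0 ↔ (X i - X j : MvPolynomial (Fin n) ℤ) ∣ f := by
  constructor
  · intro h
    have := dvd_sub_sub i j f
    rwa [h, sub_zero] at this
  · rintro ⟨g, rfl⟩
    rw [_root_.map_mul]
    have : sub i j (X i - X j) = 0 := by simp [sub, hij.symm]
    rw [_root_.map_sub] at this ⊢
    rw [show (sub i j) (X i) - (sub i j) (X j) = 0 from this, zero_mul]

lemma prime_X_sub_X (i j : Fin n) (hij : i ≠ j) :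
    Prime (X i - X j : MvPolynomial (Fin n) ℤ) := by
  constructor
  · intro h0
    have h1 := congrArg (eval fun k => if k = i then (1 : ℤ) else 0) h0
    simp [hij.symm] at h1
  constructor
  · intro hu
    obtain ⟨g, hg⟩ := IsUnit.exists_right_inv hu
    have := congrArg (sub i j) hg
    rw [_root_.map_mul, _root_.map_one, (sub_eq_zero_iff_dvd i j hij _).2 dvd_rfl, zero_mul] at this
    exact zero_ne_one this
  · intro a b hab
    rw [← sub_eq_zero_iff_dvd i j hij] at hab ⊢
    rw [← sub_eq_zero_iff_dvd i j hij]
    rw [_root_.map_mul] at hab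
    rcases mul_eq_zero.1 hab with h | h
    · exact Or.inl h
    · exact Or.inr h

lemma not_associated (i j k l : Fin n)
    (hv : ∃ v : Fin n → ℤ, v i = v j ∧ v k ≠ v l) :
    ¬ Associated (X i - X j : MvPolynomial (Fin n) ℤ) (X k - X l) := by
  intro h
  obtain ⟨v, hv1, hv2⟩ := hv
  have hdvd : (X i - X j : MvPolynomial (Fin n) ℤ) ∣ (X k - X l) := h.dvd
  obtain ⟨g, hg⟩ := hdvd
  have := congrArg (eval v) hg
  simp [hv1] at this
  exact hv2 (sub_eq_zero.1 this)

/-- product of pairwise-nonassociated primes each dividing `a` divides `a`. -/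
lemma prod_primes_dvd {R : Type*} [CommRing R] [IsDomain R] {α : Type*} [DecidableEq α]
    (s : Finset α) (f : α → R) (hp : ∀ x ∈ s, Prime (f x))
    (hna : ∀ x ∈ s, ∀ y ∈ s, x ≠ y → ¬ Associated (f x) (f y))
    (a : R) (hdvd : ∀ x ∈ s, f x ∣ a) : (∏ x ∈ s, f x) ∣ a := by
  induction s using Finset.induction_on with
  | empty => simp
  | insert x t hx ih =>
    obtain ⟨m, rfl⟩ := ih (fun y hy => hp y (Finset.mem_insert_of_mem hy))
      (fun y hy z hz hyz => hna y (Finset.mem_insert_of_mem hy) z (Finset.mem_insert_of_mem hz) hyz)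
      (fun y hy => hdvd y (Finset.mem_insert_of_mem hy))
    have hfx : f x ∣ (∏ y ∈ t, f y) * m := hdvd x (Finset.mem_insert_self x t)
    have hprime := hp x (Finset.mem_insert_self x t)
    rcases hprime.dvd_mul.1 hfx with h | h
    · obtain ⟨y, hy, hdy⟩ := (hprime.dvd_finset_prod_iff f).1 h
      exact absurd (hprime.associated_of_dvd (hp y (Finset.mem_insert_of_mem hy)) hdy)
        (hna x (Finset.mem_insert_self x t) y (Finset.mem_insert_of_mem hy)
          (fun hxy => hx (hxy ▸ hy)))
    · obtain ⟨m', rfl⟩ := h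
      rw [Finset.prod_insert hx]
      exact ⟨m', by ring⟩

def PS (n : ℕ) : Finset (Σ _ : Fin n, Fin n) :=
  (Finset.univ : Finset (Fin n)).sigma fun i => Finset.Ioi i

lemma PS_lt {x : Σ _ : Fin n, Fin n} (hx : x ∈ PS n) : x.1 < x.2 := by
  simp [PS, Finset.mem_sigma] at hx
  exact hx

lemma exists_v (x y : Σ _ : Fin n, Fin n) (hx : x.1 < x.2) (hy : y.1 < y.2) (hxy : x ≠ y) :
    ∃ v : Fin n → ℤ, v x.1 = v x.2 ∧ v y.1 ≠ v y.2 := by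
  obtain ⟨i, j⟩ := x
  obtain ⟨k, l⟩ := y
  simp only at hx hy
  by_cases hl : l = i ∨ l = j
  · have hk1 : k ≠ i ∧ k ≠ j := by
      rcases hl with rfl | rfl
      · constructor
        · exact hy.ne
        · intro h; subst h; exact absurd (hy.trans hx) (lt_irrefl _)
      · constructor
        · intro h; subst h; exact hxy rfl
        · exact hy.ne
    refine ⟨fun t => if t = k then 1 else 0, by simp [Ne.symm hk1.1, Ne.symm hk1.2], ?_⟩
    simp [Ne.symm hy.ne]
  · push_neg at hl
    refine ⟨fun t => if t = l then 1 else 0, by simp [Ne.symm hl.1, Ne.symm hl.2], ?_⟩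
    simp [hy.ne]

lemma prod_mem_pow {R : Type*} [CommRing R] (I : Ideal R) {α : Type*} [DecidableEq α]
    (s : Finset α) (f : α → R) (h : ∀ x ∈ s, f x ∈ I) : (∏ x ∈ s, f x) ∈ I ^ s.card := by
  induction s using Finset.induction_on with
  | empty => simp [Ideal.one_eq_top]
  | insert x t hx ih =>
    rw [Finset.prod_insert hx, Finset.card_insert_of_notMem hx, pow_succ, mul_comm (I ^ t.card) I]
    exact Ideal.mul_mem_mul (h x (Finset.mem_insert_self x t))
      (ih fun y hy => h y (Finset.mem_insert_of_mem hy))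

lemma card_PS : (PS n).card = (L₀ n).length := by
  rw [PS, Finset.card_sigma, length_L₀]
  simp only [Fin.card_Ioi]
  rw [Fin.sum_univ_eq_sum_range (fun i => n - 1 - i), Fin.sum_univ_eq_sum_range (fun i => i)]
  exact Finset.sum_range_reflect (fun j => j) n

noncomputable def Vp (n : ℕ) : MvPolynomial (Fin n) ℤ := ∏ x ∈ PS n, (X x.2 - X x.1)

lemma dvd_P (c : Fin n → ℕ) :
    Vp n ∣ Matrix.det (Matrix.of fun i j : Fin n => (X j : MvPolynomial (Fin n) ℤ) ^ (c i)) := by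
  refine prod_primes_dvd _ _ (fun x hx => prime_X_sub_X _ _ (PS_lt hx).ne') ?_ _ ?_
  · intro x hx y hy hxy
    obtain ⟨v, h1, h2⟩ := exists_v x y (PS_lt hx) (PS_lt hy) hxy
    exact not_associated _ _ _ _ ⟨v, h1.symm, fun h => h2 h.symm⟩
  · intro x hx
    rw [← sub_eq_zero_iff_dvd _ _ (PS_lt hx).ne']
    rw [AlgHom.map_det]
    refine Matrix.det_zero_of_column_eq (PS_lt hx).ne' fun k => ?_
    simp [sub, Matrix.map_apply, (PS_lt hx).ne]

lemma core_int (c : Fin n → ℕ) :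
    ∃ G : MvPolynomial (Fin n) ℤ,
      Matrix.det (Matrix.of fun i j : Fin n => (X j : MvPolynomial (Fin n) ℤ) ^ (c i))
        = Vp n * G ∧
      Matrix.det (Matrix.vandermonde fun i => (c i : ℤ)) = Psi n (Vp n) * ee n G := by
  obtain ⟨G, hG⟩ := dvd_P c
  refine ⟨G, hG, ?_⟩
  have hVmem : Vp n ∈ II n ^ (L₀ n).length := by
    rw [← card_PS]
    refine prod_mem_pow _ _ _ fun x hx => ?_
    rw [mem_II, _root_.map_sub]
    simp [ee]
  have h1 := ap_mul_sub (L₀ n) (Vp n) G hVmem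
  rw [mem_II, _root_.map_sub, _root_.map_mul, sub_eq_zero] at h1
  rw [← Psi_det c, hG, Psi_apply, h1, Psi_apply]

theorem cheb_core {p : ℕ} (hp : p.Prime) {ζ : ℂ} (hζ : IsPrimitiveRoot ζ p)
    (r c : Fin n → Fin p) (hr : Function.Injective r) (hc : Function.Injective c) :
    (Matrix.of fun i j : Fin n => ζ ^ ((r j : ℕ) * (c i : ℕ))).det ≠ 0 := by
  obtain ⟨G, hfac, hkey⟩ := core_int (n := n) fun i => (c i : ℕ)
  set Φ : MvPolynomial (Fin n) ℤ →ₐ[ℤ] ℂ := aeval fun k => ζ ^ (r k : ℕ) with hΦ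
  have hdet : (Matrix.of fun i j : Fin n => ζ ^ ((r j : ℕ) * (c i : ℕ))).det
      = Φ (Matrix.det (Matrix.of fun i j : Fin n => (X j : MvPolynomial (Fin n) ℤ) ^ ((c i : ℕ)))) := by
    rw [AlgHom.map_det]
    congr 1
    ext i j
    simp [Matrix.map_apply, hΦ, ← pow_mul]
  rw [hdet, hfac, _root_.map_mul]
  refine mul_ne_zero ?_ ?_
  · rw [Vp, _root_.map_prod]
    refine Finset.prod_ne_zero_iff.2 fun x hx => ?_
    have hlt := PS_lt hx
    simp only [_root_.map_sub, hΦ, aeval_X]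
    refine sub_ne_zero.2 fun h => ?_
    have h2 := hζ.pow_inj (r x.2).is_lt (r x.1).is_lt h
    exact hlt.ne' (hr (Fin.val_injective h2))
  · intro h0
    haveI := Fact.mk hp
    set g : Polynomial ℤ := aeval (fun k => (Polynomial.X : Polynomial ℤ) ^ (r k : ℕ)) G with hgdef
    have hg0 : Polynomial.aeval ζ g = 0 := by
      rw [hgdef, comp_aeval_apply, ← h0, hΦ]
      simp only [_root_.map_pow, Polynomial.aeval_X]
    have hint : IsIntegral ℤ ζ := hζ.isIntegral hp.pos
    have hdvd : minpoly ℤ ζ ∣ g := minpoly.isIntegrallyClosed_dvd hint hg0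
    rw [← Polynomial.cyclotomic_eq_minpoly hζ hp.pos] at hdvd
    obtain ⟨h, hgh⟩ := hdvd
    have hev : ee n G = (p : ℤ) * h.eval 1 := by
      have h1 : Polynomial.aeval (1 : ℤ) g = ee n G := by
        rw [hgdef, comp_aeval_apply, ee]
        simp only [_root_.map_pow, Polynomial.aeval_X, one_pow]
      rw [← h1, hgh]
      simp [Polynomial.coe_aeval_eq_eval, Polynomial.eval_one_cyclotomic_prime]
    have hpd : (p : ℤ) ∣ Matrix.det (Matrix.vandermonde fun i => ((c i : ℕ) : ℤ)) := by
      rw [hkey, hev]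
      exact ⟨Psi n (Vp n) * h.eval 1, by ring⟩
    rw [Matrix.det_vandermonde] at hpd
    have hip : Prime (p : ℤ) := Nat.prime_iff_prime_int.mp hp
    obtain ⟨i, _, hdvd2⟩ := (hip.dvd_finset_prod_iff _).1 hpd
    obtain ⟨j, hj, hdvd3⟩ := (hip.dvd_finset_prod_iff _).1 hdvd2
    have hji : i < j := Finset.mem_Ioi.1 hj
    have hcc : (c j : ℕ) ≠ (c i : ℕ) := fun hcij => hji.ne' (hc (Fin.val_injective hcij))
    have hne : ((c j : ℕ) : ℤ) - ((c i : ℕ) : ℤ) ≠ 0 := by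
      intro hz
      exact hcc (by exact_mod_cast sub_eq_zero.1 hz)
    have habs : |((c j : ℕ) : ℤ) - ((c i : ℕ) : ℤ)| < (p : ℤ) := by
      have h1 := (c j).is_lt
      have h2 := (c i).is_lt
      rw [abs_sub_lt_iff]
      constructor <;> push_cast <;> omega
    exact hne (Int.eq_zero_of_abs_lt_dvd hdvd3 habs)

end ChebAux
end ChebAux

open ChebAux in
/-- If `d` is prime and `D` is diagonal with nonzero entries, every square submatrix
of `D * F` has nonzero determinant. -/
theorem chebotarev_diagonal (d : ℕ) (hd : d.Prime) (z : Fin d → ℂ)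
    (hz : ∀ v, z v ≠ 0) (n : ℕ)
    (r c : Fin n → Fin d) (hr : Function.Injective r) (hc : Function.Injective c) :
    (((Matrix.diagonal z) * Fourier d).submatrix r c).det ≠ 0 := by
  have hd0 : (d : ℂ) ≠ 0 := Nat.cast_ne_zero.2 hd.pos.ne'
  set ζ : ℂ := Complex.exp (-(2 * Real.pi * Complex.I) / d) with hζdef
  have hζ : IsPrimitiveRoot ζ d := by
    have h1 : IsPrimitiveRoot (Complex.exp (2 * Real.pi * Complex.I / d)) d :=
      Complex.isPrimitiveRoot_exp d hd.pos.ne'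
    have h2 : ζ = (Complex.exp (2 * Real.pi * Complex.I / d))⁻¹ := by
      rw [hζdef, ← Complex.exp_neg, neg_div]
    rw [h2]
    exact h1.inv
  have hentry : ∀ i j, ((Matrix.diagonal z) * Fourier d).submatrix r c i j
      = (z (r i) * (1 / Real.sqrt d : ℂ)) * ζ ^ ((r i : ℕ) * (c j : ℕ)) := by
    intro i j
    have hdm : ((Matrix.diagonal z) * Fourier d) (r i) (c j) = z (r i) * Fourier d (r i) (c j) := by
      rw [Matrix.diagonal_mul]
    rw [Matrix.submatrix_apply, hdm, Fourier]
    have hexp : Complex.exp (-(2 * Real.pi * Complex.I * ((r i : ℕ) : ℂ) * ((c j : ℕ) : ℂ)) / d)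
        = ζ ^ ((r i : ℕ) * (c j : ℕ)) := by
      rw [hζdef, ← Complex.exp_nat_mul]
      congr 1
      push_cast
      ring
    rw [hexp]
    ring
  have hmat : ((Matrix.diagonal z) * Fourier d).submatrix r c
      = Matrix.of (fun i j => (z (r i) * (1 / Real.sqrt d : ℂ)) *
          (Matrix.of fun i j : Fin n => ζ ^ ((r i : ℕ) * (c j : ℕ))) i j) := by
    ext i j
    rw [hentry i j]
    rfl
  rw [hmat, Matrix.det_mul_column]
  refine mul_ne_zero ?_ ?_
  · refine Finset.prod_ne_zero_iff.2 fun i _ => mul_ne_zero (hz _) ?_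
    rw [one_div, ne_eq, inv_eq_zero]
    exact_mod_cast Real.sqrt_ne_zero'.2 (by exact_mod_cast hd.pos)
  · have h := cheb_core hd hζ c r hc hr
    convert h using 2
    ext i j
    rw [Matrix.of_apply, Matrix.of_apply, mul_comm ((r i : ℕ)) ((c j : ℕ))]
end

section
/- Let d be an odd prime, ω = e^{2πi/d}, and define for j ∈ {1,...,d} the Hadamard matrices [H_j]_{xk} = d^{-1/2} ω^{-kx} ω^{(j-1)x²}. Then for j ≠ k in {1,...,d}, H_k† H_j = M H_t† for some monomial matrix M (product of a permutation matrix and a diagonal unitary), where t = 1 + χ and χ ∈ {0,...,d-1} satisfies 4(j-k)χ ≡ 1 (mod d). -/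
/-!
Write `𝕖` for the standard additive character of `ZMod d`. The `(a, b)` entry of `H_k† H_j` is
`d⁻¹ ∑ z, 𝕖 ((j - k) z² + (a - b) z)`. Since `4 (j - k) χ = 1`, completing the square turns it into
`d⁻¹ 𝕖 (-χ (a - b)²) G`, where the quadratic Gauss sum `G = ∑ z, 𝕖 ((j - k) z²)` has modulus `√d`.
Expanding `-χ (a - b)² = -χ a² + 2χ a b - χ b²` splits this into the unimodular row phase
`𝕖 (-χ a²) G / √d` times the entry of `H_{1+χ}†` in row `2χ a` and column `b`, and `a ↦ 2χ a` is a
permutation because `2χ` is invertible.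
-/

open Complex Real Matrix

/-- A monomial matrix: exactly one nonzero, unit-modulus entry in each row and column,
i.e. the product of a diagonal unitary (rephasing) and a permutation matrix. -/
def IsMonomial {d : ℕ} (M : Matrix (Fin d) (Fin d) ℂ) : Prop :=
  ∃ (σ : Equiv.Perm (Fin d)) (u : Fin d → ℂ),
    (∀ i, ‖u i‖ = 1) ∧
    M = Matrix.of (fun i j => if j = σ i then u i else 0)

open Finset ComplexConjugate

namespace AddChar

variable {R : Type*} [CommRing R] [Fintype R]

lemma sum_mul_sq_add_mul {M : Type*} [CommRing M] (ψ : AddChar R M) {m c : R}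
    (h : 4 * m * c = 1) (n : R) :
    ∑ x, ψ (m * x ^ 2 + n * x) = ψ (-(c * n ^ 2)) * ∑ x, ψ (m * x ^ 2) := by
  rw [← Equiv.sum_comp (Equiv.addRight (2 * c * n)) fun y => ψ (m * y ^ 2), mul_sum]
  refine sum_congr rfl fun x _ => ?_
  rw [Equiv.coe_addRight, ← map_add_eq_mul]
  congr 1
  linear_combination -(n * x + c * n ^ 2) * h

lemma sum_mul_sq_mul_conj_eq_card (ψ : AddChar R ℂ) (hψ : ψ.IsPrimitive) {m : R}
    (hm : IsUnit (2 * m)) :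
    (∑ x, ψ (m * x ^ 2)) * conj (∑ x, ψ (m * x ^ 2)) = Fintype.card R := by
  classical
  calc (∑ x, ψ (m * x ^ 2)) * conj (∑ x, ψ (m * x ^ 2))
      = ∑ y, ∑ u, ψ (m * (u + y) ^ 2) * ψ (-(m * y ^ 2)) := by
        simp_rw [map_sum, mul_sum, sum_mul, map_neg_eq_conj]
        exact sum_congr rfl fun y _ => (Equiv.sum_comp (Equiv.addRight y) _).symm
    _ = ∑ u, ψ (m * u ^ 2) * ∑ y, ψ (y * (2 * m * u)) := by
        rw [sum_comm]
        refine sum_congr rfl fun u _ => ?_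
        rw [mul_sum]
        refine sum_congr rfl fun y _ => ?_
        rw [← map_add_eq_mul, ← map_add_eq_mul]
        ring_nf
    _ = Fintype.card R := by
        simp [sum_mulShift _ hψ, hm.mul_right_eq_zero]

lemma norm_sum_mul_sq (ψ : AddChar R ℂ) (hψ : ψ.IsPrimitive) {m : R} (hm : IsUnit (2 * m)) :
    ‖∑ x, ψ (m * x ^ 2)‖ = √(Fintype.card R) := by
  have h := sum_mul_sq_mul_conj_eq_card ψ hψ hm
  rw [mul_conj] at h
  rw [norm_def, (by exact_mod_cast h : normSq (∑ x, ψ (m * x ^ 2)) = Fintype.card R)]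

end AddChar

namespace ZMod

lemma natCast_fin_bijective (d : ℕ) [NeZero d] :
    Function.Bijective (fun x : Fin d ↦ (x : ZMod d)) := by
  obtain ⟨n, rfl⟩ := Nat.exists_eq_succ_of_ne_zero (NeZero.ne d)
  exact ⟨fun x y h ↦ (Fin.cast_val_eq_self x).symm.trans (h.trans (Fin.cast_val_eq_self y)),
    fun z ↦ ⟨z, Fin.cast_val_eq_self z⟩⟩

end ZMod

local notation "𝕖" => ZMod.stdAddChar

section Hadamard

variable {d : ℕ} [NeZero d]

lemma stdH_apply (t : ℕ) (x k : Fin d) :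
    stdH d t x k =
      (1 / √d : ℂ) * 𝕖 (((t : ZMod d) - 1) * (x : ZMod d) ^ 2 - (k : ZMod d) * (x : ZMod d)) := by
  have h := ZMod.stdAddChar_coe (N := d) (((t : ℤ) - 1) * (x : ℤ) ^ 2 - (k : ℤ) * (x : ℤ))
  push_cast at h
  rw [h]
  simp only [stdH]
  push_cast
  ring_nf

lemma conjTranspose_stdH_apply (t : ℕ) (x k : Fin d) :
    (stdH d t)ᴴ x k =
      (1 / √d : ℂ) * 𝕖 ((x : ZMod d) * (k : ZMod d) - ((t : ZMod d) - 1) * (k : ZMod d) ^ 2) := by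
  rw [conjTranspose_apply, stdH_apply, star_mul', star_def, ← AddChar.map_neg_eq_conj]
  simp [Complex.conj_ofReal]

lemma one_div_sqrt_mul_one_div_sqrt (n : ℕ) : (1 / √n : ℂ) * (1 / √n) = (n : ℂ)⁻¹ := by
  rw [div_mul_div_comm, one_mul, ← ofReal_mul, mul_self_sqrt (Nat.cast_nonneg n), one_div]
  push_cast
  rfl

lemma conjTranspose_stdH_mul_stdH_apply (j k : ℕ) (a b : Fin d) :
    ((stdH d k)ᴴ * stdH d j) a b = (d : ℂ)⁻¹ * ∑ z : ZMod d,
      𝕖 (((j : ZMod d) - (k : ZMod d)) * z ^ 2 + ((a : ZMod d) - (b : ZMod d)) * z) := by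
  rw [mul_apply, mul_sum]
  refine Fintype.sum_bijective _ (ZMod.natCast_fin_bijective d) _ _ fun x ↦ ?_
  rw [conjTranspose_stdH_apply, stdH_apply, mul_mul_mul_comm, one_div_sqrt_mul_one_div_sqrt,
    ← AddChar.map_add_eq_mul]
  congr 2
  ring

lemma exists_isMonomial_conjTranspose_stdH_mul_stdH_eq (j k χ : ℕ)
    (h : 4 * ((j : ZMod d) - (k : ZMod d)) * χ = 1) :
    ∃ M, IsMonomial M ∧ (stdH d k)ᴴ * stdH d j = M * (stdH d (1 + χ))ᴴ := by
  set m : ZMod d := (j : ZMod d) - k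
  set c : ZMod d := (χ : ZMod d)
  set G := ∑ z : ZMod d, 𝕖 (m * z ^ 2)
  have hm : IsUnit (2 * m) := IsUnit.of_mul_eq_one (2 * c) (by linear_combination h)
  have hc : IsUnit (2 * c) := IsUnit.of_mul_eq_one (2 * m) (by linear_combination h)
  let e := Equiv.ofBijective _ (ZMod.natCast_fin_bijective d)
  let σ : Equiv.Perm (Fin d) := e.symm.permCongr (Units.mulLeft hc.unit)
  have hσ (a : Fin d) : (σ a : ZMod d) = 2 * c * a := e.apply_symm_apply _
  let u (a : Fin d) : ℂ := G / √d * 𝕖 (-(c * (a : ZMod d) ^ 2))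
  have hu (a : Fin d) : ‖u a‖ = 1 := by
    have hG : ‖G‖ = √d := by
      simpa using AddChar.norm_sum_mul_sq _ (ZMod.isPrimitive_stdAddChar d) hm
    have hd : √(d : ℝ) ≠ 0 := by simp [NeZero.ne d]
    simp [u, hG, abs_of_nonneg (sqrt_nonneg _), hd]
  refine ⟨of fun a b ↦ if b = σ a then u a else 0, ⟨σ, u, hu, rfl⟩, ?_⟩
  ext a b
  have hphase : 𝕖 (-(c * (a : ZMod d) ^ 2)) *
      𝕖 (2 * c * (a : ZMod d) * (b : ZMod d) - (((1 + χ : ℕ) : ZMod d) - 1) * (b : ZMod d) ^ 2) =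
        𝕖 (-(c * ((a : ZMod d) - (b : ZMod d)) ^ 2)) := by
    rw [← AddChar.map_add_eq_mul]
    congr 1
    simp only [c]
    push_cast
    ring
  rw [conjTranspose_stdH_mul_stdH_apply, AddChar.sum_mul_sq_add_mul _ h]
  simp only [mul_apply, of_apply, ite_mul, zero_mul, sum_ite_eq', mem_univ, if_true]
  rw [conjTranspose_stdH_apply, hσ]
  linear_combination (-G * (1 / √d) * (1 / √d)) * hphase
    - G * 𝕖 (-(c * ((a : ZMod d) - (b : ZMod d)) ^ 2)) * one_div_sqrt_mul_one_div_sqrt d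

end Hadamard

theorem hadamard_product_monomial_general (d : ℕ) (hd : d.Prime) (j k : ℕ)
    (χ : ℕ) (hχ1 : (4 * ((j : ℤ) - (k : ℤ)) * (χ : ℤ)) ≡ 1 [ZMOD d]) :
    ∃ M : Matrix (Fin d) (Fin d) ℂ, IsMonomial M ∧
      (stdH d k)ᴴ * stdH d j = M * (stdH d (1 + χ))ᴴ := by
  have : NeZero d := ⟨hd.ne_zero⟩
  apply exists_isMonomial_conjTranspose_stdH_mul_stdH_eq
  exact_mod_cast (ZMod.intCast_eq_intCast_iff _ _ _).mpr hχ1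

/-- For an odd prime `d` and distinct `j, k ∈ {1,…,d}`,
`H_k† H_j = M H_t†` for some monomial matrix `M`, where `t = 1 + χ` and
`χ ∈ {0,…,d-1}` satisfies `4(j-k)χ ≡ 1 (mod d)`. -/
theorem hadamard_product_monomial (d : ℕ) (hd : d.Prime) (hodd : Odd d)
    (j k : ℕ) (hj1 : 1 ≤ j) (hjd : j ≤ d) (hk1 : 1 ≤ k) (hkd : k ≤ d) (hjk : j ≠ k)
    (χ : ℕ) (hχ : χ < d) (hχ1 : (4 * ((j : ℤ) - (k : ℤ)) * (χ : ℤ)) ≡ 1 [ZMOD d]) :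
    ∃ M : Matrix (Fin d) (Fin d) ℂ, IsMonomial M ∧
      (stdH d k)ᴴ * stdH d j = M * (stdH d (1 + χ))ᴴ :=
  hadamard_product_monomial_general d hd j k χ hχ1
end

section
/- For d = 3, a nonzero vector ψ ∈ ℂ³ satisfies Σ_{j=0}^{3} supp(H_j†ψ) = 8 if and only if ψ is a nonzero scalar multiple of one of the nine vectors (1, -ω^m, 0), (1, 0, -ω^m), (0, 1, -ω^m), m ∈ {0,1,2}, with ω = e^{2πi/3}. -/
open Complex Real Matrix

lemma qs_atmost1 {P Q R : Prop} [Decidable P] [Decidable Q] [Decidable R]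
    (hpq : ¬(¬P ∧ ¬Q)) (hpr : ¬(¬P ∧ ¬R)) (hqr : ¬(¬Q ∧ ¬R)) :
    2 ≤ (if P then 1 else 0) + (if Q then 1 else 0) + (if R then 1 else 0) := by
  by_cases hP : P <;> by_cases hQ : Q <;> by_cases hR : R <;> simp_all

lemma qs_conj_exp_int (n : ℤ) : (starRingEnd ℂ) (Complex.exp (2*Real.pi*Complex.I*((n:ℂ)/3))) =
    Complex.exp (2 * Real.pi * Complex.I / 3) ^ (-n) := by
  rw [← Complex.exp_conj, ← Complex.exp_int_mul]
  congr 1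
  simp [_root_.map_mul, map_div₀, Complex.conj_I, Complex.conj_ofReal, map_ofNat]
  ring

lemma qs_zpow_mod (n : ℤ) : Complex.exp (2 * Real.pi * Complex.I / 3) ^ n =
    Complex.exp (2 * Real.pi * Complex.I / 3) ^ (n % 3) := by
  set w : ℂ := Complex.exp (2 * Real.pi * Complex.I / 3) with hw
  have h3 : w ^ (3:ℕ) = 1 := (Complex.isPrimitiveRoot_exp 3 (by norm_num)).pow_eq_one
  have h0 : w ≠ 0 := Complex.exp_ne_zero _
  have h3' : w ^ (3:ℤ) = 1 := by rw [show (3:ℤ) = ((3:ℕ):ℤ) from rfl, zpow_natCast]; exact h3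
  calc w ^ n = w ^ (n % 3 + 3*(n/3)) := by rw [Int.emod_add_mul_ediv]
  _ = w ^ (n%3) * (w^(3:ℤ))^(n/3) := by rw [zpow_add₀ h0, _root_.zpow_mul]
  _ = w ^ (n%3) := by rw [h3', _root_.one_zpow, mul_one]

lemma qs_conj_stdH (j : ℕ) (x k : Fin 3) :
    (starRingEnd ℂ) (stdH 3 j x k) = (1 / Real.sqrt 3 : ℂ) *
      Complex.exp (2 * Real.pi * Complex.I / 3) ^ ((((k:ℤ)*(x:ℤ) - ((j:ℤ)-1)*(x:ℤ)^2) % 3).toNat) := by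
  rw [stdH]
  rw [_root_.map_mul]
  rw [show ((((((j : ℤ) - 1) * (x : ℤ) ^ 2 - (k : ℤ) * (x : ℤ) : ℤ) : ℂ)) / ((3:ℕ) : ℂ)) = ((((j : ℤ) - 1) * (x : ℤ) ^ 2 - (k : ℤ) * (x : ℤ) : ℤ):ℂ)/3 by norm_num]
  rw [qs_conj_exp_int]
  have hm : Complex.exp (2 * Real.pi * Complex.I / 3) ^ (-(((j : ℤ) - 1) * (x : ℤ) ^ 2 - (k : ℤ) * (x : ℤ))) =
      Complex.exp (2 * Real.pi * Complex.I / 3) ^ ((((k:ℤ)*(x:ℤ) - ((j:ℤ)-1)*(x:ℤ)^2) % 3).toNat) := by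
    rw [show (-(((j : ℤ) - 1) * (x : ℤ) ^ 2 - (k : ℤ) * (x : ℤ))) = ((k:ℤ)*(x:ℤ) - ((j:ℤ)-1)*(x:ℤ)^2) by ring, qs_zpow_mod]
    rw [← zpow_natCast, Int.toNat_of_nonneg (Int.emod_nonneg _ (by norm_num))]
  rw [hm]
  congr 1
  simp [map_div₀, Complex.conj_ofReal]

open Classical in
lemma qs_supp_eq (v : Fin 3 → ℂ) : supp v =
    (if v 0 ≠ 0 then 1 else 0) + (if v 1 ≠ 0 then 1 else 0) + (if v 2 ≠ 0 then 1 else 0) := by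
  rw [supp, Finset.card_filter, Fin.sum_univ_three]

open Classical in
lemma qs_core (ω : ℂ) (hprim : IsPrimitiveRoot ω 3) (a b c : ℂ)
    (hne : ¬(a = 0 ∧ b = 0 ∧ c = 0)) :
    ((if a ≠ 0 then 1 else 0) + (if b ≠ 0 then 1 else 0) + (if c ≠ 0 then 1 else 0) + ((if a + ω^0*b + ω^0*c ≠ 0 then 1 else 0) + (if a + ω^1*b + ω^2*c ≠ 0 then 1 else 0) + (if a + ω^2*b + ω^1*c ≠ 0 then 1 else 0)) + ((if a + ω^2*b + ω^2*c ≠ 0 then 1 else 0) + (if a + ω^0*b + ω^1*c ≠ 0 then 1 else 0) + (if a + ω^1*b + ω^0*c ≠ 0 then 1 else 0)) + ((if a + ω^1*b + ω^1*c ≠ 0 then 1 else 0) + (if a + ω^2*b + ω^0*c ≠ 0 then 1 else 0) + (if a + ω^0*b + ω^2*c ≠ 0 then 1 else 0)) = 8)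
    ↔ ∃ (e : ℂ) (m : ℕ), e ≠ 0 ∧ m < 3 ∧
      ((a = e ∧ b = -(e * ω^m) ∧ c = 0) ∨ (a = e ∧ b = 0 ∧ c = -(e * ω^m)) ∨
        (a = 0 ∧ b = e ∧ c = -(e * ω^m))) := by
  have hω0 : ω ≠ 0 := hprim.ne_zero (by norm_num)
  have hω3 : ω ^ 3 = 1 := hprim.pow_eq_one
  have hkey : ∀ e : ℂ, e ≠ 0 → ∀ p q : ℕ, p < 3 → q < 3 → p ≠ q → e * (ω^p - ω^q) ≠ 0 := by
    intro e he p q hp hq hpq h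
    rcases mul_eq_zero.mp h with h | h
    · exact he h
    · exact hpq (hprim.pow_inj hp hq (sub_eq_zero.mp h))
  constructor
  · intro hsum
    by_cases ha : a = 0 <;> by_cases hb : b = 0 <;> by_cases hc : c = 0
    · exact absurd ⟨ha, hb, hc⟩ hne
    · subst ha; subst hb
      simp only [mul_zero, add_zero, zero_add] at hsum
      have n0 : ω^0*c ≠ 0 := mul_ne_zero (pow_ne_zero _ hω0) hc
      have n1 : ω^1*c ≠ 0 := mul_ne_zero (pow_ne_zero _ hω0) hc
      have n2 : ω^2*c ≠ 0 := mul_ne_zero (pow_ne_zero _ hω0) hc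
      rw [if_neg (not_not_intro rfl), if_pos hc, if_pos n0, if_pos n1, if_pos n2] at hsum
      exfalso; omega
    · subst ha; subst hc
      simp only [mul_zero, add_zero, zero_add] at hsum
      have n0 : ω^0*b ≠ 0 := mul_ne_zero (pow_ne_zero _ hω0) hb
      have n1 : ω^1*b ≠ 0 := mul_ne_zero (pow_ne_zero _ hω0) hb
      have n2 : ω^2*b ≠ 0 := mul_ne_zero (pow_ne_zero _ hω0) hb
      rw [if_neg (not_not_intro rfl), if_pos hb, if_pos n0, if_pos n1, if_pos n2] at hsum
      exfalso; omega
    · subst ha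
      simp only [zero_add] at hsum
      have E00 : ω^0*b + ω^0*c = ω^0*(b + ω^0*c) := by ring
      have F00 : (ω^0*b + ω^0*c ≠ 0) ↔ (b + ω^0*c ≠ 0) := by
        rw [E00]; exact mul_ne_zero_iff.trans (and_iff_right (pow_ne_zero _ hω0))
      have E12 : ω^1*b + ω^2*c = ω^1*(b + ω^1*c) := by ring
      have F12 : (ω^1*b + ω^2*c ≠ 0) ↔ (b + ω^1*c ≠ 0) := by
        rw [E12]; exact mul_ne_zero_iff.trans (and_iff_right (pow_ne_zero _ hω0))
      have E21 : ω^2*b + ω^1*c = ω^2*(b + ω^2*c) := by linear_combination (-(c*ω^1)) * hω3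
      have F21 : (ω^2*b + ω^1*c ≠ 0) ↔ (b + ω^2*c ≠ 0) := by
        rw [E21]; exact mul_ne_zero_iff.trans (and_iff_right (pow_ne_zero _ hω0))
      have E22 : ω^2*b + ω^2*c = ω^2*(b + ω^0*c) := by ring
      have F22 : (ω^2*b + ω^2*c ≠ 0) ↔ (b + ω^0*c ≠ 0) := by
        rw [E22]; exact mul_ne_zero_iff.trans (and_iff_right (pow_ne_zero _ hω0))
      have E01 : ω^0*b + ω^1*c = ω^0*(b + ω^1*c) := by ring
      have F01 : (ω^0*b + ω^1*c ≠ 0) ↔ (b + ω^1*c ≠ 0) := by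
        rw [E01]; exact mul_ne_zero_iff.trans (and_iff_right (pow_ne_zero _ hω0))
      have E10 : ω^1*b + ω^0*c = ω^1*(b + ω^2*c) := by linear_combination (-(c*ω^0)) * hω3
      have F10 : (ω^1*b + ω^0*c ≠ 0) ↔ (b + ω^2*c ≠ 0) := by
        rw [E10]; exact mul_ne_zero_iff.trans (and_iff_right (pow_ne_zero _ hω0))
      have E11 : ω^1*b + ω^1*c = ω^1*(b + ω^0*c) := by ring
      have F11 : (ω^1*b + ω^1*c ≠ 0) ↔ (b + ω^0*c ≠ 0) := by
        rw [E11]; exact mul_ne_zero_iff.trans (and_iff_right (pow_ne_zero _ hω0))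
      have E20 : ω^2*b + ω^0*c = ω^2*(b + ω^1*c) := by linear_combination (-(c*ω^0)) * hω3
      have F20 : (ω^2*b + ω^0*c ≠ 0) ↔ (b + ω^1*c ≠ 0) := by
        rw [E20]; exact mul_ne_zero_iff.trans (and_iff_right (pow_ne_zero _ hω0))
      have E02 : ω^0*b + ω^2*c = ω^0*(b + ω^2*c) := by ring
      have F02 : (ω^0*b + ω^2*c ≠ 0) ↔ (b + ω^2*c ≠ 0) := by
        rw [E02]; exact mul_ne_zero_iff.trans (and_iff_right (pow_ne_zero _ hω0))
      simp only [F00, F12, F21, F22, F01, F10, F11, F20, F02] at hsum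
      by_cases h0 : b + ω^0*c = 0
      · exact ⟨b, 0, hb, by norm_num, Or.inr (Or.inr ⟨rfl, rfl, by linear_combination h0⟩)⟩
      by_cases h1 : b + ω^1*c = 0
      · exact ⟨b, 2, hb, by norm_num, Or.inr (Or.inr ⟨rfl, rfl, by linear_combination ω^2*h1 - c*hω3⟩)⟩
      by_cases h2 : b + ω^2*c = 0
      · exact ⟨b, 1, hb, by norm_num, Or.inr (Or.inr ⟨rfl, rfl, by linear_combination ω*h2 - c*hω3⟩)⟩
      · rw [if_neg (not_not_intro rfl), if_pos hb, if_pos hc, if_pos h0, if_pos h1, if_pos h2] at hsum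
        exfalso; omega
    · subst hb; subst hc
      simp only [mul_zero, add_zero] at hsum
      rw [if_pos ha, if_neg (not_not_intro rfl)] at hsum
      exfalso; omega
    · subst hb
      simp only [mul_zero, add_zero] at hsum
      by_cases h0 : a + ω^0*c = 0
      · exact ⟨a, 0, ha, by norm_num, Or.inr (Or.inl ⟨rfl, rfl, by linear_combination h0⟩)⟩
      by_cases h1 : a + ω^1*c = 0
      · exact ⟨a, 2, ha, by norm_num, Or.inr (Or.inl ⟨rfl, rfl, by linear_combination ω^2*h1 - c*hω3⟩)⟩
      by_cases h2 : a + ω^2*c = 0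
      · exact ⟨a, 1, ha, by norm_num, Or.inr (Or.inl ⟨rfl, rfl, by linear_combination ω*h2 - c*hω3⟩)⟩
      · rw [if_pos ha, if_neg (not_not_intro rfl), if_pos hc, if_pos h0, if_pos h1, if_pos h2] at hsum
        exfalso; omega
    · subst hc
      simp only [mul_zero, add_zero] at hsum
      by_cases h0 : a + ω^0*b = 0
      · exact ⟨a, 0, ha, by norm_num, Or.inl ⟨rfl, by linear_combination h0, rfl⟩⟩
      by_cases h1 : a + ω^1*b = 0
      · exact ⟨a, 2, ha, by norm_num, Or.inl ⟨rfl, by linear_combination ω^2*h1 - b*hω3, rfl⟩⟩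
      by_cases h2 : a + ω^2*b = 0
      · exact ⟨a, 1, ha, by norm_num, Or.inl ⟨rfl, by linear_combination ω*h2 - b*hω3, rfl⟩⟩
      · rw [if_pos ha, if_pos hb, if_neg (not_not_intro rfl), if_pos h0, if_pos h1, if_pos h2] at hsum
        exfalso; omega
    · exfalso
      rw [if_pos ha, if_pos hb, if_pos hc] at hsum
      have p001 : ¬(¬(a + ω^0*b + ω^0*c ≠ 0) ∧ ¬(a + ω^0*b + ω^1*c ≠ 0)) := by
        rintro ⟨h, h'⟩
        exact hkey c hc 0 1 (by norm_num) (by norm_num) (by norm_num) (by linear_combination (not_not.mp h) - (not_not.mp h'))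
      have p002 : ¬(¬(a + ω^0*b + ω^0*c ≠ 0) ∧ ¬(a + ω^0*b + ω^2*c ≠ 0)) := by
        rintro ⟨h, h'⟩
        exact hkey c hc 0 2 (by norm_num) (by norm_num) (by norm_num) (by linear_combination (not_not.mp h) - (not_not.mp h'))
      have p012 : ¬(¬(a + ω^0*b + ω^1*c ≠ 0) ∧ ¬(a + ω^0*b + ω^2*c ≠ 0)) := by
        rintro ⟨h, h'⟩
        exact hkey c hc 1 2 (by norm_num) (by norm_num) (by norm_num) (by linear_combination (not_not.mp h) - (not_not.mp h'))
      have p101 : ¬(¬(a + ω^1*b + ω^0*c ≠ 0) ∧ ¬(a + ω^1*b + ω^1*c ≠ 0)) := by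
        rintro ⟨h, h'⟩
        exact hkey c hc 0 1 (by norm_num) (by norm_num) (by norm_num) (by linear_combination (not_not.mp h) - (not_not.mp h'))
      have p102 : ¬(¬(a + ω^1*b + ω^0*c ≠ 0) ∧ ¬(a + ω^1*b + ω^2*c ≠ 0)) := by
        rintro ⟨h, h'⟩
        exact hkey c hc 0 2 (by norm_num) (by norm_num) (by norm_num) (by linear_combination (not_not.mp h) - (not_not.mp h'))
      have p112 : ¬(¬(a + ω^1*b + ω^1*c ≠ 0) ∧ ¬(a + ω^1*b + ω^2*c ≠ 0)) := by
        rintro ⟨h, h'⟩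
        exact hkey c hc 1 2 (by norm_num) (by norm_num) (by norm_num) (by linear_combination (not_not.mp h) - (not_not.mp h'))
      have p201 : ¬(¬(a + ω^2*b + ω^0*c ≠ 0) ∧ ¬(a + ω^2*b + ω^1*c ≠ 0)) := by
        rintro ⟨h, h'⟩
        exact hkey c hc 0 1 (by norm_num) (by norm_num) (by norm_num) (by linear_combination (not_not.mp h) - (not_not.mp h'))
      have p202 : ¬(¬(a + ω^2*b + ω^0*c ≠ 0) ∧ ¬(a + ω^2*b + ω^2*c ≠ 0)) := by
        rintro ⟨h, h'⟩
        exact hkey c hc 0 2 (by norm_num) (by norm_num) (by norm_num) (by linear_combination (not_not.mp h) - (not_not.mp h'))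
      have p212 : ¬(¬(a + ω^2*b + ω^1*c ≠ 0) ∧ ¬(a + ω^2*b + ω^2*c ≠ 0)) := by
        rintro ⟨h, h'⟩
        exact hkey c hc 1 2 (by norm_num) (by norm_num) (by norm_num) (by linear_combination (not_not.mp h) - (not_not.mp h'))
      have cl0 : 2 ≤ (if a + ω^0*b + ω^0*c ≠ 0 then 1 else 0) + (if a + ω^0*b + ω^1*c ≠ 0 then 1 else 0) + (if a + ω^0*b + ω^2*c ≠ 0 then 1 else 0) := qs_atmost1 p001 p002 p012
      have cl1 : 2 ≤ (if a + ω^1*b + ω^0*c ≠ 0 then 1 else 0) + (if a + ω^1*b + ω^1*c ≠ 0 then 1 else 0) + (if a + ω^1*b + ω^2*c ≠ 0 then 1 else 0) := qs_atmost1 p101 p102 p112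
      have cl2 : 2 ≤ (if a + ω^2*b + ω^0*c ≠ 0 then 1 else 0) + (if a + ω^2*b + ω^1*c ≠ 0 then 1 else 0) + (if a + ω^2*b + ω^2*c ≠ 0 then 1 else 0) := qs_atmost1 p201 p202 p212
      set x00 := (if a + ω^0*b + ω^0*c ≠ 0 then 1 else 0) with hx00
      set x12 := (if a + ω^1*b + ω^2*c ≠ 0 then 1 else 0) with hx12
      set x21 := (if a + ω^2*b + ω^1*c ≠ 0 then 1 else 0) with hx21
      set x22 := (if a + ω^2*b + ω^2*c ≠ 0 then 1 else 0) with hx22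
      set x01 := (if a + ω^0*b + ω^1*c ≠ 0 then 1 else 0) with hx01
      set x10 := (if a + ω^1*b + ω^0*c ≠ 0 then 1 else 0) with hx10
      set x11 := (if a + ω^1*b + ω^1*c ≠ 0 then 1 else 0) with hx11
      set x20 := (if a + ω^2*b + ω^0*c ≠ 0 then 1 else 0) with hx20
      set x02 := (if a + ω^0*b + ω^2*c ≠ 0 then 1 else 0) with hx02
      omega
  · rintro ⟨e, m, he, hm, H⟩
    rcases H with ⟨h1, h2, h3⟩ | ⟨h1, h2, h3⟩ | ⟨h1, h2, h3⟩ <;> subst h1 <;> subst h2 <;> subst h3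
    · interval_cases m
      · have hB : -(a * ω ^ 0) ≠ 0 := neg_ne_zero.mpr (mul_ne_zero he (pow_ne_zero _ hω0))
        simp only [mul_zero, add_zero]
        have z0 : a + ω ^ 0 * -(a * ω ^ 0) = 0 := by ring
        have n1 : a + ω ^ 1 * -(a * ω ^ 0) ≠ 0 := fun H => hkey a he 0 1 (by norm_num) (by norm_num) (by norm_num) (by linear_combination H)
        have n2 : a + ω ^ 2 * -(a * ω ^ 0) ≠ 0 := fun H => hkey a he 0 2 (by norm_num) (by norm_num) (by norm_num) (by linear_combination H)
        rw [if_pos he, if_pos hB, if_neg (not_not_intro rfl), if_pos n1, if_pos n2, if_neg (not_not_intro z0)]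
      · have hB : -(a * ω ^ 1) ≠ 0 := neg_ne_zero.mpr (mul_ne_zero he (pow_ne_zero _ hω0))
        simp only [mul_zero, add_zero]
        have n0 : a + ω ^ 0 * -(a * ω ^ 1) ≠ 0 := fun H => hkey a he 0 1 (by norm_num) (by norm_num) (by norm_num) (by linear_combination H)
        have n1 : a + ω ^ 1 * -(a * ω ^ 1) ≠ 0 := fun H => hkey a he 0 2 (by norm_num) (by norm_num) (by norm_num) (by linear_combination H)
        have z2 : a + ω ^ 2 * -(a * ω ^ 1) = 0 := by linear_combination (-a) * hω3
        rw [if_pos he, if_pos hB, if_neg (not_not_intro rfl), if_pos n0, if_pos n1, if_neg (not_not_intro z2)]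
      · have hB : -(a * ω ^ 2) ≠ 0 := neg_ne_zero.mpr (mul_ne_zero he (pow_ne_zero _ hω0))
        simp only [mul_zero, add_zero]
        have n0 : a + ω ^ 0 * -(a * ω ^ 2) ≠ 0 := fun H => hkey a he 0 2 (by norm_num) (by norm_num) (by norm_num) (by linear_combination H)
        have z1 : a + ω ^ 1 * -(a * ω ^ 2) = 0 := by linear_combination (-a) * hω3
        have n2 : a + ω ^ 2 * -(a * ω ^ 2) ≠ 0 := fun H => hkey a he 0 1 (by norm_num) (by norm_num) (by norm_num) (by linear_combination H + (a*ω^1)*hω3)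
        rw [if_pos he, if_pos hB, if_neg (not_not_intro rfl), if_pos n0, if_pos n2, if_neg (not_not_intro z1)]
    · interval_cases m
      · have hB : -(a * ω ^ 0) ≠ 0 := neg_ne_zero.mpr (mul_ne_zero he (pow_ne_zero _ hω0))
        simp only [mul_zero, add_zero]
        have z0 : a + ω ^ 0 * -(a * ω ^ 0) = 0 := by ring
        have n1 : a + ω ^ 1 * -(a * ω ^ 0) ≠ 0 := fun H => hkey a he 0 1 (by norm_num) (by norm_num) (by norm_num) (by linear_combination H)
        have n2 : a + ω ^ 2 * -(a * ω ^ 0) ≠ 0 := fun H => hkey a he 0 2 (by norm_num) (by norm_num) (by norm_num) (by linear_combination H)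
        rw [if_pos he, if_pos hB, if_neg (not_not_intro rfl), if_pos n1, if_pos n2, if_neg (not_not_intro z0)]
      · have hB : -(a * ω ^ 1) ≠ 0 := neg_ne_zero.mpr (mul_ne_zero he (pow_ne_zero _ hω0))
        simp only [mul_zero, add_zero]
        have n0 : a + ω ^ 0 * -(a * ω ^ 1) ≠ 0 := fun H => hkey a he 0 1 (by norm_num) (by norm_num) (by norm_num) (by linear_combination H)
        have n1 : a + ω ^ 1 * -(a * ω ^ 1) ≠ 0 := fun H => hkey a he 0 2 (by norm_num) (by norm_num) (by norm_num) (by linear_combination H)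
        have z2 : a + ω ^ 2 * -(a * ω ^ 1) = 0 := by linear_combination (-a) * hω3
        rw [if_pos he, if_pos hB, if_neg (not_not_intro rfl), if_pos n0, if_pos n1, if_neg (not_not_intro z2)]
      · have hB : -(a * ω ^ 2) ≠ 0 := neg_ne_zero.mpr (mul_ne_zero he (pow_ne_zero _ hω0))
        simp only [mul_zero, add_zero]
        have n0 : a + ω ^ 0 * -(a * ω ^ 2) ≠ 0 := fun H => hkey a he 0 2 (by norm_num) (by norm_num) (by norm_num) (by linear_combination H)
        have z1 : a + ω ^ 1 * -(a * ω ^ 2) = 0 := by linear_combination (-a) * hω3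
        have n2 : a + ω ^ 2 * -(a * ω ^ 2) ≠ 0 := fun H => hkey a he 0 1 (by norm_num) (by norm_num) (by norm_num) (by linear_combination H + (a*ω^1)*hω3)
        rw [if_pos he, if_pos hB, if_neg (not_not_intro rfl), if_pos n0, if_pos n2, if_neg (not_not_intro z1)]
    · interval_cases m
      · have hB : -(b * ω ^ 0) ≠ 0 := neg_ne_zero.mpr (mul_ne_zero he (pow_ne_zero _ hω0))
        simp only [zero_add]
        have z00 : ω ^ 0 * b + ω ^ 0 * -(b * ω ^ 0) = 0 := by ring
        have n01 : ω ^ 0 * b + ω ^ 1 * -(b * ω ^ 0) ≠ 0 := fun H => hkey b he 0 1 (by norm_num) (by norm_num) (by norm_num) (by linear_combination H)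
        have n02 : ω ^ 0 * b + ω ^ 2 * -(b * ω ^ 0) ≠ 0 := fun H => hkey b he 0 2 (by norm_num) (by norm_num) (by norm_num) (by linear_combination H)
        have n10 : ω ^ 1 * b + ω ^ 0 * -(b * ω ^ 0) ≠ 0 := fun H => hkey b he 1 0 (by norm_num) (by norm_num) (by norm_num) (by linear_combination H)
        have z11 : ω ^ 1 * b + ω ^ 1 * -(b * ω ^ 0) = 0 := by ring
        have n12 : ω ^ 1 * b + ω ^ 2 * -(b * ω ^ 0) ≠ 0 := fun H => hkey b he 1 2 (by norm_num) (by norm_num) (by norm_num) (by linear_combination H)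
        have n20 : ω ^ 2 * b + ω ^ 0 * -(b * ω ^ 0) ≠ 0 := fun H => hkey b he 2 0 (by norm_num) (by norm_num) (by norm_num) (by linear_combination H)
        have n21 : ω ^ 2 * b + ω ^ 1 * -(b * ω ^ 0) ≠ 0 := fun H => hkey b he 2 1 (by norm_num) (by norm_num) (by norm_num) (by linear_combination H)
        have z22 : ω ^ 2 * b + ω ^ 2 * -(b * ω ^ 0) = 0 := by ring
        rw [if_neg (not_not_intro rfl), if_pos he, if_pos hB, if_neg (not_not_intro z00), if_pos n01, if_pos n02, if_pos n10, if_neg (not_not_intro z11), if_pos n12, if_pos n20, if_pos n21, if_neg (not_not_intro z22)]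
      · have hB : -(b * ω ^ 1) ≠ 0 := neg_ne_zero.mpr (mul_ne_zero he (pow_ne_zero _ hω0))
        simp only [zero_add]
        have n00 : ω ^ 0 * b + ω ^ 0 * -(b * ω ^ 1) ≠ 0 := fun H => hkey b he 0 1 (by norm_num) (by norm_num) (by norm_num) (by linear_combination H)
        have n01 : ω ^ 0 * b + ω ^ 1 * -(b * ω ^ 1) ≠ 0 := fun H => hkey b he 0 2 (by norm_num) (by norm_num) (by norm_num) (by linear_combination H)
        have z02 : ω ^ 0 * b + ω ^ 2 * -(b * ω ^ 1) = 0 := by linear_combination (-(b*ω^0)) * hω3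
        have z10 : ω ^ 1 * b + ω ^ 0 * -(b * ω ^ 1) = 0 := by ring
        have n11 : ω ^ 1 * b + ω ^ 1 * -(b * ω ^ 1) ≠ 0 := fun H => hkey b he 1 2 (by norm_num) (by norm_num) (by norm_num) (by linear_combination H)
        have n12 : ω ^ 1 * b + ω ^ 2 * -(b * ω ^ 1) ≠ 0 := fun H => hkey b he 1 0 (by norm_num) (by norm_num) (by norm_num) (by linear_combination H + (b*ω^0)*hω3)
        have n20 : ω ^ 2 * b + ω ^ 0 * -(b * ω ^ 1) ≠ 0 := fun H => hkey b he 2 1 (by norm_num) (by norm_num) (by norm_num) (by linear_combination H)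
        have z21 : ω ^ 2 * b + ω ^ 1 * -(b * ω ^ 1) = 0 := by ring
        have n22 : ω ^ 2 * b + ω ^ 2 * -(b * ω ^ 1) ≠ 0 := fun H => hkey b he 2 0 (by norm_num) (by norm_num) (by norm_num) (by linear_combination H + (b*ω^0)*hω3)
        rw [if_neg (not_not_intro rfl), if_pos he, if_pos hB, if_pos n00, if_pos n01, if_neg (not_not_intro z02), if_neg (not_not_intro z10), if_pos n11, if_pos n12, if_pos n20, if_neg (not_not_intro z21), if_pos n22]
      · have hB : -(b * ω ^ 2) ≠ 0 := neg_ne_zero.mpr (mul_ne_zero he (pow_ne_zero _ hω0))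
        simp only [zero_add]
        have n00 : ω ^ 0 * b + ω ^ 0 * -(b * ω ^ 2) ≠ 0 := fun H => hkey b he 0 2 (by norm_num) (by norm_num) (by norm_num) (by linear_combination H)
        have z01 : ω ^ 0 * b + ω ^ 1 * -(b * ω ^ 2) = 0 := by linear_combination (-(b*ω^0)) * hω3
        have n02 : ω ^ 0 * b + ω ^ 2 * -(b * ω ^ 2) ≠ 0 := fun H => hkey b he 0 1 (by norm_num) (by norm_num) (by norm_num) (by linear_combination H + (b*ω^1)*hω3)
        have n10 : ω ^ 1 * b + ω ^ 0 * -(b * ω ^ 2) ≠ 0 := fun H => hkey b he 1 2 (by norm_num) (by norm_num) (by norm_num) (by linear_combination H)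
        have n11 : ω ^ 1 * b + ω ^ 1 * -(b * ω ^ 2) ≠ 0 := fun H => hkey b he 1 0 (by norm_num) (by norm_num) (by norm_num) (by linear_combination H + (b*ω^0)*hω3)
        have z12 : ω ^ 1 * b + ω ^ 2 * -(b * ω ^ 2) = 0 := by linear_combination (-(b*ω^1)) * hω3
        have z20 : ω ^ 2 * b + ω ^ 0 * -(b * ω ^ 2) = 0 := by ring
        have n21 : ω ^ 2 * b + ω ^ 1 * -(b * ω ^ 2) ≠ 0 := fun H => hkey b he 2 0 (by norm_num) (by norm_num) (by norm_num) (by linear_combination H + (b*ω^0)*hω3)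
        have n22 : ω ^ 2 * b + ω ^ 2 * -(b * ω ^ 2) ≠ 0 := fun H => hkey b he 2 1 (by norm_num) (by norm_num) (by norm_num) (by linear_combination H + (b*ω^1)*hω3)
        rw [if_neg (not_not_intro rfl), if_pos he, if_pos hB, if_pos n00, if_neg (not_not_intro z01), if_pos n02, if_pos n10, if_pos n11, if_neg (not_not_intro z12), if_neg (not_not_intro z20), if_pos n21, if_pos n22]

open Classical in
lemma qs_supp_H1 (ψ : Fin 3 → ℂ) :
    supp ((stdH 3 1)ᴴ.mulVec ψ) = (if ψ 0 + (Complex.exp (2 * Real.pi * Complex.I / 3))^0*ψ 1 + (Complex.exp (2 * Real.pi * Complex.I / 3))^0*ψ 2 ≠ 0 then 1 else 0) + (if ψ 0 + (Complex.exp (2 * Real.pi * Complex.I / 3))^1*ψ 1 + (Complex.exp (2 * Real.pi * Complex.I / 3))^2*ψ 2 ≠ 0 then 1 else 0) + (if ψ 0 + (Complex.exp (2 * Real.pi * Complex.I / 3))^2*ψ 1 + (Complex.exp (2 * Real.pi * Complex.I / 3))^1*ψ 2 ≠ 0 then 1 else 0) := by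
  have hs : ((Real.sqrt 3 : ℝ) : ℂ) ≠ 0 := Complex.ofReal_ne_zero.mpr (by positivity)
  have E0 : ((stdH 3 1)ᴴ.mulVec ψ) 0 = (1 / Real.sqrt 3 : ℂ) * (ψ 0 + (Complex.exp (2 * Real.pi * Complex.I / 3))^0*ψ 1 + (Complex.exp (2 * Real.pi * Complex.I / 3))^0*ψ 2) := by
    simp [Matrix.mulVec, dotProduct, Matrix.conjTranspose_apply, Fin.sum_univ_three, qs_conj_stdH]
    ring
  have E1 : ((stdH 3 1)ᴴ.mulVec ψ) 1 = (1 / Real.sqrt 3 : ℂ) * (ψ 0 + (Complex.exp (2 * Real.pi * Complex.I / 3))^1*ψ 1 + (Complex.exp (2 * Real.pi * Complex.I / 3))^2*ψ 2) := by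
    simp [Matrix.mulVec, dotProduct, Matrix.conjTranspose_apply, Fin.sum_univ_three, qs_conj_stdH]
    ring
  have E2 : ((stdH 3 1)ᴴ.mulVec ψ) 2 = (1 / Real.sqrt 3 : ℂ) * (ψ 0 + (Complex.exp (2 * Real.pi * Complex.I / 3))^2*ψ 1 + (Complex.exp (2 * Real.pi * Complex.I / 3))^1*ψ 2) := by
    simp [Matrix.mulVec, dotProduct, Matrix.conjTranspose_apply, Fin.sum_univ_three, qs_conj_stdH]
    ring
  rw [qs_supp_eq]
  rw [if_congr (show ((stdH 3 1)ᴴ.mulVec ψ) 0 ≠ 0 ↔ (ψ 0 + (Complex.exp (2 * Real.pi * Complex.I / 3))^0*ψ 1 + (Complex.exp (2 * Real.pi * Complex.I / 3))^0*ψ 2 ≠ 0) from by rw [E0]; exact mul_ne_zero_iff.trans (and_iff_right (one_div_ne_zero hs))) rfl rfl]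
  rw [if_congr (show ((stdH 3 1)ᴴ.mulVec ψ) 1 ≠ 0 ↔ (ψ 0 + (Complex.exp (2 * Real.pi * Complex.I / 3))^1*ψ 1 + (Complex.exp (2 * Real.pi * Complex.I / 3))^2*ψ 2 ≠ 0) from by rw [E1]; exact mul_ne_zero_iff.trans (and_iff_right (one_div_ne_zero hs))) rfl rfl]
  rw [if_congr (show ((stdH 3 1)ᴴ.mulVec ψ) 2 ≠ 0 ↔ (ψ 0 + (Complex.exp (2 * Real.pi * Complex.I / 3))^2*ψ 1 + (Complex.exp (2 * Real.pi * Complex.I / 3))^1*ψ 2 ≠ 0) from by rw [E2]; exact mul_ne_zero_iff.trans (and_iff_right (one_div_ne_zero hs))) rfl rfl]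

open Classical in
lemma qs_supp_H2 (ψ : Fin 3 → ℂ) :
    supp ((stdH 3 2)ᴴ.mulVec ψ) = (if ψ 0 + (Complex.exp (2 * Real.pi * Complex.I / 3))^2*ψ 1 + (Complex.exp (2 * Real.pi * Complex.I / 3))^2*ψ 2 ≠ 0 then 1 else 0) + (if ψ 0 + (Complex.exp (2 * Real.pi * Complex.I / 3))^0*ψ 1 + (Complex.exp (2 * Real.pi * Complex.I / 3))^1*ψ 2 ≠ 0 then 1 else 0) + (if ψ 0 + (Complex.exp (2 * Real.pi * Complex.I / 3))^1*ψ 1 + (Complex.exp (2 * Real.pi * Complex.I / 3))^0*ψ 2 ≠ 0 then 1 else 0) := by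
  have hs : ((Real.sqrt 3 : ℝ) : ℂ) ≠ 0 := Complex.ofReal_ne_zero.mpr (by positivity)
  have E0 : ((stdH 3 2)ᴴ.mulVec ψ) 0 = (1 / Real.sqrt 3 : ℂ) * (ψ 0 + (Complex.exp (2 * Real.pi * Complex.I / 3))^2*ψ 1 + (Complex.exp (2 * Real.pi * Complex.I / 3))^2*ψ 2) := by
    simp [Matrix.mulVec, dotProduct, Matrix.conjTranspose_apply, Fin.sum_univ_three, qs_conj_stdH]
    ring
  have E1 : ((stdH 3 2)ᴴ.mulVec ψ) 1 = (1 / Real.sqrt 3 : ℂ) * (ψ 0 + (Complex.exp (2 * Real.pi * Complex.I / 3))^0*ψ 1 + (Complex.exp (2 * Real.pi * Complex.I / 3))^1*ψ 2) := by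
    simp [Matrix.mulVec, dotProduct, Matrix.conjTranspose_apply, Fin.sum_univ_three, qs_conj_stdH]
    ring
  have E2 : ((stdH 3 2)ᴴ.mulVec ψ) 2 = (1 / Real.sqrt 3 : ℂ) * (ψ 0 + (Complex.exp (2 * Real.pi * Complex.I / 3))^1*ψ 1 + (Complex.exp (2 * Real.pi * Complex.I / 3))^0*ψ 2) := by
    simp [Matrix.mulVec, dotProduct, Matrix.conjTranspose_apply, Fin.sum_univ_three, qs_conj_stdH]
    ring
  rw [qs_supp_eq]
  rw [if_congr (show ((stdH 3 2)ᴴ.mulVec ψ) 0 ≠ 0 ↔ (ψ 0 + (Complex.exp (2 * Real.pi * Complex.I / 3))^2*ψ 1 + (Complex.exp (2 * Real.pi * Complex.I / 3))^2*ψ 2 ≠ 0) from by rw [E0]; exact mul_ne_zero_iff.trans (and_iff_right (one_div_ne_zero hs))) rfl rfl]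
  rw [if_congr (show ((stdH 3 2)ᴴ.mulVec ψ) 1 ≠ 0 ↔ (ψ 0 + (Complex.exp (2 * Real.pi * Complex.I / 3))^0*ψ 1 + (Complex.exp (2 * Real.pi * Complex.I / 3))^1*ψ 2 ≠ 0) from by rw [E1]; exact mul_ne_zero_iff.trans (and_iff_right (one_div_ne_zero hs))) rfl rfl]
  rw [if_congr (show ((stdH 3 2)ᴴ.mulVec ψ) 2 ≠ 0 ↔ (ψ 0 + (Complex.exp (2 * Real.pi * Complex.I / 3))^1*ψ 1 + (Complex.exp (2 * Real.pi * Complex.I / 3))^0*ψ 2 ≠ 0) from by rw [E2]; exact mul_ne_zero_iff.trans (and_iff_right (one_div_ne_zero hs))) rfl rfl]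

open Classical in
lemma qs_supp_H3 (ψ : Fin 3 → ℂ) :
    supp ((stdH 3 3)ᴴ.mulVec ψ) = (if ψ 0 + (Complex.exp (2 * Real.pi * Complex.I / 3))^1*ψ 1 + (Complex.exp (2 * Real.pi * Complex.I / 3))^1*ψ 2 ≠ 0 then 1 else 0) + (if ψ 0 + (Complex.exp (2 * Real.pi * Complex.I / 3))^2*ψ 1 + (Complex.exp (2 * Real.pi * Complex.I / 3))^0*ψ 2 ≠ 0 then 1 else 0) + (if ψ 0 + (Complex.exp (2 * Real.pi * Complex.I / 3))^0*ψ 1 + (Complex.exp (2 * Real.pi * Complex.I / 3))^2*ψ 2 ≠ 0 then 1 else 0) := by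
  have hs : ((Real.sqrt 3 : ℝ) : ℂ) ≠ 0 := Complex.ofReal_ne_zero.mpr (by positivity)
  have E0 : ((stdH 3 3)ᴴ.mulVec ψ) 0 = (1 / Real.sqrt 3 : ℂ) * (ψ 0 + (Complex.exp (2 * Real.pi * Complex.I / 3))^1*ψ 1 + (Complex.exp (2 * Real.pi * Complex.I / 3))^1*ψ 2) := by
    simp [Matrix.mulVec, dotProduct, Matrix.conjTranspose_apply, Fin.sum_univ_three, qs_conj_stdH]
    ring
  have E1 : ((stdH 3 3)ᴴ.mulVec ψ) 1 = (1 / Real.sqrt 3 : ℂ) * (ψ 0 + (Complex.exp (2 * Real.pi * Complex.I / 3))^2*ψ 1 + (Complex.exp (2 * Real.pi * Complex.I / 3))^0*ψ 2) := by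
    simp [Matrix.mulVec, dotProduct, Matrix.conjTranspose_apply, Fin.sum_univ_three, qs_conj_stdH]
    ring
  have E2 : ((stdH 3 3)ᴴ.mulVec ψ) 2 = (1 / Real.sqrt 3 : ℂ) * (ψ 0 + (Complex.exp (2 * Real.pi * Complex.I / 3))^0*ψ 1 + (Complex.exp (2 * Real.pi * Complex.I / 3))^2*ψ 2) := by
    simp [Matrix.mulVec, dotProduct, Matrix.conjTranspose_apply, Fin.sum_univ_three, qs_conj_stdH]
    ring
  rw [qs_supp_eq]
  rw [if_congr (show ((stdH 3 3)ᴴ.mulVec ψ) 0 ≠ 0 ↔ (ψ 0 + (Complex.exp (2 * Real.pi * Complex.I / 3))^1*ψ 1 + (Complex.exp (2 * Real.pi * Complex.I / 3))^1*ψ 2 ≠ 0) from by rw [E0]; exact mul_ne_zero_iff.trans (and_iff_right (one_div_ne_zero hs))) rfl rfl]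
  rw [if_congr (show ((stdH 3 3)ᴴ.mulVec ψ) 1 ≠ 0 ↔ (ψ 0 + (Complex.exp (2 * Real.pi * Complex.I / 3))^2*ψ 1 + (Complex.exp (2 * Real.pi * Complex.I / 3))^0*ψ 2 ≠ 0) from by rw [E1]; exact mul_ne_zero_iff.trans (and_iff_right (one_div_ne_zero hs))) rfl rfl]
  rw [if_congr (show ((stdH 3 3)ᴴ.mulVec ψ) 2 ≠ 0 ↔ (ψ 0 + (Complex.exp (2 * Real.pi * Complex.I / 3))^0*ψ 1 + (Complex.exp (2 * Real.pi * Complex.I / 3))^2*ψ 2 ≠ 0) from by rw [E2]; exact mul_ne_zero_iff.trans (and_iff_right (one_div_ne_zero hs))) rfl rfl]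

/-- For `d = 3`, a nonzero `ψ ∈ ℂ³` has total support 8 over the four standard MU bases
iff it is a nonzero multiple of one of the nine vectors
`(1, -ω^m, 0)`, `(1, 0, -ω^m)`, `(0, 1, -ω^m)`, `m ∈ {0,1,2}`, `ω = e^{2πi/3}`. -/
theorem qutrit_saturation_characterisation (ψ : Fin 3 → ℂ) (hψ : ψ ≠ 0) :
    (∑ j ∈ Finset.range 4, supp ((stdB 3 j)ᴴ.mulVec ψ) = 8) ↔
    ∃ (c : ℂ) (m : ℕ), c ≠ 0 ∧ m < 3 ∧
      (ψ = c • ![1, -(Complex.exp (2 * Real.pi * Complex.I / 3)) ^ m, 0] ∨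
       ψ = c • ![1, 0, -(Complex.exp (2 * Real.pi * Complex.I / 3)) ^ m] ∨
       ψ = c • ![0, 1, -(Complex.exp (2 * Real.pi * Complex.I / 3)) ^ m]) := by
  have hne : ¬(ψ 0 = 0 ∧ ψ 1 = 0 ∧ ψ 2 = 0) := by
    rintro ⟨h0, h1, h2⟩
    apply hψ
    funext i
    fin_cases i <;> simpa
  rw [Finset.sum_range_succ, Finset.sum_range_succ, Finset.sum_range_succ, Finset.sum_range_one]
  rw [show (stdB 3 0)ᴴ.mulVec ψ = ψ from by
    rw [show stdB 3 0 = (1 : Matrix (Fin 3) (Fin 3) ℂ) from rfl, Matrix.conjTranspose_one,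
      Matrix.one_mulVec]]
  rw [show stdB 3 1 = stdH 3 1 from rfl, show stdB 3 2 = stdH 3 2 from rfl,
    show stdB 3 3 = stdH 3 3 from rfl]
  rw [qs_supp_eq ψ, qs_supp_H1 ψ, qs_supp_H2 ψ, qs_supp_H3 ψ]
  rw [qs_core (Complex.exp (2 * Real.pi * Complex.I / 3))
    (Complex.isPrimitiveRoot_exp 3 (by norm_num)) (ψ 0) (ψ 1) (ψ 2) hne]
  constructor
  · rintro ⟨e, m, he, hm, (⟨h1, h2, h3⟩ | ⟨h1, h2, h3⟩ | ⟨h1, h2, h3⟩)⟩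
    · exact ⟨e, m, he, hm, Or.inl (by funext i; fin_cases i <;> simp [h1, h2, h3])⟩
    · exact ⟨e, m, he, hm, Or.inr (Or.inl (by funext i; fin_cases i <;> simp [h1, h2, h3]))⟩
    · exact ⟨e, m, he, hm, Or.inr (Or.inr (by funext i; fin_cases i <;> simp [h1, h2, h3]))⟩
  · rintro ⟨cc, m, hc, hm, (H | H | H)⟩
    · exact ⟨cc, m, hc, hm, Or.inl ⟨by rw [H]; simp, by rw [H]; simp, by rw [H]; simp⟩⟩
    · exact ⟨cc, m, hc, hm, Or.inr (Or.inl ⟨by rw [H]; simp, by rw [H]; simp, by rw [H]; simp⟩)⟩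
    · exact ⟨cc, m, hc, hm, Or.inr (Or.inr ⟨by rw [H]; simp, by rw [H]; simp, by rw [H]; simp⟩)⟩
end

section
/- Let d > 3 be prime and suppose ψ ∈ ℂ^d has supp(ψ) = supp(H_{j1}†ψ) = supp(H_{j2}†ψ) = (d+1)/2 for distinct nonzero labels j1 > j2. Then the zero sets Z^{j1} = {κ : ⟨φ_κ^{j1}|ψ⟩ = 0} and Z^{j2} = {κ : ⟨φ_κ^{j2}|ψ⟩ = 0} are not related by a cyclic shift modulo d. -/
open Complex Real Matrix

section ZDAux

open Polynomial

lemma sparse_aux {p : ℕ} (hp : p.Prime) :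
    ∀ (c : ℕ) (f : (ZMod p)[X]), f.support.card = c → f ≠ 0 → f.natDegree < p →
      ¬ ((X - 1) ^ c ∣ f) := by
  haveI : Fact p.Prime := ⟨hp⟩
  intro c
  induction c with
  | zero => intro f hc hf _ _; exact hf (Polynomial.support_eq_empty.mp (Finset.card_eq_zero.mp hc))
  | succ m ih =>
    intro f hc hf hdeg hdvd
    have heval : f.eval 1 = 0 := by
      have h1 : (X - 1 : (ZMod p)[X]) ∣ f := (dvd_pow_self _ (Nat.succ_ne_zero m)).trans hdvd
      have := Polynomial.eval_dvd (x := (1 : ZMod p)) h1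
      simpa using this
    obtain ⟨a, ha⟩ : f.support.Nonempty := Finset.card_pos.mp (hc ▸ Nat.succ_pos m)
    have hap : a < p := lt_of_le_of_lt (Polynomial.le_natDegree_of_mem_supp a ha) hdeg
    rcases Nat.eq_zero_or_pos m with hm | hm
    · subst hm
      obtain ⟨k, b, hb, rfl⟩ := Polynomial.card_support_eq_one.mp hc
      simp [Polynomial.eval_mul] at heval
      exact hb heval
    · set g : (ZMod p)[X] := X * derivative f - C (a : ZMod p) * f with hg
      have hgcoeff : ∀ k, g.coeff k = ((k : ZMod p) - (a : ZMod p)) * f.coeff k := by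
        intro k
        rcases k with _ | k
        · simp [hg, Polynomial.mul_coeff_zero]
        · simp [hg, Polynomial.coeff_X_mul, Polynomial.coeff_derivative]
          push_cast
          ring
      have hinj : ∀ k ∈ f.support, ((k : ZMod p) - (a : ZMod p)) = 0 → k = a := by
        intro k hk h0
        have hkp : k < p := lt_of_le_of_lt (Polynomial.le_natDegree_of_mem_supp k hk) hdeg
        have : (k : ZMod p) = (a : ZMod p) := by linear_combination h0
        have := (ZMod.natCast_eq_natCast_iff' k a p).mp this
        rwa [Nat.mod_eq_of_lt hkp, Nat.mod_eq_of_lt hap] at this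
      have hsupp : g.support = f.support.erase a := by
        ext k
        simp only [Polynomial.mem_support_iff, Finset.mem_erase, hgcoeff]
        constructor
        · intro h
          have hfk : f.coeff k ≠ 0 := fun h' => h (by rw [h', mul_zero])
          refine ⟨fun hka => ?_, hfk⟩
          subst hka; simp at h
        · rintro ⟨hka, hfk⟩
          intro h
          rcases mul_eq_zero.mp h with h | h
          · exact hka (hinj k (Polynomial.mem_support_iff.mpr hfk) h)
          · exact hfk h
      have hgcard : g.support.card = m := by
        rw [hsupp, Finset.card_erase_of_mem ha, hc]; rfl
      have hgne : g ≠ 0 := by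
        intro h0
        rw [h0] at hgcard
        simp at hgcard
        omega
      have hgdeg : g.natDegree < p := by
        have : g.natDegree ≤ f.natDegree := by
          apply Polynomial.natDegree_le_iff_coeff_eq_zero.mpr
          intro k hk
          rw [hgcoeff]
          rw [Polynomial.coeff_eq_zero_of_natDegree_lt hk, mul_zero]
        omega
      have hgdvd : (X - 1 : (ZMod p)[X]) ^ m ∣ g := by
        obtain ⟨h, hh⟩ := hdvd
        have hder : derivative f = (X - 1) ^ m *
            (C ((m + 1 : ℕ) : ZMod p) * h + (X - 1) * derivative h) := by
          rw [hh, Polynomial.derivative_mul, Polynomial.derivative_pow]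
          simp only [Polynomial.derivative_sub, Polynomial.derivative_X,
            Polynomial.derivative_one, sub_zero, mul_one, Nat.add_sub_cancel]
          push_cast
          ring
        refine ⟨X * (C ((m + 1 : ℕ) : ZMod p) * h + (X - 1) * derivative h)
          - C (a : ZMod p) * h * (X - 1), ?_⟩
        rw [hg, hder, hh]
        ring
      exact ih g hgcard hgne hgdeg hgdvd


variable {p : ℕ}

/-- The ring ℤ[X]/(Φ_p). -/
abbrev CycRing (p : ℕ) : Type := ℤ[X] ⧸ Ideal.span {Polynomial.cyclotomic p ℤ}

noncomputable def cycMk (p : ℕ) : ℤ[X] →+* CycRing p := Ideal.Quotient.mk _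

lemma cyc_prime_ideal (hp : p.Prime) :
    (Ideal.span {Polynomial.cyclotomic p ℤ}).IsPrime := by
  rw [Ideal.span_singleton_prime (Polynomial.cyclotomic_ne_zero p ℤ)]
  exact (Polynomial.cyclotomic.irreducible hp.pos).prime

noncomputable instance : CommRing (CycRing p) := inferInstance

lemma cycRing_isDomain (hp : p.Prime) : IsDomain (CycRing p) :=
  Ideal.Quotient.isDomain_iff_prime _ |>.mpr (cyc_prime_ideal hp)

instance : IsNoetherianRing (CycRing p) := inferInstance

/-- evaluation at 1 followed by reduction mod p, descends to CycRing. -/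
noncomputable def cycToZMod (hp : p.Prime) : CycRing p →+* ZMod p := by
  refine Ideal.Quotient.lift _ ((Int.castRingHom (ZMod p)).comp (Polynomial.evalRingHom 1)) ?_
  intro q hq
  rw [Ideal.mem_span_singleton] at hq
  obtain ⟨h, rfl⟩ := hq
  haveI : Fact p.Prime := ⟨hp⟩
  simp [Polynomial.eval_one_cyclotomic_prime]

/-- evaluation at ω = exp(2πi/p) descends to CycRing. -/
noncomputable def cycToC (hp : p.Prime) : CycRing p →+* ℂ := by
  refine Ideal.Quotient.lift _
    ((Polynomial.aeval (Complex.exp (2 * Real.pi * Complex.I / p)) :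
        ℤ[X] →ₐ[ℤ] ℂ) : ℤ[X] →+* ℂ) ?_
  intro q hq
  rw [Ideal.mem_span_singleton] at hq
  obtain ⟨h, rfl⟩ := hq
  have hω : IsPrimitiveRoot (Complex.exp (2 * Real.pi * Complex.I / p)) p :=
    Complex.isPrimitiveRoot_exp p hp.ne_zero
  have hroot : (Polynomial.aeval (Complex.exp (2 * Real.pi * Complex.I / p)))
      (Polynomial.cyclotomic p ℤ) = 0 := by
    have := hω.isRoot_cyclotomic hp.pos
    rw [Polynomial.IsRoot] at this
    rw [Polynomial.aeval_def, ← Polynomial.eval_map]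
    simpa [Polynomial.map_cyclotomic] using this
  simp [hroot]

lemma cycToC_injective (hp : p.Prime) : Function.Injective (cycToC hp) := by
  set ω := Complex.exp (2 * Real.pi * Complex.I / p)
  have hω : IsPrimitiveRoot ω p := Complex.isPrimitiveRoot_exp p hp.ne_zero
  have hmin : Polynomial.cyclotomic p ℤ = minpoly ℤ ω :=
    Polynomial.cyclotomic_eq_minpoly hω hp.pos
  rw [injective_iff_map_eq_zero]
  intro a ha
  obtain ⟨q, rfl⟩ := Ideal.Quotient.mk_surjective (I := Ideal.span {Polynomial.cyclotomic p ℤ}) a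
  have hq : (Polynomial.aeval ω) q = 0 := ha
  have hint : IsIntegral ℤ ω := hω.isIntegral hp.pos
  have hdvd : minpoly ℤ ω ∣ q := minpoly.isIntegrallyClosed_dvd hint hq
  rw [← hmin] at hdvd
  rw [Ideal.Quotient.eq_zero_iff_mem, Ideal.mem_span_singleton]
  exact hdvd

noncomputable def cycX (p : ℕ) : CycRing p := cycMk p Polynomial.X

lemma cycToZMod_X (hp : p.Prime) : cycToZMod hp (cycX p) = 1 := by
  simp [cycToZMod, cycX, cycMk]

lemma cycToC_X (hp : p.Prime) : cycToC hp (cycX p) = Complex.exp (2 * Real.pi * Complex.I / p) := by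
  simp [cycToC, cycX, cycMk]

/-- p ∈ (x - 1) in CycRing. -/
lemma ker_cycToZMod (hp : p.Prime) (a : CycRing p) (ha : cycToZMod hp a = 0) :
    ∃ b, a = (cycX p - 1) * b := by
  obtain ⟨q, rfl⟩ := Ideal.Quotient.mk_surjective (I := Ideal.span {Polynomial.cyclotomic p ℤ}) a
  have hq : ((q.eval 1 : ℤ) : ZMod p) = 0 := ha
  rw [ZMod.intCast_zmod_eq_zero_iff_dvd] at hq
  obtain ⟨m, hm⟩ := hq
  -- q = (q - C (q.eval 1)) + C (q.eval 1); first part divisible by X - 1, second = p*m ≡ Φ(x)-dependent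
  have h1 : (Polynomial.X - 1 : ℤ[X]) ∣ (q - Polynomial.C (q.eval 1)) := by
    have : ((q - Polynomial.C (q.eval 1)).eval 1) = 0 := by simp
    simpa using Polynomial.dvd_iff_isRoot.mpr this
  obtain ⟨b₁, hb₁⟩ := h1
  -- p = (X-1)*c + cyclotomic: since (cyclotomic p ℤ).eval 1 = p
  haveI : Fact p.Prime := ⟨hp⟩
  have h2 : (Polynomial.X - 1 : ℤ[X]) ∣ (Polynomial.cyclotomic p ℤ - Polynomial.C (p : ℤ)) := by
    have : ((Polynomial.cyclotomic p ℤ - Polynomial.C (p : ℤ)).eval 1) = 0 := by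
      simp [Polynomial.eval_one_cyclotomic_prime]
    simpa using Polynomial.dvd_iff_isRoot.mpr this
  obtain ⟨b₂, hb₂⟩ := h2
  refine ⟨cycMk p (b₁ - b₂ * Polynomial.C m), ?_⟩
  have key : q - (Polynomial.X - 1) * (b₁ - b₂ * Polynomial.C m)
      = Polynomial.cyclotomic p ℤ * Polynomial.C m := by
    have e1 : q = (Polynomial.X - 1) * b₁ + Polynomial.C (q.eval 1) := by
      linear_combination hb₁
    have e2 : Polynomial.C (q.eval 1) = Polynomial.C ((p : ℤ) * m) := by rw [← hm]
    have e3 : Polynomial.cyclotomic p ℤ = (Polynomial.X - 1) * b₂ + Polynomial.C (p : ℤ) := by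
      linear_combination hb₂
    rw [e1, e2, e3, _root_.map_mul]
    ring
  have : cycMk p (q - (Polynomial.X - 1) * (b₁ - b₂ * Polynomial.C m)) = 0 := by
    rw [key, cycMk, Ideal.Quotient.eq_zero_iff_mem]
    exact Ideal.mul_mem_right _ _ (Ideal.subset_span rfl)
  have hmk : cycMk p q = cycMk p ((Polynomial.X - 1) * (b₁ - b₂ * Polynomial.C m)) := by
    have := sub_eq_zero.mp (by rwa [map_sub] at this)
    exact this
  rw [show (Ideal.Quotient.mk (Ideal.span {Polynomial.cyclotomic p ℤ})) q = cycMk p q from rfl, hmk]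
  simp [cycMk, cycX]

-- helper: coefficient of a sparse sum
lemma coeff_sparse_sum {R : Type*} [CommRing R] {n : ℕ} (w : Fin n → R) (e : Fin n → ℕ)
    (he : Function.Injective e) (j₀ : Fin n) :
    (∑ j, C (w j) * X ^ (e j)).coeff (e j₀) = w j₀ := by
  rw [Polynomial.finset_sum_coeff]
  rw [Finset.sum_eq_single j₀]
  · simp
  · intro j _ hj
    rw [Polynomial.coeff_C_mul_X_pow]
    simp only [ite_eq_right_iff]
    intro h
    exact absurd (he h.symm) hj
  · simp

lemma prod_dvd_of_roots {R : Type*} [CommRing R] [IsDomain R] {n : ℕ} (t : Fin n → R)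
    (ht : Function.Injective t) (f : R[X]) (hf : f ≠ 0) (hroots : ∀ i, f.eval (t i) = 0) :
    (∏ i, (X - C (t i))) ∣ f := by
  have hle : (Finset.univ.val.map t) ≤ f.roots := by
    have hnd : (Finset.univ.val.map t).Nodup := Finset.univ.nodup.map ht
    rw [Multiset.le_iff_subset hnd]
    intro x hx
    obtain ⟨i, _, rfl⟩ := Multiset.mem_map.mp hx
    rw [Polynomial.mem_roots hf]
    exact hroots i
  have h2 := (Multiset.prod_X_sub_C_dvd_iff_le_roots hf (Finset.univ.val.map t)).mpr hle
  have h3 : ∏ i, (X - C (t i)) = ((Finset.univ.val.map t).map (fun a => X - C a)).prod := by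
    rw [Multiset.map_map]
    rfl
  rwa [h3]

lemma cheb_descent {p : ℕ} (hp : p.Prime) {n : ℕ} (v : Fin n → CycRing p) (hv : v ≠ 0)
    (M : Matrix (Fin n) (Fin n) (CycRing p)) (hMv : M.mulVec v = 0) :
    ∃ w : Fin n → CycRing p, M.mulVec w = 0 ∧ ∃ i, cycToZMod hp (w i) ≠ 0 := by
  classical
  haveI := cycRing_isDomain hp
  haveI : Fact p.Prime := ⟨hp⟩
  set pic : CycRing p := cycX p - 1 with hpicdef
  have hpic0 : pic ≠ 0 := by
    intro h
    have : cycToC hp pic = 0 := by rw [h, _root_.map_zero]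
    rw [map_sub, cycToC_X hp, _root_.map_one, sub_eq_zero] at this
    exact (Complex.isPrimitiveRoot_exp p hp.ne_zero).ne_one hp.one_lt this
  obtain ⟨i₀, hi₀⟩ := Function.ne_iff.mp hv
  -- boundedness
  have hbound : ∃ K, ¬ pic ^ K ∣ v i₀ := by
    by_contra h
    push_neg at h
    have hspan : Ideal.span {pic} ≠ ⊤ := by
      intro htop
      have h1 : (1 : CycRing p) ∈ Ideal.span {pic} := htop ▸ Submodule.mem_top
      rw [Ideal.mem_span_singleton] at h1
      obtain ⟨b, hb⟩ := h1
      have := congrArg (cycToZMod hp) hb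
      rw [_root_.map_one, _root_.map_mul, map_sub, cycToZMod_X hp, _root_.map_one, sub_self, zero_mul] at this
      exact one_ne_zero this
    have hbot := Ideal.iInf_pow_eq_bot_of_isDomain (I := Ideal.span {pic}) hspan
    have : v i₀ ∈ (⨅ k : ℕ, Ideal.span {pic} ^ k) := by
      rw [Submodule.mem_iInf]
      intro k
      rw [Ideal.span_singleton_pow, Ideal.mem_span_singleton]
      exact h k
    rw [hbot] at this
    exact hi₀ (by simpa using this)
  obtain ⟨K, hK⟩ := hbound
  set P : ℕ → Prop := fun k => ∀ i, pic ^ k ∣ v i with hP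
  have hP0 : P 0 := fun i => by simp
  set k := Nat.findGreatest P K with hk
  have hPk : P k := Nat.findGreatest_spec (Nat.zero_le K) hP0
  have hkK : k ≠ K := fun h => hK ((h ▸ hPk) i₀)
  have hkltK : k < K := lt_of_le_of_ne (Nat.findGreatest_le K) hkK
  have hnot : ¬ P (k + 1) := Nat.findGreatest_is_greatest (Nat.lt_succ_self k) hkltK
  choose w hw using hPk
  refine ⟨w, ?_, ?_⟩
  · funext i
    have h1 : (M.mulVec v) i = 0 := congrFun hMv i
    have h2 : (M.mulVec v) i = pic ^ k * (M.mulVec w) i := by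
      simp only [Matrix.mulVec, dotProduct, Finset.mul_sum]
      apply Finset.sum_congr rfl
      intro j _
      rw [hw j]
      ring
    have h3 : pic ^ k * (M.mulVec w) i = 0 := by rw [← h2]; exact h1
    rcases mul_eq_zero.mp h3 with h | h
    · exact absurd h (pow_ne_zero k hpic0)
    · exact h
  · have hnot' : ∃ i, ¬ pic ^ (k + 1) ∣ v i := by
      by_contra hc
      push_neg at hc
      exact hnot (fun i => hc i)
    obtain ⟨i, hi⟩ := hnot'
    refine ⟨i, fun hzero => ?_⟩
    obtain ⟨b, hb⟩ := ker_cycToZMod hp (w i) hzero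
    apply hi
    rw [hw i, hb]
    exact ⟨b, by ring⟩

theorem chebotarev_s14 {p : ℕ} (hp : p.Prime) (n : ℕ) (a b : Fin n → Fin p)
    (ha : Function.Injective a) (hb : Function.Injective b) :
    (Matrix.of fun i j : Fin n =>
      Complex.exp (2 * Real.pi * Complex.I / p) ^ ((a i : ℕ) * (b j : ℕ))).det ≠ 0 := by
  classical
  haveI := cycRing_isDomain hp
  haveI : Fact p.Prime := ⟨hp⟩
  set ω := Complex.exp (2 * Real.pi * Complex.I / p) with hωdef
  have hω : IsPrimitiveRoot ω p := Complex.isPrimitiveRoot_exp p hp.ne_zero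
  intro hdet
  set MA : Matrix (Fin n) (Fin n) (CycRing p) :=
    Matrix.of (fun i j => (cycX p) ^ ((a i : ℕ) * (b j : ℕ))) with hMA
  have hmap : MA.map (cycToC hp) = Matrix.of (fun i j : Fin n => ω ^ ((a i : ℕ) * (b j : ℕ))) := by
    ext i j
    simp [MA, Matrix.map_apply, map_pow, cycToC_X hp, hωdef]
  have hdetA : MA.det = 0 := by
    apply cycToC_injective hp
    rw [_root_.map_zero, RingHom.map_det, RingHom.mapMatrix_apply, hmap, hdet]
  obtain ⟨v, hv, hMv⟩ := Matrix.exists_mulVec_eq_zero_iff.mpr hdetA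
  obtain ⟨w, hMw, i₁, hi₁⟩ := cheb_descent hp v hv MA hMv
  -- the sparse polynomial
  set f : (CycRing p)[X] := ∑ j, C (w j) * X ^ ((b j : ℕ)) with hf
  have hbinj : Function.Injective (fun j : Fin n => ((b j : ℕ))) :=
    fun x y h => hb (Fin.val_injective h)
  have hwne : w i₁ ≠ 0 := fun h => hi₁ (by rw [h, _root_.map_zero])
  have hfne : f ≠ 0 := by
    intro h0
    have := coeff_sparse_sum w (fun j => ((b j : ℕ))) hbinj i₁
    rw [← hf, h0] at this
    simp at this
    exact hwne this.symm
  -- roots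
  have hroots : ∀ i, f.eval ((cycX p) ^ ((a i : ℕ))) = 0 := by
    intro i
    have h1 : (MA.mulVec w) i = 0 := congrFun hMw i
    have h2 : (MA.mulVec w) i = f.eval ((cycX p) ^ ((a i : ℕ))) := by
      simp only [Matrix.mulVec, dotProduct, hf, Polynomial.eval_finset_sum]
      apply Finset.sum_congr rfl
      intro j _
      simp [MA, ← pow_mul]
      ring
    rw [← h2, h1]
  have htinj : Function.Injective (fun i : Fin n => (cycX p) ^ ((a i : ℕ))) := by
    intro x y h
    have : ω ^ ((a x : ℕ)) = ω ^ ((a y : ℕ)) := by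
      have := congrArg (cycToC hp) h
      simpa [map_pow, cycToC_X hp] using this
    exact ha (Fin.val_injective (hω.pow_inj (a x).isLt (a y).isLt this))
  have hdvd := prod_dvd_of_roots _ htinj f hfne hroots
  -- map to ZMod p
  set fbar : (ZMod p)[X] := f.map (cycToZMod hp) with hfbar
  have hfbar_eq : fbar = ∑ j, C (cycToZMod hp (w j)) * X ^ ((b j : ℕ)) := by
    rw [hfbar, hf, Polynomial.map_sum]
    apply Finset.sum_congr rfl
    intro j _
    rw [Polynomial.map_mul, Polynomial.map_C, Polynomial.map_pow, Polynomial.map_X]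
  have hfbarne : fbar ≠ 0 := by
    intro h0
    have := coeff_sparse_sum (fun j => cycToZMod hp (w j)) (fun j => ((b j : ℕ))) hbinj i₁
    rw [← hfbar_eq, h0] at this
    simp at this
    exact hi₁ this.symm
  have hdvdbar : ((X : (ZMod p)[X]) - 1) ^ n ∣ fbar := by
    have := Polynomial.map_dvd (cycToZMod hp) hdvd
    have hprod : (∏ i : Fin n, (X - C ((cycX p) ^ ((a i : ℕ))))).map (cycToZMod hp)
        = ((X : (ZMod p)[X]) - 1) ^ n := by
      rw [Polynomial.map_prod]
      have : ∀ i : Fin n, (X - C ((cycX p) ^ ((a i : ℕ)))).map (cycToZMod hp)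
          = ((X : (ZMod p)[X]) - 1) := by
        intro i
        rw [Polynomial.map_sub, Polynomial.map_X, Polynomial.map_C, _root_.map_pow, cycToZMod_X hp,
          one_pow, Polynomial.C_1]
      rw [Finset.prod_congr rfl (fun i _ => this i), Finset.prod_const, Finset.card_univ,
        Fintype.card_fin]
    rwa [hprod] at this
  -- support and degree bounds
  have hsupp : fbar.support ⊆ Finset.univ.image (fun j : Fin n => ((b j : ℕ))) := by
    intro k hk
    rw [Polynomial.mem_support_iff, hfbar_eq, Polynomial.finset_sum_coeff] at hk
    obtain ⟨j, _, hj⟩ := Finset.exists_ne_zero_of_sum_ne_zero hk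
    rw [Polynomial.coeff_C_mul_X_pow] at hj
    split_ifs at hj with h
    · exact Finset.mem_image.mpr ⟨j, Finset.mem_univ j, h.symm⟩
    · exact absurd rfl hj
  have hcard : fbar.support.card ≤ n := by
    refine (Finset.card_le_card hsupp).trans ?_
    exact (Finset.card_image_le).trans (by simp)
  have hdeg : fbar.natDegree < p := by
    have hmem := Polynomial.natDegree_mem_support_of_nonzero hfbarne
    have := hsupp hmem
    rw [Finset.mem_image] at this
    obtain ⟨j, _, hj⟩ := this
    rw [← hj]
    exact (b j).isLt
  exact sparse_aux hp fbar.support.card fbar rfl hfbarne hdeg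
    ((pow_dvd_pow _ hcard).trans hdvdbar)

lemma kernel_unique {d : ℕ} (hd : d.Prime) (S B : Finset (Fin d))
    (hcard : B.card + 1 = S.card) (f g : Fin d → ℂ)
    (hfS : ∀ x, f x ≠ 0 ↔ x ∈ S) (hgS : ∀ x, g x ≠ 0 ↔ x ∈ S)
    (hfB : ∀ k ∈ B, ∑ x : Fin d,
      Complex.exp (2 * Real.pi * Complex.I / d) ^ ((k : ℕ) * (x : ℕ)) * f x = 0)
    (hgB : ∀ k ∈ B, ∑ x : Fin d,
      Complex.exp (2 * Real.pi * Complex.I / d) ^ ((k : ℕ) * (x : ℕ)) * g x = 0) :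
    ∃ x₀ ∈ S, ∀ x, g x₀ * f x = f x₀ * g x := by
  classical
  set ω := Complex.exp (2 * Real.pi * Complex.I / d) with hω
  have hS : S.Nonempty := Finset.card_pos.mp (by omega)
  obtain ⟨x₀, hx₀⟩ := hS
  refine ⟨x₀, hx₀, ?_⟩
  set h : Fin d → ℂ := fun x => g x₀ * f x - f x₀ * g x with hh
  suffices hzero : ∀ x, h x = 0 by
    intro x
    have := hzero x
    rw [hh] at this
    simp only at this
    exact sub_eq_zero.mp this
  -- h vanishes outside S.erase x₀ and its transform vanishes on B
  set S' := S.erase x₀ with hS'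
  have hS'card : S'.card = B.card := by
    rw [hS', Finset.card_erase_of_mem hx₀]; omega
  have hsupp : ∀ x, x ∉ S' → h x = 0 := by
    intro x hx
    rw [hS', Finset.mem_erase] at hx
    by_cases hxx : x = x₀
    · subst hxx; rw [hh]; ring
    · have hxS : x ∉ S := fun hmem => hx ⟨hxx, hmem⟩
      have hf0 : f x = 0 := by_contra fun hne => hxS ((hfS x).mp hne)
      have hg0 : g x = 0 := by_contra fun hne => hxS ((hgS x).mp hne)
      rw [hh]; simp [hf0, hg0]
  have htrans : ∀ k ∈ B, ∑ x : Fin d, ω ^ ((k : ℕ) * (x : ℕ)) * h x = 0 := by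
    intro k hk
    have h1 := hfB k hk
    have h2 := hgB k hk
    have : ∑ x : Fin d, ω ^ ((k : ℕ) * (x : ℕ)) * h x
        = g x₀ * (∑ x : Fin d, ω ^ ((k : ℕ) * (x : ℕ)) * f x)
          - f x₀ * (∑ x : Fin d, ω ^ ((k : ℕ) * (x : ℕ)) * g x) := by
      rw [Finset.mul_sum, Finset.mul_sum, ← Finset.sum_sub_distrib]
      apply Finset.sum_congr rfl
      intro x _
      rw [hh]; ring
    rw [this, h1, h2, mul_zero, mul_zero, sub_zero]
  -- set up the matrix
  set n := B.card with hn
  have heB : Fin n ≃ {x // x ∈ B} := (Finset.equivFin B).symm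
  have heS : Fin n ≃ {x // x ∈ S'} := (finCongr hS'card.symm).trans (Finset.equivFin S').symm
  set a : Fin n → Fin d := fun i => (heB i : Fin d) with ha
  set b : Fin n → Fin d := fun j => (heS j : Fin d) with hb
  have hainj : Function.Injective a := fun i j hij => heB.injective (Subtype.ext hij)
  have hbinj : Function.Injective b := fun i j hij => heS.injective (Subtype.ext hij)
  have hdet := chebotarev_s14 hd n a b hainj hbinj
  set M : Matrix (Fin n) (Fin n) ℂ :=
    Matrix.of (fun i j : Fin n => ω ^ ((a i : ℕ) * (b j : ℕ))) with hM
  set w : Fin n → ℂ := fun j => h (b j) with hw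
  have hMw : M.mulVec w = 0 := by
    funext i
    have hrow : (M.mulVec w) i = ∑ x ∈ S', ω ^ ((a i : ℕ) * (x : ℕ)) * h x := by
      rw [Matrix.mulVec, dotProduct]
      refine Finset.sum_bij (fun j _ => b j) (fun j _ => (heS j).2) ?_ ?_ ?_
      · intro j _ j' _ hjj'
        exact hbinj hjj'
      · intro x hx
        exact ⟨heS.symm ⟨x, hx⟩, Finset.mem_univ _, by simp [hb]⟩
      · intro j _
        rfl
    have hfull : ∑ x ∈ S', ω ^ ((a i : ℕ) * (x : ℕ)) * h x
        = ∑ x : Fin d, ω ^ ((a i : ℕ) * (x : ℕ)) * h x := by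
      apply Finset.sum_subset (Finset.subset_univ S')
      intro x _ hx
      rw [hsupp x hx, mul_zero]
    rw [hrow, hfull]
    have : a i ∈ B := (heB i).2
    exact htrans (a i) this
  have hwzero : w = 0 := by
    by_contra hwne
    exact hdet (Matrix.exists_mulVec_eq_zero_iff.mp ⟨w, hwne, hMw⟩)
  intro x
  by_cases hx : x ∈ S'
  · have : ∃ j : Fin n, b j = x := ⟨heS.symm ⟨x, hx⟩, by simp [hb]⟩
    obtain ⟨j, hj⟩ := this
    have := congrFun hwzero j
    rw [hw] at this
    simp only [Pi.zero_apply] at this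
    rw [hj] at this
    exact sub_eq_zero.mp (by simpa [hh] using this)
  · exact sub_eq_zero.mp (by simpa [hh] using hsupp x hx)

end ZDAux

/-- Incompatible zero distributions: for prime `d > 3`, if `ψ` has support `(d+1)/2` in
the computational basis and in two further standard MU bases `j₁ > j₂ ≥ 1`, then the
zero sets of `H_{j₁}†ψ` and `H_{j₂}†ψ` are not related by a cyclic shift mod `d`. -/
theorem zero_distributions_incompatible (d : ℕ) (hd : d.Prime) (hd3 : 3 < d)
    (j₁ j₂ : ℕ) (hj₂ : 1 ≤ j₂) (hlt : j₂ < j₁) (hj₁d : j₁ ≤ d)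
    (ψ : Fin d → ℂ) (hψ : ψ ≠ 0)
    (h0 : 2 * supp ψ = d + 1)
    (h1 : 2 * supp ((stdH d j₁)ᴴ.mulVec ψ) = d + 1)
    (h2 : 2 * supp ((stdH d j₂)ᴴ.mulVec ψ) = d + 1) :
    ¬ ∃ μ : Fin d,
        (Finset.univ.filter (fun κ : Fin d => (stdH d j₂)ᴴ.mulVec ψ κ = 0)) =
          (Finset.univ.filter (fun κ : Fin d => (stdH d j₁)ᴴ.mulVec ψ κ = 0)).image
            (fun κ => κ + μ) := by
  classical
  rintro ⟨μ, hμ⟩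
  set ω : ℂ := Complex.exp (2 * Real.pi * Complex.I / d) with hωdef
  have hd0 : d ≠ 0 := hd.ne_zero
  have hω : IsPrimitiveRoot ω d := Complex.isPrimitiveRoot_exp d hd0
  have hω0 : ω ≠ 0 := Complex.exp_ne_zero _
  have hd5 : 5 ≤ d := by omega
  have hωd : ω ^ (d : ℤ) = 1 := by
    rw [zpow_natCast]; exact hω.pow_eq_one
  have hcong : ∀ m m' : ℤ, (d : ℤ) ∣ m - m' → ω ^ m = ω ^ m' := by
    rintro m m' ⟨t, ht⟩
    have hm : m = m' + (d : ℤ) * t := by linarith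
    rw [hm, zpow_add₀ hω0, _root_.zpow_mul, hωd, _root_.one_zpow, mul_one]
  have hexp : ∀ m : ℤ, Complex.exp (2 * Real.pi * Complex.I * ((m : ℂ) / d)) = ω ^ m := by
    intro m
    rw [hωdef, ← Complex.exp_int_mul]
    congr 1
    ring
  have hker : ∀ (j : ℕ) (k : Fin d), ((stdH d j)ᴴ.mulVec ψ) k = (1 / Real.sqrt d : ℂ) *
      ∑ x : Fin d, ω ^ ((k : ℤ) * (x : ℤ) - ((j : ℤ) - 1) * (x : ℤ) ^ 2) * ψ x := by
    intro j k
    have hentry : ∀ x : Fin d, ((stdH d j)ᴴ) k x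
        = (1 / Real.sqrt d : ℂ) * ω ^ ((k : ℤ) * (x : ℤ) - ((j : ℤ) - 1) * (x : ℤ) ^ 2) := by
      intro x
      rw [Matrix.conjTranspose_apply]
      show star ((1 / Real.sqrt d : ℂ) * Complex.exp (2 * Real.pi * Complex.I *
        (((((j : ℤ) - 1) * (x : ℤ) ^ 2 - (k : ℤ) * (x : ℤ) : ℤ) : ℂ) / (d : ℂ)))) = _
      rw [star_mul']
      have h1 : star (1 / (Real.sqrt d : ℂ)) = 1 / (Real.sqrt d : ℂ) := by
        rw [star_div₀, star_one, Complex.star_def, Complex.conj_ofReal]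
      have h2 : star (Complex.exp (2 * Real.pi * Complex.I *
          (((((j : ℤ) - 1) * (x : ℤ) ^ 2 - (k : ℤ) * (x : ℤ) : ℤ) : ℂ) / (d : ℂ))))
          = ω ^ ((k : ℤ) * (x : ℤ) - ((j : ℤ) - 1) * (x : ℤ) ^ 2) := by
        have hc : (starRingEnd ℂ) (2 * Real.pi * Complex.I *
            (((((j : ℤ) - 1) * (x : ℤ) ^ 2 - (k : ℤ) * (x : ℤ) : ℤ) : ℂ) / (d : ℂ)))
            = 2 * Real.pi * Complex.I *
              ((((k : ℤ) * (x : ℤ) - ((j : ℤ) - 1) * (x : ℤ) ^ 2 : ℤ) : ℂ) / (d : ℂ)) := by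
          push_cast
          simp only [_root_.map_mul, map_add, map_sub, map_neg, map_pow, map_div₀,
            map_natCast, _root_.map_one, map_ofNat, Complex.conj_I, Complex.conj_ofReal]
          ring
        show (starRingEnd ℂ) (Complex.exp _) = _
        rw [← Complex.exp_conj, hc, hexp]
      rw [h1, h2]
    rw [Matrix.mulVec, dotProduct, Finset.mul_sum]
    apply Finset.sum_congr rfl
    intro x _
    rw [hentry x]
    ring
  have hsqrt0 : (1 / Real.sqrt d : ℂ) ≠ 0 := by
    have hpos : (0 : ℝ) < Real.sqrt d := Real.sqrt_pos.mpr (by exact_mod_cast hd.pos)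
    exact div_ne_zero one_ne_zero (by exact_mod_cast hpos.ne')
  have hzero_iff : ∀ (j : ℕ) (k : Fin d), (((stdH d j)ᴴ.mulVec ψ) k = 0) ↔
      (∑ x : Fin d, ω ^ ((k : ℤ) * (x : ℤ) - ((j : ℤ) - 1) * (x : ℤ) ^ 2) * ψ x = 0) := by
    intro j k
    rw [hker]
    constructor
    · intro h
      rcases mul_eq_zero.mp h with h | h
      · exact absurd h hsqrt0
      · exact h
    · intro h
      rw [h, mul_zero]
  set S : Finset (Fin d) := Finset.univ.filter (fun v => ψ v ≠ 0) with hSdef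
  set B : Finset (Fin d) :=
    Finset.univ.filter (fun k => ((stdH d j₁)ᴴ.mulVec ψ) k = 0) with hBdef
  have hBcard : B.card + supp ((stdH d j₁)ᴴ.mulVec ψ) = d := by
    have hsplit := Finset.card_filter_add_card_filter_not
      (s := (Finset.univ : Finset (Fin d)))
      (p := fun k : Fin d => ((stdH d j₁)ᴴ.mulVec ψ) k = 0)
    rw [Finset.card_univ, Fintype.card_fin] at hsplit
    have heq : (Finset.univ.filter (fun k : Fin d => ¬ ((stdH d j₁)ᴴ.mulVec ψ) k = 0))
        = Finset.univ.filter (fun k : Fin d => ((stdH d j₁)ᴴ.mulVec ψ) k ≠ 0) := rfl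
    rw [heq] at hsplit
    exact hsplit
  have hSsupp : supp ψ = S.card := rfl
  have h0' : 2 * S.card = d + 1 := hSsupp ▸ h0
  have hcardSB : B.card + 1 = S.card := by
    omega
  set f : Fin d → ℂ := fun x => ω ^ (-(((j₁ : ℤ) - 1) * (x : ℤ) ^ 2)) * ψ x with hfdef
  set g : Fin d → ℂ :=
    fun x => ω ^ ((μ : ℤ) * (x : ℤ) - ((j₂ : ℤ) - 1) * (x : ℤ) ^ 2) * ψ x with hgdef
  have hfS : ∀ x, f x ≠ 0 ↔ x ∈ S := by
    intro x
    rw [hSdef, Finset.mem_filter]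
    simp only [hfdef, Finset.mem_univ, true_and, mul_ne_zero_iff]
    exact ⟨fun h => h.2, fun h => ⟨zpow_ne_zero _ hω0, h⟩⟩
  have hgS : ∀ x, g x ≠ 0 ↔ x ∈ S := by
    intro x
    rw [hSdef, Finset.mem_filter]
    simp only [hgdef, Finset.mem_univ, true_and, mul_ne_zero_iff]
    exact ⟨fun h => h.2, fun h => ⟨zpow_ne_zero _ hω0, h⟩⟩
  have hfB : ∀ k ∈ B, ∑ x : Fin d, ω ^ ((k : ℕ) * (x : ℕ)) * f x = 0 := by
    intro k hk
    have h0' : ((stdH d j₁)ᴴ.mulVec ψ) k = 0 := (Finset.mem_filter.mp hk).2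
    have hsum := (hzero_iff j₁ k).mp h0'
    rw [← hsum]
    apply Finset.sum_congr rfl
    intro x _
    rw [hfdef]
    simp only
    rw [← mul_assoc, ← zpow_natCast ω ((k : ℕ) * (x : ℕ)), ← zpow_add₀ hω0]
    have he : ((((k : ℕ) * (x : ℕ) : ℕ)) : ℤ) + (-(((j₁ : ℤ) - 1) * (x : ℤ) ^ 2))
        = (k : ℤ) * (x : ℤ) - ((j₁ : ℤ) - 1) * (x : ℤ) ^ 2 := by
      push_cast
      ring
    rw [he]
  have hgB : ∀ k ∈ B, ∑ x : Fin d, ω ^ ((k : ℕ) * (x : ℕ)) * g x = 0 := by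
    intro k hk
    have hk2 : k + μ ∈ Finset.univ.filter (fun κ : Fin d => ((stdH d j₂)ᴴ.mulVec ψ) κ = 0) := by
      rw [hμ]
      exact Finset.mem_image_of_mem _ hk
    have h0' : ((stdH d j₂)ᴴ.mulVec ψ) (k + μ) = 0 := (Finset.mem_filter.mp hk2).2
    have hsum := (hzero_iff j₂ (k + μ)).mp h0'
    rw [← hsum]
    apply Finset.sum_congr rfl
    intro x _
    rw [hgdef]
    simp only
    rw [← mul_assoc, ← zpow_natCast ω ((k : ℕ) * (x : ℕ)), ← zpow_add₀ hω0]
    have hval : ((k + μ : Fin d) : ℕ) = ((k : ℕ) + (μ : ℕ)) % d := Fin.val_add k μ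
    have hdivmod := Nat.div_add_mod ((k : ℕ) + (μ : ℕ)) d
    have hdvd : (d : ℤ) ∣ (((k : ℕ) * (x : ℕ) : ℤ) + ((μ : ℤ) * (x : ℤ) - ((j₂ : ℤ) - 1) * (x : ℤ) ^ 2))
        - (((k + μ : Fin d) : ℤ) * (x : ℤ) - ((j₂ : ℤ) - 1) * (x : ℤ) ^ 2) := by
      refine ⟨(((k : ℕ) + (μ : ℕ)) / d : ℕ) * (x : ℤ), ?_⟩
      have hq : (d : ℤ) * ((((k : ℕ) + (μ : ℕ)) / d : ℕ) : ℤ) + ((k + μ : Fin d) : ℤ)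
          = ((k : ℕ) : ℤ) + ((μ : ℕ) : ℤ) := by
        have hnat := Nat.div_add_mod ((k : ℕ) + (μ : ℕ)) d
        have hv : ((k + μ : Fin d) : ℕ) = ((k : ℕ) + (μ : ℕ)) % d := hval
        push_cast [hv]
        exact_mod_cast hnat
      have hth : ((k + μ : Fin d) : ℤ) = ((k : ℕ) : ℤ) + ((μ : ℕ) : ℤ)
          - (d : ℤ) * ((((k : ℕ) + (μ : ℕ)) / d : ℕ) : ℤ) := by linarith
      rw [hth]
      push_cast
      ring
    exact congrArg (· * ψ x) (hcong _ _ hdvd)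
  obtain ⟨x₀, hx₀S, hrel⟩ := kernel_unique hd S B hcardSB f g hfS hgS hfB hgB
  set Q : Fin d → ℤ := fun x => ((j₁ : ℤ) - (j₂ : ℤ)) * (x : ℤ) ^ 2 + (μ : ℤ) * (x : ℤ) with hQdef
  have hgf : ∀ x, g x = ω ^ (Q x) * f x := by
    intro x
    rw [hfdef, hgdef]
    simp only
    rw [← mul_assoc, ← zpow_add₀ hω0]
    congr 2
    rw [hQdef]
    ring
  have hphase : ∀ x ∈ S, ω ^ (Q x) = ω ^ (Q x₀) := by
    intro x hx
    have h1 := hrel x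
    rw [hgf x, hgf x₀] at h1
    have hfx : f x ≠ 0 := (hfS x).mpr hx
    have hfx₀ : f x₀ ≠ 0 := (hfS x₀).mpr hx₀S
    have h2 : ω ^ (Q x) * (f x₀ * f x) = ω ^ (Q x₀) * (f x₀ * f x) := by
      linear_combination -h1
    exact mul_right_cancel₀ (mul_ne_zero hfx₀ hfx) h2
  -- three distinct points
  have hScard3 : 3 ≤ S.card := by
    omega
  have hcy : 0 < (S.erase x₀).card := by
    rw [Finset.card_erase_of_mem hx₀S]
    omega
  obtain ⟨y, hy⟩ := Finset.card_pos.mp hcy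
  have hyx₀ : y ≠ x₀ := (Finset.mem_erase.mp hy).1
  have hyS : y ∈ S := (Finset.mem_erase.mp hy).2
  have hcz : 0 < ((S.erase x₀).erase y).card := by
    rw [Finset.card_erase_of_mem hy, Finset.card_erase_of_mem hx₀S]
    omega
  obtain ⟨z, hz⟩ := Finset.card_pos.mp hcz
  have hzy : z ≠ y := (Finset.mem_erase.mp hz).1
  have hzx₀ : z ≠ x₀ := (Finset.mem_erase.mp (Finset.mem_erase.mp hz).2).1
  have hzS : z ∈ S := (Finset.mem_erase.mp (Finset.mem_erase.mp hz).2).2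
  haveI : Fact d.Prime := ⟨hd⟩
  have hcastinj : ∀ u v : Fin d, ((u : ℕ) : ZMod d) = ((v : ℕ) : ZMod d) → u = v := by
    intro u v huv
    have h1 : ((u : ℕ) : ZMod d).val = ((v : ℕ) : ZMod d).val := by rw [huv]
    rw [ZMod.val_cast_of_lt u.isLt, ZMod.val_cast_of_lt v.isLt] at h1
    exact Fin.ext h1
  have key : ∀ u ∈ S, u ≠ x₀ →
      (((j₁ : ℤ) - (j₂ : ℤ) : ℤ) : ZMod d) * (((u : ℕ) : ZMod d) + ((x₀ : ℕ) : ZMod d))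
        + ((μ : ℕ) : ZMod d) = 0 := by
    intro u huS hux
    have hdvd : (d : ℤ) ∣ Q u - Q x₀ := by
      have hph := hphase u huS
      have h2 : ω ^ (Q u - Q x₀) = 1 := by
        rw [zpow_sub₀ hω0, hph, div_self (zpow_ne_zero _ hω0)]
      exact (hω.zpow_eq_one_iff_dvd _).mp h2
    have hc : ((Q u - Q x₀ : ℤ) : ZMod d) = 0 := (ZMod.intCast_zmod_eq_zero_iff_dvd _ d).mpr hdvd
    rw [hQdef] at hc
    push_cast at hc
    have hune : (((u : ℕ) : ZMod d)) ≠ (((x₀ : ℕ) : ZMod d)) := fun he => hux (hcastinj u x₀ he)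
    have hfac : ((((u : ℕ) : ZMod d)) - (((x₀ : ℕ) : ZMod d)))
        * ((((j₁ : ℤ) - (j₂ : ℤ) : ℤ) : ZMod d) * (((u : ℕ) : ZMod d) + ((x₀ : ℕ) : ZMod d))
          + ((μ : ℕ) : ZMod d)) = 0 := by
      push_cast
      linear_combination hc
    rcases mul_eq_zero.mp hfac with h | h
    · exact absurd (sub_eq_zero.mp h) hune
    · exact h
  have hmne : (((j₁ : ℤ) - (j₂ : ℤ) : ℤ) : ZMod d) ≠ 0 := by
    intro hzero
    have hdvd := (ZMod.intCast_zmod_eq_zero_iff_dvd _ d).mp hzero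
    have hpos : (0 : ℤ) < (j₁ : ℤ) - (j₂ : ℤ) := by
      have : j₂ < j₁ := hlt
      omega
    have := Int.le_of_dvd hpos hdvd
    omega
  have hyz : ((y : ℕ) : ZMod d) = ((z : ℕ) : ZMod d) := by
    have h1 := key y hyS hyx₀
    have h2 := key z hzS hzx₀
    have h3 : (((j₁ : ℤ) - (j₂ : ℤ) : ℤ) : ZMod d) * (((y : ℕ) : ZMod d) - ((z : ℕ) : ZMod d)) = 0 := by
      linear_combination h1 - h2
    rcases mul_eq_zero.mp h3 with h | h
    · exact absurd h hmne
    · exact sub_eq_zero.mp h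
  exact hzy (hcastinj z y (hyz.symm ▸ rfl))
end

section
/- If ψ ∈ ℂ⁵ is a nonzero vector with supp(ψ) = 3 and supp(H_j†ψ) = 3 for some j ∈ {1,...,5}, then supp(H_{j'}†ψ) = 5 for every j' ∈ {0,...,5} with j' ≠ 0, j. -/
open Complex Real Matrix

noncomputable def ww : ℂ := Complex.exp (2 * Real.pi * Complex.I / 5)
lemma hprim : IsPrimitiveRoot ww 5 := Complex.isPrimitiveRoot_exp 5 (by norm_num)
lemma ww_ne : ww ≠ 0 := Complex.exp_ne_zero _
lemma ww_pow_mod (i : ℕ) : ww ^ i = ww ^ (i % 5) := by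
  conv_lhs => rw [← Nat.mod_add_div i 5]
  rw [pow_add, pow_mul, hprim.pow_eq_one, one_pow, mul_one]
noncomputable def ωz (t : ZMod 5) : ℂ := ww ^ t.val
lemma ωz_ne (t : ZMod 5) : ωz t ≠ 0 := pow_ne_zero _ ww_ne
lemma ωz_add (s t : ZMod 5) : ωz (s + t) = ωz s * ωz t := by
  unfold ωz
  rw [← pow_add, ZMod.val_add, ← ww_pow_mod]
lemma exp_int (z : ℤ) : Complex.exp (2 * Real.pi * Complex.I * z / 5) = ωz (z : ZMod 5) := by
  have h1 : (2 * Real.pi * Complex.I * z / 5 : ℂ) = z * (2 * Real.pi * Complex.I / 5) := by ring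
  rw [h1, Complex.exp_int_mul]
  show ww ^ z = _
  have hv : (((z : ZMod 5).val : ℤ)) = z % 5 := ZMod.val_intCast z
  have h2 : ww ^ z = ww ^ (z % 5 + 5 * (z / 5)) := by rw [Int.emod_add_mul_ediv]
  have h3 : ww ^ (5:ℤ) = 1 := by
    rw [show ((5:ℤ)) = ((5:ℕ):ℤ) from rfl, zpow_natCast, hprim.pow_eq_one]
  rw [h2, zpow_add₀ ww_ne, _root_.zpow_mul, h3, _root_.one_zpow, mul_one, ← hv, zpow_natCast]
  rfl
lemma sum_roots : ωz 0 + ωz 1 + ωz 2 + ωz 3 + ωz 4 = 0 := by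
  have h := hprim.geom_sum_eq_zero (by norm_num)
  simp [Finset.sum_range_succ] at h
  have e0 : ωz 0 = 1 := by unfold ωz; norm_num [show (0 : ZMod 5).val = 0 from rfl]
  have e1 : ωz 1 = ww := by unfold ωz; norm_num [show (1 : ZMod 5).val = 1 from rfl]
  have e2 : ωz 2 = ww^2 := by unfold ωz; norm_num [show (2 : ZMod 5).val = 2 from rfl]
  have e3 : ωz 3 = ww^3 := by unfold ωz; norm_num [show (3 : ZMod 5).val = 3 from rfl]
  have e4 : ωz 4 = ww^4 := by unfold ωz; norm_num [show (4 : ZMod 5).val = 4 from rfl]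
  rw [e0,e1,e2,e3,e4]; linear_combination h

def cntN (p1 p2 p3 m1 m2 m3 t : ℕ) : ℤ :=
  (if p1 = t then 1 else 0) + (if p2 = t then 1 else 0) + (if p3 = t then 1 else 0)
  - (if m1 = t then 1 else 0) - (if m2 = t then 1 else 0) - (if m3 = t then 1 else 0)

def cnt (p1 p2 p3 m1 m2 m3 t : ZMod 5) : ℤ :=
  (if p1 = t then 1 else 0) + (if p2 = t then 1 else 0) + (if p3 = t then 1 else 0)
  - (if m1 = t then 1 else 0) - (if m2 = t then 1 else 0) - (if m3 = t then 1 else 0)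

lemma cnt_cast (p1 p2 p3 m1 m2 m3 t : ℕ) (h1 : p1 < 5) (h2 : p2 < 5) (h3 : p3 < 5)
    (h4 : m1 < 5) (h5 : m2 < 5) (h6 : m3 < 5) (ht : t < 5) :
    cnt (p1 : ZMod 5) p2 p3 m1 m2 m3 (t : ZMod 5) = cntN p1 p2 p3 m1 m2 m3 t := by
  unfold cnt cntN
  simp only [ZMod.natCast_eq_natCast_iff', Nat.mod_eq_of_lt, h1, h2, h3, h4, h5, h6, ht]

lemma cnt_const (c : ZMod 5 → ℤ) (h : ∑ t : ZMod 5, (c t : ℂ) * ωz t = 0) : ∀ t, c t = c 0 := by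
  have huniv : (Finset.univ : Finset (ZMod 5)) = {0, 1, 2, 3, 4} := by decide
  rw [huniv] at h
  rw [Finset.sum_insert (by decide), Finset.sum_insert (by decide), Finset.sum_insert (by decide),
    Finset.sum_insert (by decide), Finset.sum_singleton] at h
  -- h should now be explicit sum
  set a0 : ℚ := ((c 0 - c 4 : ℤ) : ℚ) with ha0
  set a1 : ℚ := ((c 1 - c 4 : ℤ) : ℚ) with ha1
  set a2 : ℚ := ((c 2 - c 4 : ℤ) : ℚ) with ha2
  set a3 : ℚ := ((c 3 - c 4 : ℤ) : ℚ) with ha3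
  set q : Polynomial ℚ := Polynomial.C a0 + Polynomial.C a1 * Polynomial.X
    + Polynomial.C a2 * Polynomial.X ^ 2 + Polynomial.C a3 * Polynomial.X ^ 3 with hqdef
  have e0 : ωz 0 = 1 := by unfold ωz; norm_num [show (0 : ZMod 5).val = 0 from rfl]
  have e1 : ωz 1 = ww := by unfold ωz; norm_num [show (1 : ZMod 5).val = 1 from rfl]
  have e2 : ωz 2 = ww^2 := by unfold ωz; norm_num [show (2 : ZMod 5).val = 2 from rfl]
  have e3 : ωz 3 = ww^3 := by unfold ωz; norm_num [show (3 : ZMod 5).val = 3 from rfl]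
  have e4 : ωz 4 = ww^4 := by unfold ωz; norm_num [show (4 : ZMod 5).val = 4 from rfl]
  have hsr := sum_roots
  rw [e0, e1, e2, e3, e4] at h hsr
  have hq : Polynomial.aeval ww q = 0 := by
    simp only [hqdef, _root_.map_add, _root_.map_mul, Polynomial.aeval_C, Polynomial.aeval_X, _root_.map_pow,
      ha0, ha1, ha2, ha3]
    simp only [Algebra.algebraMap_self, eq_ratCast]
    push_cast [Rat.cast_intCast]
    linear_combination h - (c 4 : ℂ) * hsr
  have hdvd : minpoly ℚ ww ∣ q := minpoly.dvd ℚ ww hq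
  have hq0 : q = 0 := by
    by_contra hne
    have hle := Polynomial.natDegree_le_of_dvd hdvd hne
    rw [← Polynomial.cyclotomic_eq_minpoly_rat hprim (by norm_num),
      Polynomial.natDegree_cyclotomic] at hle
    have h4' : q.natDegree ≤ 3 := by
      rw [hqdef]; compute_degree
    rw [show Nat.totient 5 = 4 from by decide] at hle
    omega
  have hco : ∀ i : ℕ, q.coeff i = 0 := by rw [hq0]; simp
  have c0' := hco 0
  have c1' := hco 1
  have c2' := hco 2
  have c3' := hco 3
  simp [hqdef, Polynomial.coeff_add, Polynomial.coeff_C_mul, Polynomial.coeff_X_pow,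
    Polynomial.coeff_C, Polynomial.coeff_X] at c0' c1' c2' c3'
  have g0 : c 0 - c 4 = 0 := by rw [ha0] at c0'; exact_mod_cast c0'
  have g1 : c 1 - c 4 = 0 := by rw [ha1] at c1'; exact_mod_cast c1'
  have g2 : c 2 - c 4 = 0 := by rw [ha2] at c2'; exact_mod_cast c2'
  have g3 : c 3 - c 4 = 0 := by rw [ha3] at c3'; exact_mod_cast c3'
  intro t
  have h5 : ∀ t : ZMod 5, t = 0 ∨ t = 1 ∨ t = 2 ∨ t = 3 ∨ t = 4 := by decide
  rcases h5 t with rfl|rfl|rfl|rfl|rfl <;> omega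


def chk : Bool :=
  (List.range 5).all fun x1 =>
  (List.range 5).all fun x2 =>
  (List.range 5).all fun x3 =>
  (x1 == x2 || x1 == x3 || x2 == x3) ||
  ((List.range 5).all fun k1 =>
   (List.range 5).all fun k2 =>
   (k1 == k2) ||
   ((List.range 4).all fun a' =>
    (List.range 5).all fun k =>
      (List.range 5).any fun t =>
        decide (cntN ((k1*x1 + k2*x2 + (k*x3 + (a'+1)*x3*x3)) % 5)
          ((k1*x2 + k2*x3 + (k*x1 + (a'+1)*x1*x1)) % 5)
          ((k1*x3 + k2*x1 + (k*x2 + (a'+1)*x2*x2)) % 5)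
          ((k1*x1 + k2*x3 + (k*x2 + (a'+1)*x2*x2)) % 5)
          ((k1*x2 + k2*x1 + (k*x3 + (a'+1)*x3*x3)) % 5)
          ((k1*x3 + k2*x2 + (k*x1 + (a'+1)*x1*x1)) % 5) t
        ≠ cntN ((k1*x1 + k2*x2 + (k*x3 + (a'+1)*x3*x3)) % 5)
          ((k1*x2 + k2*x3 + (k*x1 + (a'+1)*x1*x1)) % 5)
          ((k1*x3 + k2*x1 + (k*x2 + (a'+1)*x2*x2)) % 5)
          ((k1*x1 + k2*x3 + (k*x2 + (a'+1)*x2*x2)) % 5)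
          ((k1*x2 + k2*x1 + (k*x3 + (a'+1)*x3*x3)) % 5)
          ((k1*x3 + k2*x2 + (k*x1 + (a'+1)*x1*x1)) % 5) 0)))

set_option maxRecDepth 100000 in
set_option maxHeartbeats 8000000 in
lemma chk_true : chk = true := by decide

lemma core (X1 X2 X3 K1 K2 a K : ZMod 5)
    (h12 : X1 ≠ X2) (h13 : X1 ≠ X3) (h23 : X2 ≠ X3) (hk : K1 ≠ K2) (ha : a ≠ 0) :
    ∃ t : ZMod 5,
      cnt (K1*X1 + K2*X2 + (K*X3 + a*X3^2)) (K1*X2 + K2*X3 + (K*X1 + a*X1^2))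
        (K1*X3 + K2*X1 + (K*X2 + a*X2^2)) (K1*X1 + K2*X3 + (K*X2 + a*X2^2))
        (K1*X2 + K2*X1 + (K*X3 + a*X3^2)) (K1*X3 + K2*X2 + (K*X1 + a*X1^2)) t
      ≠ cnt (K1*X1 + K2*X2 + (K*X3 + a*X3^2)) (K1*X2 + K2*X3 + (K*X1 + a*X1^2))
        (K1*X3 + K2*X1 + (K*X2 + a*X2^2)) (K1*X1 + K2*X3 + (K*X2 + a*X2^2))
        (K1*X2 + K2*X1 + (K*X3 + a*X3^2)) (K1*X3 + K2*X2 + (K*X1 + a*X1^2)) 0 := by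
  have vinj : Function.Injective (ZMod.val : ZMod 5 → ℕ) :=
    Function.LeftInverse.injective ZMod.natCast_rightInverse
  have vcast : ∀ Y : ZMod 5, ((Y.val : ℕ) : ZMod 5) = Y := fun Y => ZMod.natCast_rightInverse Y
  have hm : ∀ Y : ZMod 5, Y.val ∈ List.range 5 := fun Y => List.mem_range.mpr (ZMod.val_lt Y)
  have H1 := List.all_eq_true.mp chk_true X1.val (hm X1)
  have H2 := List.all_eq_true.mp H1 X2.val (hm X2)
  have H3 := List.all_eq_true.mp H2 X3.val (hm X3)
  rw [Bool.or_eq_true] at H3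
  rcases H3 with hg | H4
  · exfalso
    simp only [Bool.or_eq_true, beq_iff_eq] at hg
    rcases hg with (h | h) | h
    exacts [h12 (vinj h), h13 (vinj h), h23 (vinj h)]
  have H5 := List.all_eq_true.mp H4 K1.val (hm K1)
  have H6 := List.all_eq_true.mp H5 K2.val (hm K2)
  rw [Bool.or_eq_true] at H6
  rcases H6 with hg | H7
  · exact absurd (vinj (by simpa using hg)) hk
  have hav : a.val ≠ 0 := fun h => ha ((ZMod.val_eq_zero a).mp h)
  have hma : a.val - 1 ∈ List.range 4 := by
    have := ZMod.val_lt a; rw [List.mem_range]; omega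
  have H8 := List.all_eq_true.mp H7 (a.val - 1) hma
  have H9 := List.all_eq_true.mp H8 K.val (hm K)
  have hone : a.val - 1 + 1 = a.val := by omega
  rw [hone] at H9
  obtain ⟨tn, htmem, htb⟩ := List.any_eq_true.mp H9
  have hnat := of_decide_eq_true htb
  have htlt : tn < 5 := List.mem_range.mp htmem
  refine ⟨(tn : ZMod 5), ?_⟩
  have hlt : ∀ m : ℕ, m % 5 < 5 := fun m => Nat.mod_lt _ (by norm_num)
  have e1 : (((K1.val*X1.val + K2.val*X2.val + (K.val*X3.val + a.val*X3.val*X3.val)) % 5 : ℕ) : ZMod 5)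
      = K1*X1 + K2*X2 + (K*X3 + a*X3^2) := by rw [ZMod.natCast_mod]; push_cast [vcast]; ring
  have e2 : (((K1.val*X2.val + K2.val*X3.val + (K.val*X1.val + a.val*X1.val*X1.val)) % 5 : ℕ) : ZMod 5)
      = K1*X2 + K2*X3 + (K*X1 + a*X1^2) := by rw [ZMod.natCast_mod]; push_cast [vcast]; ring
  have e3 : (((K1.val*X3.val + K2.val*X1.val + (K.val*X2.val + a.val*X2.val*X2.val)) % 5 : ℕ) : ZMod 5)
      = K1*X3 + K2*X1 + (K*X2 + a*X2^2) := by rw [ZMod.natCast_mod]; push_cast [vcast]; ring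
  have e4 : (((K1.val*X1.val + K2.val*X3.val + (K.val*X2.val + a.val*X2.val*X2.val)) % 5 : ℕ) : ZMod 5)
      = K1*X1 + K2*X3 + (K*X2 + a*X2^2) := by rw [ZMod.natCast_mod]; push_cast [vcast]; ring
  have e5 : (((K1.val*X2.val + K2.val*X1.val + (K.val*X3.val + a.val*X3.val*X3.val)) % 5 : ℕ) : ZMod 5)
      = K1*X2 + K2*X1 + (K*X3 + a*X3^2) := by rw [ZMod.natCast_mod]; push_cast [vcast]; ring
  have e6 : (((K1.val*X3.val + K2.val*X2.val + (K.val*X1.val + a.val*X1.val*X1.val)) % 5 : ℕ) : ZMod 5)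
      = K1*X3 + K2*X2 + (K*X1 + a*X1^2) := by rw [ZMod.natCast_mod]; push_cast [vcast]; ring
  rw [← e1, ← e2, ← e3, ← e4, ← e5, ← e6, show (0 : ZMod 5) = ((0:ℕ) : ZMod 5) by norm_num,
    cnt_cast _ _ _ _ _ _ _ (hlt _) (hlt _) (hlt _) (hlt _) (hlt _) (hlt _) htlt,
    cnt_cast _ _ _ _ _ _ _ (hlt _) (hlt _) (hlt _) (hlt _) (hlt _) (hlt _) (by norm_num)]
  exact hnat

lemma indicator_sum (p : ZMod 5) :
    ∑ t : ZMod 5, (if p = t then (1:ℂ) else 0) * ωz t = ωz p := by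
  simp [ite_mul, Finset.sum_ite_eq]

lemma det_ne (X1 X2 X3 K1 K2 a K : ZMod 5)
    (h12 : X1 ≠ X2) (h13 : X1 ≠ X3) (h23 : X2 ≠ X3) (hk : K1 ≠ K2) (ha : a ≠ 0) :
    ωz (K1*X1) * ωz (K2*X2) * ωz (K*X3 + a*X3^2)
    + ωz (K1*X2) * ωz (K2*X3) * ωz (K*X1 + a*X1^2)
    + ωz (K1*X3) * ωz (K2*X1) * ωz (K*X2 + a*X2^2)
    - ωz (K1*X1) * ωz (K2*X3) * ωz (K*X2 + a*X2^2)
    - ωz (K1*X2) * ωz (K2*X1) * ωz (K*X3 + a*X3^2)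
    - ωz (K1*X3) * ωz (K2*X2) * ωz (K*X1 + a*X1^2) ≠ 0 := by
  intro hD
  set p1 := K1*X1 + K2*X2 + (K*X3 + a*X3^2) with hp1
  set p2 := K1*X2 + K2*X3 + (K*X1 + a*X1^2) with hp2
  set p3 := K1*X3 + K2*X1 + (K*X2 + a*X2^2) with hp3
  set m1 := K1*X1 + K2*X3 + (K*X2 + a*X2^2) with hm1
  set m2 := K1*X2 + K2*X1 + (K*X3 + a*X3^2) with hm2
  set m3 := K1*X3 + K2*X2 + (K*X1 + a*X1^2) with hm3
  have h6 : ωz p1 + ωz p2 + ωz p3 - ωz m1 - ωz m2 - ωz m3 = 0 := by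
    rw [hp1, hp2, hp3, hm1, hm2, hm3]
    simp only [ωz_add]
    simp only [ωz_add] at hD
    linear_combination hD
  have hcast : ∀ (P : Prop) [Decidable P], (((if P then (1:ℤ) else 0) : ℤ) : ℂ) = if P then 1 else 0 := by
    intro P _; split <;> simp
  have hsum : ∑ t : ZMod 5, ((cnt p1 p2 p3 m1 m2 m3 t : ℤ) : ℂ) * ωz t = 0 := by
    have : ∀ t : ZMod 5, ((cnt p1 p2 p3 m1 m2 m3 t : ℤ) : ℂ) * ωz t
        = (if p1 = t then (1:ℂ) else 0) * ωz t + (if p2 = t then (1:ℂ) else 0) * ωz t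
        + (if p3 = t then (1:ℂ) else 0) * ωz t - (if m1 = t then (1:ℂ) else 0) * ωz t
        - (if m2 = t then (1:ℂ) else 0) * ωz t - (if m3 = t then (1:ℂ) else 0) * ωz t := by
      intro t
      simp only [cnt, Int.cast_add, Int.cast_sub, hcast]
      ring
    rw [Finset.sum_congr rfl (fun t _ => this t)]
    simp only [Finset.sum_sub_distrib, Finset.sum_add_distrib, indicator_sum]
    linear_combination h6
  have hcst := cnt_const (cnt p1 p2 p3 m1 m2 m3) hsum
  obtain ⟨t, ht⟩ := core X1 X2 X3 K1 K2 a K h12 h13 h23 hk ha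
  exact ht (by rw [← hp1, ← hp2, ← hp3, ← hm1, ← hm2, ← hm3] at *; rw [hcst t])

lemma entry_eq (jj : ℕ) (ψ : Fin 5 → ℂ) (kk : Fin 5) :
    ((stdH 5 jj)ᴴ.mulVec ψ) kk = (1 / Real.sqrt 5 : ℂ) *
      ∑ x : Fin 5, ωz ((kk.val : ZMod 5) * (x.val : ZMod 5)
        - ((jj : ZMod 5) - 1) * (x.val : ZMod 5)^2) * ψ x := by
  unfold stdH
  simp only [Matrix.mulVec, Matrix.conjTranspose_apply, dotProduct]
  rw [Finset.mul_sum]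
  apply Finset.sum_congr rfl
  intro x _
  have hz : ∀ z : ℤ, (starRingEnd ℂ) (Complex.exp (2 * Real.pi * Complex.I * ((z : ℂ) / ((5:ℕ) : ℂ))))
      = ωz (((-z : ℤ) : ZMod 5)) := by
    intro z
    rw [← Complex.exp_conj]
    have harg : (starRingEnd ℂ) (2 * Real.pi * Complex.I * ((z : ℂ) / ((5:ℕ) : ℂ)))
        = 2 * Real.pi * Complex.I * (((-z : ℤ) : ℂ)) / 5 := by
      simp [_root_.map_mul, map_div₀, Complex.conj_I, Complex.conj_ofReal, map_ofNat]
      push_cast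
      ring
    rw [harg, exp_int]
  have hst : ∀ z : ℂ, star z = (starRingEnd ℂ) z := fun z => rfl
  change star ((1 / Real.sqrt ((5:ℕ):ℝ) : ℂ) * Complex.exp (2 * Real.pi * Complex.I *
    (((((jj : ℤ) - 1) * (x : ℤ) ^ 2 - (kk : ℤ) * (x : ℤ) : ℤ) : ℂ) / ((5:ℕ) : ℂ)))) * ψ x = _
  rw [hst, _root_.map_mul, hz]
  have hc : (starRingEnd ℂ) (1 / (Real.sqrt 5 : ℂ)) = (1 / Real.sqrt 5 : ℂ) := by
    simp [map_div₀, Complex.conj_ofReal]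
  push_cast
  rw [hc]
  have hexp : (-(((jj : ZMod 5) - 1) * ((x.val : ℕ) : ZMod 5)^2 - ((kk.val : ℕ) : ZMod 5) * ((x.val : ℕ) : ZMod 5)))
      = ((kk.val : ℕ) : ZMod 5) * ((x.val : ℕ) : ZMod 5) - ((jj : ZMod 5) - 1) * ((x.val : ℕ) : ZMod 5)^2 := by
    ring
  rw [hexp]
  ring

/-- If `ψ ∈ ℂ⁵` is nonzero with support 3 in the computational basis and support 3 in
some standard MU basis `j ∈ {1,…,5}`, then `ψ` has full support 5 in each of the
remaining four standard MU bases. -/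
theorem five_dim_full_support (j : ℕ) (hj1 : 1 ≤ j) (hj5 : j ≤ 5)
    (ψ : Fin 5 → ℂ) (hψ : ψ ≠ 0)
    (h0 : supp ψ = 3) (hj : supp ((stdH 5 j)ᴴ.mulVec ψ) = 3) :
    ∀ j' : ℕ, j' ≤ 5 → j' ≠ 0 → j' ≠ j → supp ((stdB 5 j')ᴴ.mulVec ψ) = 5 := by
  intro j' hj'5 hj'0 hj'j
  have hj'1 : 1 ≤ j' := Nat.one_le_iff_ne_zero.mpr hj'0
  have hBH : stdB 5 j' = stdH 5 j' := by rw [stdB, if_neg hj'0]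
  rw [hBH]
  suffices hall : ∀ k : Fin 5, ((stdH 5 j')ᴴ.mulVec ψ) k ≠ 0 by
    unfold supp
    rw [Finset.filter_true_of_mem (fun k _ => hall k), Finset.card_univ, Fintype.card_fin]
  intro k hk0
  unfold supp at h0 hj
  obtain ⟨x1, x2, x3, h12, h13, h23, hS⟩ := Finset.card_eq_three.mp h0
  have hx1 : ψ x1 ≠ 0 := by
    have : x1 ∈ Finset.univ.filter (fun v => ψ v ≠ 0) := by rw [hS]; simp
    exact (Finset.mem_filter.mp this).2
  have hoff : ∀ x : Fin 5, x ∉ ({x1, x2, x3} : Finset (Fin 5)) → ψ x = 0 := by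
    intro x hx
    by_contra hne
    exact hx (hS ▸ Finset.mem_filter.mpr ⟨Finset.mem_univ x, hne⟩)
  have hcompl : ((Finset.univ.filter (fun v => ((stdH 5 j)ᴴ.mulVec ψ) v ≠ 0))ᶜ : Finset (Fin 5)).card = 2 := by
    rw [Finset.card_compl, hj]
    simp
  obtain ⟨k1, k2, hk12, hZ⟩ := Finset.card_eq_two.mp hcompl
  have hz : ∀ v ∈ ({k1, k2} : Finset (Fin 5)), ((stdH 5 j)ᴴ.mulVec ψ) v = 0 := by
    intro v hv
    rw [← hZ] at hv
    have := Finset.mem_compl.mp hv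
    simp only [Finset.mem_filter, Finset.mem_univ, true_and, not_not] at this
    exact this
  have hz1 : ((stdH 5 j)ᴴ.mulVec ψ) k1 = 0 := hz k1 (by simp)
  have hz2 : ((stdH 5 j)ᴴ.mulVec ψ) k2 = 0 := hz k2 (by simp)
  have hs5 : (1 / Real.sqrt 5 : ℂ) ≠ 0 := by
    simp only [ne_eq, div_eq_zero_iff, one_ne_zero, false_or, Complex.ofReal_eq_zero]
    exact Real.sqrt_ne_zero'.mpr (by norm_num)
  have sum_of : ∀ (jj : ℕ) (kk : Fin 5), ((stdH 5 jj)ᴴ.mulVec ψ) kk = 0 →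
      ωz ((kk.val : ZMod 5) * (x1.val : ZMod 5) - ((jj : ZMod 5) - 1) * (x1.val : ZMod 5)^2) * ψ x1
      + ωz ((kk.val : ZMod 5) * (x2.val : ZMod 5) - ((jj : ZMod 5) - 1) * (x2.val : ZMod 5)^2) * ψ x2
      + ωz ((kk.val : ZMod 5) * (x3.val : ZMod 5) - ((jj : ZMod 5) - 1) * (x3.val : ZMod 5)^2) * ψ x3 = 0 := by
    intro jj kk h
    rw [entry_eq] at h
    have h' := (mul_eq_zero.mp h).resolve_left hs5
    rw [← Finset.sum_subset (Finset.subset_univ ({x1, x2, x3} : Finset (Fin 5)))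
      (fun x _ hx => by rw [hoff x hx, mul_zero])] at h'
    rw [Finset.sum_insert (by simp [Finset.mem_insert, Finset.mem_singleton, h12, h13]),
      Finset.sum_insert (by simp [Finset.mem_singleton, h23]), Finset.sum_singleton] at h'
    linear_combination h'
  have E1 := sum_of j k1 hz1
  have E2 := sum_of j k2 hz2
  have E3 := sum_of j' k hk0
  have split12 : ∀ (KK XX : ZMod 5), ωz (KK * XX - ((j : ZMod 5) - 1) * XX^2)
      = ωz (KK * XX) * ωz (-(((j : ZMod 5) - 1) * XX^2)) := by
    intro KK XX; rw [← ωz_add]; congr 1; ring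
  have split3 : ∀ XX : ZMod 5, ωz ((k.val : ZMod 5) * XX - ((j' : ZMod 5) - 1) * XX^2)
      = ωz ((k.val : ZMod 5) * XX + ((j : ZMod 5) - (j' : ZMod 5)) * XX^2)
        * ωz (-(((j : ZMod 5) - 1) * XX^2)) := by
    intro XX; rw [← ωz_add]; congr 1; ring
  simp only [split12] at E1 E2
  simp only [split3] at E3
  have hvlt : ∀ y : Fin 5, ((y.val : ZMod 5)).val = y.val := fun y => ZMod.val_cast_of_lt y.isLt
  have hX12 : (x1.val : ZMod 5) ≠ (x2.val : ZMod 5) := by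
    intro h; apply h12; apply Fin.ext; rw [← hvlt x1, ← hvlt x2, h]
  have hX13 : (x1.val : ZMod 5) ≠ (x3.val : ZMod 5) := by
    intro h; apply h13; apply Fin.ext; rw [← hvlt x1, ← hvlt x3, h]
  have hX23 : (x2.val : ZMod 5) ≠ (x3.val : ZMod 5) := by
    intro h; apply h23; apply Fin.ext; rw [← hvlt x2, ← hvlt x3, h]
  have hK12 : (k1.val : ZMod 5) ≠ (k2.val : ZMod 5) := by
    intro h; apply hk12; apply Fin.ext; rw [← hvlt k1, ← hvlt k2, h]
  have haa : ((j : ZMod 5) - (j' : ZMod 5)) ≠ 0 := by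
    rw [sub_ne_zero]
    interval_cases j <;> interval_cases j' <;> first | (exact absurd rfl hj'j) | decide
  have hD := det_ne (x1.val : ZMod 5) (x2.val : ZMod 5) (x3.val : ZMod 5)
    (k1.val : ZMod 5) (k2.val : ZMod 5) ((j : ZMod 5) - (j' : ZMod 5)) (k.val : ZMod 5)
    hX12 hX13 hX23 hK12 haa
  have hv1 : (ωz ((k1.val : ZMod 5) * (x1.val : ZMod 5)) * ωz ((k2.val : ZMod 5) * (x2.val : ZMod 5)) * ωz ((k.val : ZMod 5) * (x3.val : ZMod 5) + ((j : ZMod 5) - (j' : ZMod 5)) * (x3.val : ZMod 5)^2)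
      + ωz ((k1.val : ZMod 5) * (x2.val : ZMod 5)) * ωz ((k2.val : ZMod 5) * (x3.val : ZMod 5)) * ωz ((k.val : ZMod 5) * (x1.val : ZMod 5) + ((j : ZMod 5) - (j' : ZMod 5)) * (x1.val : ZMod 5)^2)
      + ωz ((k1.val : ZMod 5) * (x3.val : ZMod 5)) * ωz ((k2.val : ZMod 5) * (x1.val : ZMod 5)) * ωz ((k.val : ZMod 5) * (x2.val : ZMod 5) + ((j : ZMod 5) - (j' : ZMod 5)) * (x2.val : ZMod 5)^2)
      - ωz ((k1.val : ZMod 5) * (x1.val : ZMod 5)) * ωz ((k2.val : ZMod 5) * (x3.val : ZMod 5)) * ωz ((k.val : ZMod 5) * (x2.val : ZMod 5) + ((j : ZMod 5) - (j' : ZMod 5)) * (x2.val : ZMod 5)^2)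
      - ωz ((k1.val : ZMod 5) * (x2.val : ZMod 5)) * ωz ((k2.val : ZMod 5) * (x1.val : ZMod 5)) * ωz ((k.val : ZMod 5) * (x3.val : ZMod 5) + ((j : ZMod 5) - (j' : ZMod 5)) * (x3.val : ZMod 5)^2)
      - ωz ((k1.val : ZMod 5) * (x3.val : ZMod 5)) * ωz ((k2.val : ZMod 5) * (x2.val : ZMod 5)) * ωz ((k.val : ZMod 5) * (x1.val : ZMod 5) + ((j : ZMod 5) - (j' : ZMod 5)) * (x1.val : ZMod 5)^2))
      * (ωz (-(((j : ZMod 5) - 1) * (x1.val : ZMod 5)^2)) * ψ x1) = 0 := by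
    linear_combination
      (ωz ((k2.val : ZMod 5) * (x2.val : ZMod 5)) * ωz ((k.val : ZMod 5) * (x3.val : ZMod 5) + ((j : ZMod 5) - (j' : ZMod 5)) * (x3.val : ZMod 5)^2)
        - ωz ((k2.val : ZMod 5) * (x3.val : ZMod 5)) * ωz ((k.val : ZMod 5) * (x2.val : ZMod 5) + ((j : ZMod 5) - (j' : ZMod 5)) * (x2.val : ZMod 5)^2)) * E1
      - (ωz ((k1.val : ZMod 5) * (x2.val : ZMod 5)) * ωz ((k.val : ZMod 5) * (x3.val : ZMod 5) + ((j : ZMod 5) - (j' : ZMod 5)) * (x3.val : ZMod 5)^2)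
        - ωz ((k1.val : ZMod 5) * (x3.val : ZMod 5)) * ωz ((k.val : ZMod 5) * (x2.val : ZMod 5) + ((j : ZMod 5) - (j' : ZMod 5)) * (x2.val : ZMod 5)^2)) * E2
      + (ωz ((k1.val : ZMod 5) * (x2.val : ZMod 5)) * ωz ((k2.val : ZMod 5) * (x3.val : ZMod 5))
        - ωz ((k1.val : ZMod 5) * (x3.val : ZMod 5)) * ωz ((k2.val : ZMod 5) * (x2.val : ZMod 5))) * E3
  rcases mul_eq_zero.mp hv1 with hbad | hgood
  · exact hD hbad
  rcases mul_eq_zero.mp hgood with hbad | hbad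
  · exact ωz_ne _ hbad
  · exact hx1 hbad
end
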